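/- arXiv:2205.12236 — 8 statements merged into one kernel-verified Lean document; each statement's English description precedes it below -/
import Mathlib

section
/- For every load i ∈ {1,…,n}, every ν ∈ Δ, and every η ∈ Δ^{n−1}, the statistic h_{i,ν,η}(L) := (1/L)·∑_{l=1}^{L} 1{δ̂_i(l)=ν and δ̂_{−i}(l)=η} − θ_i(ν)·(1/L)·∑_{l=1}^{L} 1{δ̂_{−i}(l)=η} converges to 0 almost surely as L → ∞. (In words: under truthful strategies, the joint empirical distribution of load i's reports and the other loads' reports asymptotically factorizes through θ_i.) -/
open MeasureTheory ProbabilityTheory Filter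
open scoped Classical

/-- SLLN for statistics of the true reports. -/
lemma slln_ind
    {Ω : Type*} [MeasurableSpace Ω] (μ : Measure Ω) [IsProbabilityMeasure μ]
    {Δ : Type*} [Fintype Δ] [Nonempty Δ] [DecidableEq Δ]
    [MeasurableSpace Δ] [MeasurableSingletonClass Δ]
    (n : ℕ) (θ : Fin n → Δ → ℝ) (hθ0 : ∀ i ν, 0 ≤ θ i ν)
    (δ : ℕ → Ω → Fin n → Δ)
    (hmeasδ : ∀ l, Measurable (δ l))
    (hdist : ∀ l, 1 ≤ l → ∀ v : Fin n → Δ,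
      μ {ω | δ l ω = v} = ENNReal.ofReal (∏ i, θ i (v i)))
    (hindep : iIndepFun δ μ)
    (g : (Fin n → Δ) → ℝ) :
    ∀ᵐ ω ∂μ, Tendsto
      (fun L : ℕ => (1 / (L : ℝ)) * ∑ l ∈ Finset.Icc 1 L, g (δ l ω))
      atTop (nhds (∑ v : Fin n → Δ, (∏ i, θ i (v i)) * g v)) := by
  have hmg : Measurable g := measurable_of_countable g
  set X : ℕ → Ω → ℝ := fun l => g ∘ δ (l + 1) with hX
  have hdecomp : ∀ m : ℕ, X m = fun ω => ∑ v : Fin n → Δ,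
      Set.indicator ((δ (m+1)) ⁻¹' {v}) (fun _ => g v) ω := by
    intro m
    funext ω
    have h1 : ∀ v : Fin n → Δ, Set.indicator ((δ (m+1)) ⁻¹' {v}) (fun _ => g v) ω
        = if δ (m+1) ω = v then g v else 0 := by
      intro v
      simp [Set.indicator_apply, Set.mem_preimage]
    simp only [h1]
    rw [Finset.sum_ite_eq Finset.univ (δ (m+1) ω) g]
    simp [X]
  have hint : Integrable (X 0) μ := by
    rw [hdecomp 0]
    exact integrable_finset_sum _ fun v _ =>
      (integrable_const (g v)).indicator ((hmeasδ 1) (measurableSet_singleton v))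
  have hpind : Pairwise (Function.onFun (IndepFun · · μ) X) := by
    intro k l hkl
    exact (hindep.indepFun (by omega : k + 1 ≠ l + 1)).comp hmg hmg
  have hid : ∀ l, IdentDistrib (X l) (X 0) μ μ := by
    intro l
    have hbase : IdentDistrib (δ (l+1)) (δ 1) μ μ := by
      refine ⟨(hmeasδ _).aemeasurable, (hmeasδ _).aemeasurable, ?_⟩
      apply MeasureTheory.Measure.ext_of_singleton
      intro v
      rw [Measure.map_apply (hmeasδ _) (measurableSet_singleton v),
          Measure.map_apply (hmeasδ _) (measurableSet_singleton v)]
      have h2 : ∀ m : ℕ, 1 ≤ m → μ ((δ m) ⁻¹' {v}) = ENNReal.ofReal (∏ i, θ i (v i)) := by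
        intro m hm
        exact hdist m hm v
      rw [h2 (l+1) (by omega), h2 1 le_rfl]
    exact hbase.comp hmg
  have hmean : μ[X 0] = ∑ v : Fin n → Δ, (∏ i, θ i (v i)) * g v := by
    rw [hdecomp 0,
      integral_finset_sum _ (fun v _ =>
        (integrable_const (g v)).indicator ((hmeasδ 1) (measurableSet_singleton v)))]
    refine Finset.sum_congr rfl fun v _ => ?_
    rw [integral_indicator_const (g v) ((hmeasδ 1) (measurableSet_singleton v))]
    have h3 : (δ 1) ⁻¹' {v} = {ω | δ 1 ω = v} := rfl
    rw [h3, measureReal_def, hdist 1 le_rfl v, smul_eq_mul,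
      ENNReal.toReal_ofReal (Finset.prod_nonneg fun i _ => hθ0 i (v i))]
  have hslln := strong_law_ae_real X hint hpind hid
  rw [hmean] at hslln
  filter_upwards [hslln] with ω hω
  have heq : ∀ L : ℕ, (∑ k ∈ Finset.range L, X k ω) / (L : ℝ)
      = (1 / (L : ℝ)) * ∑ l ∈ Finset.Icc 1 L, g (δ l ω) := by
    intro L
    rw [← Finset.Ico_add_one_right_eq_Icc, Finset.sum_Ico_eq_sum_range]
    simp only [Nat.add_sub_cancel]
    rw [div_eq_mul_inv, mul_comm, ← one_div]
    congr 1
    apply Finset.sum_congr rfl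
    intro k _
    simp [X, Nat.add_comm 1 k]
  exact Tendsto.congr heq hω

/-- With `n` loads whose type profiles `δ l : Fin n → Δ` are i.i.d. across days
with product distribution `θ_1 × ⋯ × θ_n`, and with reports `δhat l` equal to `δ l` outside a
random set `𝓛` of asymptotic density zero, for every load `i`, every `ν ∈ Δ` and every vector
`η` of the other loads' types, the statistic
`h_{i,ν,η}(L) = (1/L) ∑_{l=1}^L 1{δhat_i(l)=ν ∧ δhat_{−i}(l)=η}
  − θ_i(ν) · (1/L) ∑_{l=1}^L 1{δhat_{−i}(l)=η}`
converges to `0` almost surely as `L → ∞`. -/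
theorem stmt_1
    {Ω : Type*} [MeasurableSpace Ω] (μ : Measure Ω) [IsProbabilityMeasure μ]
    {Δ : Type*} [Fintype Δ] [Nonempty Δ] [DecidableEq Δ]
    [MeasurableSpace Δ] [MeasurableSingletonClass Δ]
    (n : ℕ) (hn : 1 ≤ n)
    (θ : Fin n → Δ → ℝ) (hθ0 : ∀ i ν, 0 ≤ θ i ν) (hθ1 : ∀ i, ∑ ν : Δ, θ i ν = 1)
    (δ δhat : ℕ → Ω → Fin n → Δ)
    (hmeasδ : ∀ l, Measurable (δ l)) (hmeasδhat : ∀ l, Measurable (δhat l))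
    (hdist : ∀ l, 1 ≤ l → ∀ v : Fin n → Δ,
      μ {ω | δ l ω = v} = ENNReal.ofReal (∏ i, θ i (v i)))
    (hindep : iIndepFun δ μ)
    (𝓛 : Ω → Set ℕ)
    (hagree : ∀ ω, ∀ l, l ∉ 𝓛 ω → δhat l ω = δ l ω)
    (hdensity : ∀ᵐ ω ∂μ, Tendsto
      (fun L : ℕ => (((Finset.Icc 1 L).filter (fun l => l ∈ 𝓛 ω)).card : ℝ) / L)
      atTop (nhds 0)) :
    ∀ (i : Fin n) (ν : Δ) (η : {j : Fin n // j ≠ i} → Δ),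
      ∀ᵐ ω ∂μ, Tendsto
        (fun L : ℕ =>
          ((1 / (L : ℝ)) * ∑ l ∈ Finset.Icc 1 L,
            (if δhat l ω i = ν ∧ (fun j : {j : Fin n // j ≠ i} => δhat l ω j.1) = η
              then (1 : ℝ) else 0))
          - θ i ν * ((1 / (L : ℝ)) * ∑ l ∈ Finset.Icc 1 L,
              (if (fun j : {j : Fin n // j ≠ i} => δhat l ω j.1) = η then (1 : ℝ) else 0)))
        atTop (nhds 0) := by
  intro i ν η
  set g1 : (Fin n → Δ) → ℝ := fun v =>
    if v i = ν ∧ (fun j : {j : Fin n // j ≠ i} => v j.1) = η then (1:ℝ) else 0 with hg1def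
  set g2 : (Fin n → Δ) → ℝ := fun v =>
    if (fun j : {j : Fin n // j ≠ i} => v j.1) = η then (1:ℝ) else 0 with hg2def
  set e : Δ → (Fin n → Δ) := fun x j => if h : j = i then x else η ⟨j, h⟩ with he
  have hei : ∀ x, e x i = x := fun x => by simp [e]
  have heη : ∀ x, (fun j : {j : Fin n // j ≠ i} => e x j.1) = η := by
    intro x; funext j; simp [e, j.2]
  set Q : ℝ := ∏ j ∈ Finset.univ.erase i, θ j (e ν j) with hQdef
  have hQ : ∀ x, ∏ j, θ j (e x j) = θ i x * Q := by
    intro x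
    rw [← Finset.mul_prod_erase Finset.univ _ (Finset.mem_univ i), hei]
    congr 1
    refine Finset.prod_congr rfl fun j hj => ?_
    have hj' : j ≠ i := Finset.ne_of_mem_erase hj
    simp [e, hj']
  -- computation of the two limits
  have hmem1 : ∀ v : Fin n → Δ,
      (v i = ν ∧ (fun j : {j : Fin n // j ≠ i} => v j.1) = η) ↔ v = e ν := by
    intro v
    constructor
    · rintro ⟨h1, h2⟩
      funext j
      by_cases h : j = i
      · subst h; simp [e, h1]
      · have := congrFun h2 ⟨j, h⟩
        simpa [e, h] using this
    · rintro rfl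
      exact ⟨hei ν, heη ν⟩
  have hc1 : ∑ v : Fin n → Δ, (∏ j, θ j (v j)) * g1 v = θ i ν * Q := by
    have h4 : ∀ v : Fin n → Δ, (∏ j, θ j (v j)) * g1 v
        = if v = e ν then ∏ j, θ j (v j) else 0 := by
      intro v
      rw [hg1def]
      simp only [mul_ite, mul_one, mul_zero]
      exact if_congr (hmem1 v) rfl rfl
    simp only [h4]
    rw [Finset.sum_ite_eq' Finset.univ (e ν) (fun v => ∏ j, θ j (v j))]
    simp [hQ ν]
  have hc2 : ∑ v : Fin n → Δ, (∏ j, θ j (v j)) * g2 v = Q := by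
    have h4 : ∀ v : Fin n → Δ, (∏ j, θ j (v j)) * g2 v
        = if (fun j : {j : Fin n // j ≠ i} => v j.1) = η then ∏ j, θ j (v j) else 0 := by
      intro v
      rw [hg2def]
      simp only [mul_ite, mul_one, mul_zero]
    simp only [h4]
    rw [Finset.sum_ite, Finset.sum_const_zero, add_zero]
    have hinv2 : ∀ v ∈ Finset.univ.filter
        (fun v : Fin n → Δ => (fun j : {j : Fin n // j ≠ i} => v j.1) = η), e (v i) = v := by
      intro v hv
      rw [Finset.mem_filter] at hv
      have hv' := hv.2
      funext j
      by_cases h : j = i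
      · subst h; simp [e]
      · have := congrFun hv' ⟨j, h⟩
        simpa [e, h] using this.symm
    have hbij : ∑ v ∈ Finset.univ.filter
          (fun v : Fin n → Δ => (fun j : {j : Fin n // j ≠ i} => v j.1) = η),
          ∏ j, θ j (v j)
        = ∑ x : Δ, ∏ j, θ j (e x j) := by
      refine Finset.sum_nbij' (fun v => v i) e (fun v _ => Finset.mem_univ _)
        (fun x _ => ?_) hinv2 (fun x _ => hei x) (fun v hv => ?_)
      · rw [Finset.mem_filter]
        exact ⟨Finset.mem_univ _, heη x⟩
      · rw [hinv2 v hv]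
    rw [hbij]
    simp_rw [hQ]
    rw [← Finset.sum_mul, hθ1 i, one_mul]
  have hA := slln_ind μ n θ hθ0 δ hmeasδ hdist hindep g1
  have hB := slln_ind μ n θ hθ0 δ hmeasδ hdist hindep g2
  rw [hc1] at hA
  rw [hc2] at hB
  filter_upwards [hA, hB, hdensity] with ω hAω hBω hdω
  have key : ∀ (g : (Fin n → Δ) → ℝ), (∀ v, g v = 0 ∨ g v = 1) → ∀ c : ℝ,
      Tendsto (fun L : ℕ => (1/(L:ℝ)) * ∑ l ∈ Finset.Icc 1 L, g (δ l ω)) atTop (nhds c) →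
      Tendsto (fun L : ℕ => (1/(L:ℝ)) * ∑ l ∈ Finset.Icc 1 L, g (δhat l ω)) atTop (nhds c) := by
    intro g hg c hc
    have hdiff : Tendsto (fun L : ℕ => (1/(L:ℝ)) * ∑ l ∈ Finset.Icc 1 L,
        (g (δhat l ω) - g (δ l ω))) atTop (nhds 0) := by
      apply squeeze_zero_norm _ hdω
      intro L
      have hb : ∀ l ∈ Finset.Icc 1 L, |g (δhat l ω) - g (δ l ω)|
          ≤ (if l ∈ 𝓛 ω then (1:ℝ) else 0) := by
        intro l _
        by_cases h : l ∈ 𝓛 ω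
        · simp only [if_pos h]
          rcases hg (δhat l ω) with h1 | h1 <;> rcases hg (δ l ω) with h2 | h2 <;>
            rw [h1, h2] <;> norm_num
        · rw [hagree ω l h, sub_self, abs_zero, if_neg h]
      rw [Real.norm_eq_abs, abs_mul, abs_of_nonneg (by positivity : (0:ℝ) ≤ 1/(L:ℝ))]
      calc (1/(L:ℝ)) * |∑ l ∈ Finset.Icc 1 L, (g (δhat l ω) - g (δ l ω))|
          ≤ (1/(L:ℝ)) * ∑ l ∈ Finset.Icc 1 L, |g (δhat l ω) - g (δ l ω)| :=
            mul_le_mul_of_nonneg_left (Finset.abs_sum_le_sum_abs _ _) (by positivity)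
        _ ≤ (1/(L:ℝ)) * ∑ l ∈ Finset.Icc 1 L, (if l ∈ 𝓛 ω then (1:ℝ) else 0) :=
            mul_le_mul_of_nonneg_left (Finset.sum_le_sum hb) (by positivity)
        _ = (((Finset.Icc 1 L).filter (fun l => l ∈ 𝓛 ω)).card : ℝ) / L := by
            rw [Finset.sum_boole, one_div_mul_eq_div]
    have h5 := hc.add hdiff
    rw [add_zero] at h5
    refine h5.congr fun L => ?_
    rw [← mul_add, ← Finset.sum_add_distrib]
    congr 1
    exact Finset.sum_congr rfl fun l _ => by ring
  have hgv1 : ∀ v, g1 v = 0 ∨ g1 v = 1 := by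
    intro v
    rw [hg1def]
    by_cases h : v i = ν ∧ (fun j : {j : Fin n // j ≠ i} => v j.1) = η <;> simp [h]
  have hgv2 : ∀ v, g2 v = 0 ∨ g2 v = 1 := by
    intro v
    rw [hg2def]
    by_cases h : (fun j : {j : Fin n // j ≠ i} => v j.1) = η <;> simp [h]
  have hAhat := key g1 hgv1 _ hAω
  have hBhat := key g2 hgv2 _ hBω
  have hfinal := hAhat.sub (hBhat.const_mul (θ i ν))
  rw [sub_self] at hfinal
  exact hfinal
end

section
/- If γ > 0 and the threshold sequence satisfies r(l) ≥ √(ln(2 l^{1+γ})/(2l)) for every l ≥ 1, then almost surely the event { ∃ ν ∈ Δ, |f_ν(l)| ≥ r(l) } occurs for only finitely many l, where f_ν(l) := (1/l)·∑_{k=1}^{l} 1{δ(k)=ν} − θ(ν). (In words: a truthfully reporting load triggers the empirical-deviation penalty test on at most finitely many days, almost surely.) -/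
open MeasureTheory ProbabilityTheory Filter
open scoped Classical ENNReal NNReal

section Aux

lemma aux_hoeffding (p : ℝ) (hp0 : 0 ≤ p) (hp1 : p ≤ 1) {s : ℝ} (hs : 0 ≤ s) :
    1 - p + p * Real.exp s ≤ Real.exp (s * p + s ^ 2 / 8) := by
  set D : ℝ → ℝ := fun x => 1 - p + p * Real.exp x with hDdef
  have hD : ∀ x, 0 < D x := by
    intro x
    rcases eq_or_lt_of_le hp0 with h | h
    · simp [hDdef, ← h]
    · have := Real.exp_pos x
      simp only [hDdef]
      nlinarith
  have hDd : ∀ x, HasDerivAt D (p * Real.exp x) x := fun x =>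
    ((Real.hasDerivAt_exp x).const_mul p).const_add (1 - p)
  set g : ℝ → ℝ := fun x => p * Real.exp x / D x - p - x / 4 with hgdef
  set f : ℝ → ℝ := fun x => Real.log (D x) - x * p - x ^ 2 / 8 with hfdef
  have hgd : ∀ x, HasDerivAt g
      ((p * Real.exp x * D x - p * Real.exp x * (p * Real.exp x)) / (D x) ^ 2 - 1 / 4) x := by
    intro x
    have h1 : HasDerivAt (fun x => p * Real.exp x / D x)
        ((p * Real.exp x * D x - p * Real.exp x * (p * Real.exp x)) / (D x) ^ 2) x :=
      ((Real.hasDerivAt_exp x).const_mul p).div (hDd x) (hD x).ne'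
    have h2 : HasDerivAt (fun x : ℝ => x / 4) (1 / 4) x := (hasDerivAt_id x).div_const 4
    exact (h1.sub_const p).sub h2
  have hganti : ∀ x ∈ Set.Ici (0:ℝ), g x ≤ g 0 := by
    have : AntitoneOn g (Set.Ici 0) := by
      refine antitoneOn_of_deriv_nonpos (convex_Ici 0) ?_ ?_ ?_
      · exact fun x _ => (hgd x).differentiableAt.continuousAt.continuousWithinAt
      · intro x _
        exact (hgd x).differentiableAt.differentiableWithinAt
      · intro x _
        rw [(hgd x).deriv]
        have hDx := hD x
        have hex := Real.exp_pos x
        have key : 4 * (p * Real.exp x * (1 - p)) ≤ (D x) ^ 2 := by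
          have : (1 - p - p * Real.exp x) ^ 2 ≥ 0 := sq_nonneg _
          simp only [hDdef]; nlinarith
        have hDx2 : D x = 1 - p + p * Real.exp x := rfl
        rw [sub_nonpos, div_le_iff₀ (by positivity)]
        nlinarith [key, hDx2]
    intro x hx
    exact this Set.self_mem_Ici hx hx.out
  have hg0 : g 0 = 0 := by
    simp [hgdef, hDdef]
  have hfd : ∀ x, HasDerivAt f (g x) x := by
    intro x
    have h1 : HasDerivAt (fun x => Real.log (D x)) (p * Real.exp x / D x) x :=
      (hDd x).log (hD x).ne'
    have h2 : HasDerivAt (fun x : ℝ => x * p) p x := by simpa using (hasDerivAt_id x).mul_const p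
    have h3 : HasDerivAt (fun x : ℝ => x ^ 2 / 8) (2 * x ^ 1 / 8) x :=
      (hasDerivAt_pow 2 x).div_const 8
    have := (h1.sub h2).sub h3
    refine this.congr_deriv ?_
    show _ = p * Real.exp x / D x - p - x / 4; ring
  have hfanti : AntitoneOn f (Set.Ici 0) := by
    refine antitoneOn_of_deriv_nonpos (convex_Ici 0) ?_ ?_ ?_
    · exact fun x _ => (hfd x).differentiableAt.continuousAt.continuousWithinAt
    · intro x _
      exact (hfd x).differentiableAt.differentiableWithinAt
    · intro x hx
      rw [(hfd x).deriv]
      rw [interior_Ici] at hx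
      have := hganti x (Set.mem_Ici.mpr (le_of_lt (Set.mem_Ioi.mp hx)))
      linarith [hg0 ▸ this]
  have hf0 : f 0 = 0 := by simp [hfdef, hDdef]
  have hfs : f s ≤ 0 := by
    have := hfanti Set.self_mem_Ici hs hs
    rw [hf0] at this; exact this
  have : Real.log (D s) ≤ s * p + s ^ 2 / 8 := by
    simp only [hfdef] at hfs; linarith
  calc 1 - p + p * Real.exp s = D s := rfl
    _ ≤ Real.exp (s * p + s ^ 2 / 8) := by
        rw [← Real.exp_log (hD s)]; exact Real.exp_le_exp.mpr this

lemma aux_mgf_indicator {Ω : Type*} [MeasurableSpace Ω] (μ : Measure Ω) [IsProbabilityMeasure μ]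
    {X : Ω → ℝ} (hX : Measurable X) (h01 : ∀ ω, X ω = 0 ∨ X ω = 1) (s : ℝ) :
    Integrable (fun ω => Real.exp (s * X ω)) μ ∧
      mgf X μ s = 1 - (μ {ω | X ω = 1}).toReal + (μ {ω | X ω = 1}).toReal * Real.exp s := by
  have hA : MeasurableSet {ω | X ω = 1} := hX (measurableSet_singleton 1)
  have heq : (fun ω => Real.exp (s * X ω)) =
      fun ω => 1 + (Real.exp s - 1) * Set.indicator {ω | X ω = 1} (fun _ => (1:ℝ)) ω := by
    funext ω
    rcases h01 ω with h | h
    · have : ω ∉ {ω | X ω = 1} := by simp [Set.mem_setOf_eq, h]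
      simp [h, Set.indicator_of_notMem this]
    · have : ω ∈ {ω | X ω = 1} := h
      simp [h, Set.indicator_of_mem this]
  have hind : Integrable (Set.indicator {ω | X ω = 1} (fun _ => (1:ℝ))) μ :=
    (integrable_const (1:ℝ)).indicator hA
  constructor
  · rw [heq]
    exact (integrable_const (1:ℝ)).add (hind.const_mul _)
  · rw [mgf, heq]
    rw [integral_add (integrable_const 1) (hind.const_mul _), integral_const,
      integral_const_mul, integral_indicator_const _ hA]
    simp [measure_univ, Measure.real]
    ring

lemma aux_chernoff {Ω : Type*} [MeasurableSpace Ω] (μ : Measure Ω) [IsProbabilityMeasure μ]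
    (X : ℕ → Ω → ℝ) (hmeas : ∀ k, Measurable (X k))
    (hindep : iIndepFun X μ)
    (p t : ℝ) (ht : 0 ≤ t) (l : ℕ) (hl : 1 ≤ l)
    (hint : ∀ k ∈ Finset.Icc 1 l, Integrable (fun ω => Real.exp (4 * t * X k ω)) μ)
    (hmgf : ∀ k ∈ Finset.Icc 1 l, mgf (X k) μ (4 * t) ≤ Real.exp (4 * t * p + 2 * t ^ 2)) :
    (μ {ω | (l : ℝ) * (p + t) ≤ ∑ k ∈ Finset.Icc 1 l, X k ω}).toReal ≤
      Real.exp (-(2 : ℝ) * l * t ^ 2) := by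
  have hint' : Integrable (fun ω => Real.exp (4 * t * (∑ k ∈ Finset.Icc 1 l, X k) ω)) μ :=
    hindep.integrable_exp_mul_sum hmeas hint
  have hch := measure_ge_le_exp_mul_mgf (X := ∑ k ∈ Finset.Icc 1 l, X k) (μ := μ)
    ((l : ℝ) * (p + t)) (by positivity) hint'
  have hset : {ω | (l : ℝ) * (p + t) ≤ ∑ k ∈ Finset.Icc 1 l, X k ω} =
      {ω | (l : ℝ) * (p + t) ≤ (∑ k ∈ Finset.Icc 1 l, X k) ω} := by
    simp [Finset.sum_apply]
  rw [hset]
  refine hch.trans ?_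
  have hprod : mgf (∑ k ∈ Finset.Icc 1 l, X k) μ (4 * t) ≤
      Real.exp ((l : ℝ) * (4 * t * p + 2 * t ^ 2)) := by
    rw [hindep.mgf_sum hmeas]
    calc ∏ k ∈ Finset.Icc 1 l, mgf (X k) μ (4 * t)
        ≤ ∏ k ∈ Finset.Icc 1 l, Real.exp (4 * t * p + 2 * t ^ 2) :=
          Finset.prod_le_prod (fun k _ => mgf_nonneg) hmgf
      _ = Real.exp ((l : ℝ) * (4 * t * p + 2 * t ^ 2)) := by
          rw [Finset.prod_const, ← Real.exp_nat_mul, Nat.card_Icc]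
          simp
  calc Real.exp (-(4 * t) * ((l : ℝ) * (p + t))) * mgf (∑ k ∈ Finset.Icc 1 l, X k) μ (4 * t)
      ≤ Real.exp (-(4 * t) * ((l : ℝ) * (p + t))) *
        Real.exp ((l : ℝ) * (4 * t * p + 2 * t ^ 2)) := by
        exact mul_le_mul_of_nonneg_left hprod (Real.exp_nonneg _)
    _ = Real.exp (-(2 : ℝ) * l * t ^ 2) := by
        rw [← Real.exp_add]; congr 1; ring

end Aux

/-- For a truthful load with i.i.d. types `δ l ∼ θ`, if `γ > 0` and the thresholds
satisfy `r(l) ≥ √(ln(2 l^{1+γ})/(2l))` for every `l ≥ 1`, then almost surely the event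
`{∃ ν, |f_ν(l)| ≥ r(l)}` occurs for only finitely many `l ≥ 1`, where
`f_ν(l) = (1/l) ∑_{k=1}^l 1{δ(k)=ν} − θ(ν)`. -/
theorem stmt_3
    {Ω : Type*} [MeasurableSpace Ω] (μ : Measure Ω) [IsProbabilityMeasure μ]
    {Δ : Type*} [Fintype Δ] [Nonempty Δ] [MeasurableSpace Δ] [MeasurableSingletonClass Δ]
    (θ : Δ → ℝ) (hθ0 : ∀ ν, 0 ≤ θ ν) (hθ1 : ∑ ν : Δ, θ ν = 1)
    (δ : ℕ → Ω → Δ)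
    (hmeasδ : ∀ l, Measurable (δ l))
    (hdist : ∀ l, 1 ≤ l → ∀ ν : Δ, μ {ω | δ l ω = ν} = ENNReal.ofReal (θ ν))
    (hindep : iIndepFun δ μ)
    (γ : ℝ) (hγ : 0 < γ)
    (r : ℕ → ℝ)
    (hr : ∀ l : ℕ, 1 ≤ l →
      Real.sqrt (Real.log (2 * (l : ℝ) ^ (1 + γ)) / (2 * (l : ℝ))) ≤ r l) :
    ∀ᵐ ω ∂μ, {l : ℕ | 1 ≤ l ∧ ∃ ν : Δ, r l ≤
      |((1 / (l : ℝ)) * ∑ k ∈ Finset.Icc 1 l,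
          (if δ k ω = ν then (1 : ℝ) else 0)) - θ ν|}.Finite := by
  -- the bad events
  set E : ℕ → Set Ω := fun l => {ω | 1 ≤ l ∧ ∃ ν : Δ, r l ≤
      |((1 / (l : ℝ)) * ∑ k ∈ Finset.Icc 1 l,
          (if δ k ω = ν then (1 : ℝ) else 0)) - θ ν|} with hEdef
  -- the per-type, per-day bound
  have key : ∀ l : ℕ, 1 ≤ l → ∀ ν : Δ,
      μ {ω | r l ≤ |((1 / (l : ℝ)) * ∑ k ∈ Finset.Icc 1 l,
          (if δ k ω = ν then (1 : ℝ) else 0)) - θ ν|} ≤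
        ENNReal.ofReal (2 * Real.exp (-(2 : ℝ) * l * (r l) ^ 2)) := by
    intro l hl ν
    have hl0 : (0 : ℝ) < l := by exact_mod_cast hl
    have ht : 0 ≤ r l := (Real.sqrt_nonneg _).trans (hr l hl)
    have hp0 : 0 ≤ θ ν := hθ0 ν
    have hp1 : θ ν ≤ 1 := by
      have := Finset.single_le_sum (f := θ) (fun i _ => hθ0 i) (Finset.mem_univ ν)
      rw [hθ1] at this; exact this
    set g1 : Δ → ℝ := fun d => if d = ν then 1 else 0 with hg1def
    set g2 : Δ → ℝ := fun d => if d = ν then 0 else 1 with hg2def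
    have hg1 : Measurable g1 :=
      Measurable.ite (measurableSet_singleton ν) measurable_const measurable_const
    have hg2 : Measurable g2 :=
      Measurable.ite (measurableSet_singleton ν) measurable_const measurable_const
    set X : ℕ → Ω → ℝ := fun k => g1 ∘ δ k with hXdef
    set Y : ℕ → Ω → ℝ := fun k => g2 ∘ δ k with hYdef
    have hXmeas : ∀ k, Measurable (X k) := fun k => hg1.comp (hmeasδ k)
    have hYmeas : ∀ k, Measurable (Y k) := fun k => hg2.comp (hmeasδ k)
    have hXindep : iIndepFun X μ :=
      hindep.comp (fun _ => g1) (fun _ => hg1)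
    have hYindep : iIndepFun Y μ :=
      hindep.comp (fun _ => g2) (fun _ => hg2)
    have hX01 : ∀ k ω, X k ω = 0 ∨ X k ω = 1 := by
      intro k ω; simp only [hXdef, Function.comp_apply, hg1def]; split_ifs <;> simp
    have hY01 : ∀ k ω, Y k ω = 0 ∨ Y k ω = 1 := by
      intro k ω; simp only [hYdef, Function.comp_apply, hg2def]; split_ifs <;> simp
    have hX1 : ∀ k, {ω | X k ω = 1} = {ω | δ k ω = ν} := by
      intro k; ext ω
      simp only [hXdef, Function.comp_apply, hg1def, Set.mem_setOf_eq]
      split_ifs with h <;> simp [h]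
    have hY1 : ∀ k, {ω | Y k ω = 1} = {ω | δ k ω = ν}ᶜ := by
      intro k; ext ω
      simp only [hYdef, Function.comp_apply, hg2def, Set.mem_setOf_eq, Set.mem_compl_iff]
      split_ifs with h <;> simp [h]
    have hμX : ∀ k ∈ Finset.Icc 1 l, (μ {ω | X k ω = 1}).toReal = θ ν := by
      intro k hk
      rw [hX1, hdist k (Finset.mem_Icc.mp hk).1 ν, ENNReal.toReal_ofReal hp0]
    have hμY : ∀ k ∈ Finset.Icc 1 l, (μ {ω | Y k ω = 1}).toReal = 1 - θ ν := by
      intro k hk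
      have hms : MeasurableSet {ω | δ k ω = ν} := hmeasδ k (measurableSet_singleton ν)
      rw [hY1, prob_compl_eq_one_sub hms, hdist k (Finset.mem_Icc.mp hk).1 ν]
      rw [show (1 : ℝ≥0∞) - ENNReal.ofReal (θ ν) = ENNReal.ofReal (1 - θ ν) by
        rw [ENNReal.ofReal_sub _ hp0, ENNReal.ofReal_one]]
      exact ENNReal.toReal_ofReal (by linarith)
    have hs4 : (0 : ℝ) ≤ 4 * r l := by positivity
    -- Chernoff for X (upper tail)
    have hAbound : (μ {ω | (l : ℝ) * (θ ν + r l) ≤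
        ∑ k ∈ Finset.Icc 1 l, X k ω}).toReal ≤ Real.exp (-(2 : ℝ) * l * (r l) ^ 2) := by
      refine aux_chernoff μ X hXmeas hXindep (θ ν) (r l) ht l hl ?_ ?_
      · intro k hk
        exact (aux_mgf_indicator μ (hXmeas k) (hX01 k) (4 * r l)).1
      · intro k hk
        rw [(aux_mgf_indicator μ (hXmeas k) (hX01 k) (4 * r l)).2, hμX k hk]
        calc 1 - θ ν + θ ν * Real.exp (4 * r l)
            ≤ Real.exp ((4 * r l) * θ ν + (4 * r l) ^ 2 / 8) := aux_hoeffding _ hp0 hp1 hs4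
          _ = Real.exp (4 * r l * θ ν + 2 * (r l) ^ 2) := by congr 1; ring
    -- Chernoff for Y (lower tail)
    have hBbound : (μ {ω | (l : ℝ) * ((1 - θ ν) + r l) ≤
        ∑ k ∈ Finset.Icc 1 l, Y k ω}).toReal ≤ Real.exp (-(2 : ℝ) * l * (r l) ^ 2) := by
      refine aux_chernoff μ Y hYmeas hYindep (1 - θ ν) (r l) ht l hl ?_ ?_
      · intro k hk
        exact (aux_mgf_indicator μ (hYmeas k) (hY01 k) (4 * r l)).1
      · intro k hk
        rw [(aux_mgf_indicator μ (hYmeas k) (hY01 k) (4 * r l)).2, hμY k hk]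
        calc 1 - (1 - θ ν) + (1 - θ ν) * Real.exp (4 * r l)
            ≤ Real.exp ((4 * r l) * (1 - θ ν) + (4 * r l) ^ 2 / 8) :=
              aux_hoeffding _ (by linarith) (by linarith) hs4
          _ = Real.exp (4 * r l * (1 - θ ν) + 2 * (r l) ^ 2) := by congr 1; ring
    -- inclusion into the two tails
    have hsub : {ω | r l ≤ |((1 / (l : ℝ)) * ∑ k ∈ Finset.Icc 1 l,
          (if δ k ω = ν then (1 : ℝ) else 0)) - θ ν|} ⊆
        {ω | (l : ℝ) * (θ ν + r l) ≤ ∑ k ∈ Finset.Icc 1 l, X k ω} ∪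
        {ω | (l : ℝ) * ((1 - θ ν) + r l) ≤ ∑ k ∈ Finset.Icc 1 l, Y k ω} := by
      intro ω hω
      set S : ℝ := ∑ k ∈ Finset.Icc 1 l, (if δ k ω = ν then (1 : ℝ) else 0) with hSdef
      have hSX : ∑ k ∈ Finset.Icc 1 l, X k ω = S := rfl
      have hSY : ∑ k ∈ Finset.Icc 1 l, Y k ω = (l : ℝ) - S := by
        have h2 : ∀ k ∈ Finset.Icc 1 l, Y k ω =
            1 - (if δ k ω = ν then (1 : ℝ) else 0) := by
          intro k _
          simp only [hYdef, Function.comp_apply, hg2def, hg1def]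
          split_ifs <;> ring
        rw [Finset.sum_congr rfl h2, Finset.sum_sub_distrib, Finset.sum_const, Nat.card_Icc]
        simp [hSdef]
      rw [Set.mem_setOf_eq] at hω
      rcases le_abs.mp hω with h | h
      · left
        show (l : ℝ) * (θ ν + r l) ≤ ∑ k ∈ Finset.Icc 1 l, X k ω
        rw [hSX]
        have hmul := mul_le_mul_of_nonneg_left h hl0.le
        have hfs : (l : ℝ) * ((1 / (l : ℝ)) * S - θ ν) = S - l * θ ν := by
          field_simp
        rw [hfs] at hmul
        nlinarith
      · right
        show (l : ℝ) * ((1 - θ ν) + r l) ≤ ∑ k ∈ Finset.Icc 1 l, Y k ω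
        rw [hSY]
        have hmul := mul_le_mul_of_nonneg_left h hl0.le
        have hfs : (l : ℝ) * (-((1 / (l : ℝ)) * S - θ ν)) = l * θ ν - S := by
          field_simp; ring
        rw [hfs] at hmul
        nlinarith
    calc μ {ω | r l ≤ |((1 / (l : ℝ)) * ∑ k ∈ Finset.Icc 1 l,
          (if δ k ω = ν then (1 : ℝ) else 0)) - θ ν|}
        ≤ μ ({ω | (l : ℝ) * (θ ν + r l) ≤ ∑ k ∈ Finset.Icc 1 l, X k ω} ∪
            {ω | (l : ℝ) * ((1 - θ ν) + r l) ≤ ∑ k ∈ Finset.Icc 1 l, Y k ω}) :=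
          measure_mono hsub
      _ ≤ μ {ω | (l : ℝ) * (θ ν + r l) ≤ ∑ k ∈ Finset.Icc 1 l, X k ω} +
          μ {ω | (l : ℝ) * ((1 - θ ν) + r l) ≤ ∑ k ∈ Finset.Icc 1 l, Y k ω} :=
          measure_union_le _ _
      _ ≤ ENNReal.ofReal (Real.exp (-(2 : ℝ) * l * (r l) ^ 2)) +
          ENNReal.ofReal (Real.exp (-(2 : ℝ) * l * (r l) ^ 2)) := by
          gcongr
          · exact (ENNReal.le_ofReal_iff_toReal_le (measure_ne_top μ _)
              (Real.exp_nonneg _)).mpr hAbound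
          · exact (ENNReal.le_ofReal_iff_toReal_le (measure_ne_top μ _)
              (Real.exp_nonneg _)).mpr hBbound
      _ = ENNReal.ofReal (2 * Real.exp (-(2 : ℝ) * l * (r l) ^ 2)) := by
          rw [← ENNReal.ofReal_add (Real.exp_nonneg _) (Real.exp_nonneg _)]
          congr 1; ring
  -- real-valued bound per day
  have hreal : ∀ l : ℕ, 1 ≤ l →
      2 * Real.exp (-(2 : ℝ) * l * (r l) ^ 2) ≤ ((l : ℝ) ^ (1 + γ))⁻¹ := by
    intro l hl
    have hl1 : (1 : ℝ) ≤ l := by exact_mod_cast hl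
    have hl0 : (0 : ℝ) < l := by linarith
    have hpow : (1 : ℝ) ≤ (l : ℝ) ^ (1 + γ) := Real.one_le_rpow hl1 (by linarith)
    have hpos : (0 : ℝ) < 2 * (l : ℝ) ^ (1 + γ) := by linarith
    set L : ℝ := Real.log (2 * (l : ℝ) ^ (1 + γ)) with hLdef
    have hL0 : 0 ≤ L := Real.log_nonneg (by linarith)
    have hsq : L / (2 * l) ≤ (r l) ^ 2 := by
      have := pow_le_pow_left₀ (Real.sqrt_nonneg _) (hr l hl) 2
      rwa [Real.sq_sqrt (by positivity)] at this
    have hL2 : L ≤ 2 * l * (r l) ^ 2 := by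
      rw [div_le_iff₀ (by positivity)] at hsq
      linarith
    have hexp : Real.exp (-(2 : ℝ) * l * (r l) ^ 2) ≤ (2 * (l : ℝ) ^ (1 + γ))⁻¹ := by
      rw [← Real.exp_log hpos, ← Real.exp_neg]
      exact Real.exp_le_exp.mpr (by linarith)
    calc 2 * Real.exp (-(2 : ℝ) * l * (r l) ^ 2)
        ≤ 2 * (2 * (l : ℝ) ^ (1 + γ))⁻¹ := by linarith [hexp]
      _ = ((l : ℝ) ^ (1 + γ))⁻¹ := by
          rw [mul_inv]; ring
  -- summable dominating sequence
  set F : ℕ → ℝ := fun l => (Fintype.card Δ : ℝ) * ((l : ℝ) ^ (1 + γ))⁻¹ with hFdef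
  have hFnonneg : ∀ l, 0 ≤ F l := by
    intro l
    have : (0:ℝ) ≤ ((l : ℝ) ^ (1 + γ))⁻¹ := by positivity
    positivity
  have hFsummable : Summable F :=
    (Real.summable_nat_rpow_inv.mpr (by linarith)).mul_left _
  -- measure bound on E l
  have hE : ∀ l, μ (E l) ≤ ENNReal.ofReal (F l) := by
    intro l
    rcases Nat.eq_zero_or_pos l with h0 | hl
    · have : E l = ∅ := by
        ext ω; simp [hEdef, h0]
      simp [this]
    · have hsub : E l ⊆ ⋃ ν : Δ, {ω | r l ≤ |((1 / (l : ℝ)) * ∑ k ∈ Finset.Icc 1 l,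
          (if δ k ω = ν then (1 : ℝ) else 0)) - θ ν|} := by
        intro ω hω
        obtain ⟨-, ν, hν⟩ := hω
        exact Set.mem_iUnion.mpr ⟨ν, hν⟩
      calc μ (E l) ≤ μ (⋃ ν : Δ, {ω | r l ≤ |((1 / (l : ℝ)) * ∑ k ∈ Finset.Icc 1 l,
            (if δ k ω = ν then (1 : ℝ) else 0)) - θ ν|}) := measure_mono hsub
        _ ≤ ∑' ν : Δ, μ {ω | r l ≤ |((1 / (l : ℝ)) * ∑ k ∈ Finset.Icc 1 l,
            (if δ k ω = ν then (1 : ℝ) else 0)) - θ ν|} := measure_iUnion_le _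
        _ = ∑ ν : Δ, μ {ω | r l ≤ |((1 / (l : ℝ)) * ∑ k ∈ Finset.Icc 1 l,
            (if δ k ω = ν then (1 : ℝ) else 0)) - θ ν|} := tsum_fintype _
        _ ≤ ∑ ν : Δ, ENNReal.ofReal (2 * Real.exp (-(2 : ℝ) * l * (r l) ^ 2)) :=
            Finset.sum_le_sum (fun ν _ => key l hl ν)
        _ = (Fintype.card Δ : ℝ≥0∞) * ENNReal.ofReal (2 * Real.exp (-(2 : ℝ) * l * (r l) ^ 2)) := by
            rw [Finset.sum_const, Finset.card_univ, nsmul_eq_mul]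
        _ ≤ ENNReal.ofReal (F l) := by
            rw [← ENNReal.ofReal_natCast (Fintype.card Δ),
              ← ENNReal.ofReal_mul (by positivity)]
            exact ENNReal.ofReal_le_ofReal
              (mul_le_mul_of_nonneg_left (hreal l hl) (by positivity))
  -- Borel–Cantelli
  have htsum : (∑' l, μ (E l)) ≠ ⊤ := by
    refine ne_top_of_le_ne_top ?_ (ENNReal.tsum_le_tsum hE)
    rw [← ENNReal.ofReal_tsum_of_nonneg hFnonneg hFsummable]
    exact ENNReal.ofReal_ne_top
  filter_upwards [MeasureTheory.ae_eventually_notMem htsum] with ω hω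
  obtain ⟨N, hN⟩ := eventually_atTop.mp hω
  refine (Set.finite_Iio N).subset ?_
  intro l hl
  by_contra hcontra
  exact hN l (not_lt.mp hcontra) hl
end

section
/- For every ν ∈ Δ, η ∈ E, L ≥ 1 and t > 0, the statistic h_{ν,η}(L) := (1/L)·∑_{l=1}^{L} 1{δ(l)=ν and Y(l)=η} − θ(ν)·(1/L)·∑_{l=1}^{L} 1{Y(l)=η} satisfies the Azuma–Hoeffding-type concentration bound P( |h_{ν,η}(L)| ≥ t ) ≤ 2·exp(−L t² / 2). -/
open MeasureTheory ProbabilityTheory Filter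
open scoped Classical

section Aux

private lemma exp_le_chord {lam y : ℝ} (h1 : -1 ≤ y) (h2 : y ≤ 1) :
    Real.exp (lam * y) ≤ (1 - y) / 2 * Real.exp (-lam) + (1 + y) / 2 * Real.exp lam := by
  have key := convexOn_exp.2 (Set.mem_univ (-lam)) (Set.mem_univ lam)
    (by linarith : (0:ℝ) ≤ (1 - y) / 2) (by linarith : (0:ℝ) ≤ (1 + y) / 2) (by ring)
  simp only [smul_eq_mul] at key
  have harg : lam * y = (1 - y) / 2 * (-lam) + (1 + y) / 2 * lam := by ring
  rw [harg]
  exact key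

private lemma hoeffding_step (p lam : ℝ) (hp0 : 0 ≤ p) (hp1 : p ≤ 1) :
    p * Real.exp (lam * (1 - p)) + (1 - p) * Real.exp (lam * (0 - p))
      ≤ Real.exp (lam ^ 2 / 2) := by
  have h1 := exp_le_chord (lam := lam) (y := 1 - p) (by linarith) (by linarith)
  have h2 := exp_le_chord (lam := lam) (y := 0 - p) (by linarith) (by linarith)
  have hcosh := Real.cosh_le_exp_half_sq lam
  rw [Real.cosh_eq] at hcosh
  nlinarith [mul_le_mul_of_nonneg_left h1 hp0,
    mul_le_mul_of_nonneg_left h2 (by linarith : (0:ℝ) ≤ 1 - p),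
    Real.exp_pos lam, Real.exp_pos (-lam)]

variable {Ω : Type*} [MeasurableSpace Ω] (μ : Measure Ω) [IsProbabilityMeasure μ]
  {Δ : Type*} [MeasurableSpace Δ] [MeasurableSingletonClass Δ]
  {E : Type*} [MeasurableSpace E] [MeasurableSingletonClass E]

private lemma integrable_of_bdd {f : Ω → ℝ} (C : ℝ) (hf : Measurable f)
    (hb : ∀ ω, |f ω| ≤ C) : Integrable f μ := by
  refine (integrable_const C).mono' hf.aestronglyMeasurable ?_
  exact Filter.Eventually.of_forall (by simpa [Real.norm_eq_abs] using hb)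

/-- The key MGF bound via the martingale-difference structure. -/
private lemma mgf_key
    (p : ℝ) (hp0 : 0 ≤ p) (hp1 : p ≤ 1)
    (δ : ℕ → Ω → Δ) (Y : ℕ → Ω → E) (ν : Δ) (η : E)
    (hmeasδ : ∀ l, Measurable (δ l)) (hmeasY : ∀ l, Measurable (Y l))
    (hdist : ∀ l, 1 ≤ l → μ {ω | δ l ω = ν} = ENNReal.ofReal p)
    (hindep : ∀ l : ℕ, 1 ≤ l →
      Indep (MeasurableSpace.comap (δ l) inferInstance)
        ((⨆ k ∈ Set.Ico 1 l, MeasurableSpace.comap (δ k) inferInstance) ⊔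
          (⨆ k ∈ Set.Icc 1 l, MeasurableSpace.comap (Y k) inferInstance)) μ)
    (lam : ℝ) (L : ℕ) :
    ∫ ω, Real.exp (lam * ∑ l ∈ Finset.Icc 1 L,
        ((if Y l ω = η then (1:ℝ) else 0) * ((if δ l ω = ν then (1:ℝ) else 0) - p))) ∂μ
      ≤ Real.exp (L * lam ^ 2 / 2) := by
  -- abbreviations
  set X : ℕ → Ω → ℝ := fun l ω =>
    (if Y l ω = η then (1:ℝ) else 0) * ((if δ l ω = ν then (1:ℝ) else 0) - p) with hXdef
  set S : ℕ → Ω → ℝ := fun L ω => ∑ l ∈ Finset.Icc 1 L, X l ω with hSdef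
  have hXm : ∀ l, Measurable (X l) := by
    intro l
    apply Measurable.mul
    · exact Measurable.ite ((hmeasY l) (measurableSet_singleton η))
        measurable_const measurable_const
    · exact Measurable.sub (Measurable.ite ((hmeasδ l) (measurableSet_singleton ν))
        measurable_const measurable_const) measurable_const
  have hXb : ∀ l ω, |X l ω| ≤ 1 := by
    intro l ω
    rw [abs_le]
    constructor <;> · simp only [hXdef]; split_ifs <;> simp <;> linarith
  have hSm : ∀ L, Measurable (S L) := fun L =>
    Finset.measurable_sum _ (fun l _ => hXm l)
  have hSb : ∀ L ω, |S L ω| ≤ L := by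
    intro L ω
    calc |S L ω| ≤ ∑ l ∈ Finset.Icc 1 L, |X l ω| := Finset.abs_sum_le_sum_abs _ _
      _ ≤ ∑ l ∈ Finset.Icc 1 L, (1:ℝ) := Finset.sum_le_sum (fun l _ => hXb l ω)
      _ = ((Finset.Icc 1 L).card : ℝ) := by simp
      _ ≤ L := by rw [Nat.card_Icc]; simp
  -- the induction
  show ∫ ω, Real.exp (lam * S L ω) ∂μ ≤ Real.exp (L * lam ^ 2 / 2)
  induction L with
  | zero =>
      have : ∀ ω, Real.exp (lam * S 0 ω) = 1 := by
        intro ω; simp [hSdef]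
      simp only [this]
      simp
  | succ L ih =>
      set Iη : Ω → ℝ := fun ω => if Y (L+1) ω = η then (1:ℝ) else 0 with hIηdef
      set Iν : Ω → ℝ := fun ω => if δ (L+1) ω = ν then (1:ℝ) else 0 with hIνdef
      set G : Ω → ℝ := fun ω => Real.exp (lam * S L ω) with hGdef
      set A : Ω → ℝ := fun ω => G ω * Iη ω with hAdef
      set c1 : ℝ := Real.exp (lam * (1 - p)) with hc1
      set c2 : ℝ := Real.exp (lam * (0 - p)) with hc2
      -- independence of A and Iν
      have hIF : IndepFun A Iν μ := by
        set m2 : MeasurableSpace Ω :=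
          (⨆ k ∈ Set.Ico 1 (L+1), MeasurableSpace.comap (δ k) inferInstance) ⊔
            (⨆ k ∈ Set.Icc 1 (L+1), MeasurableSpace.comap (Y k) inferInstance) with hm2
        have hδm2 : ∀ k, k ∈ Set.Ico 1 (L+1) → Measurable[m2] (δ k) := by
          intro k hk
          apply measurable_iff_comap_le.2
          calc MeasurableSpace.comap (δ k) inferInstance
              ≤ ⨆ k ∈ Set.Ico 1 (L+1), MeasurableSpace.comap (δ k) inferInstance :=
                le_biSup (fun k => MeasurableSpace.comap (δ k) inferInstance) hk
            _ ≤ m2 := le_sup_left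
        have hYm2 : ∀ k, k ∈ Set.Icc 1 (L+1) → Measurable[m2] (Y k) := by
          intro k hk
          apply measurable_iff_comap_le.2
          calc MeasurableSpace.comap (Y k) inferInstance
              ≤ ⨆ k ∈ Set.Icc 1 (L+1), MeasurableSpace.comap (Y k) inferInstance :=
                le_biSup (fun k => MeasurableSpace.comap (Y k) inferInstance) hk
            _ ≤ m2 := le_sup_right
        have hXm2 : ∀ l, l ∈ Finset.Icc 1 L → Measurable[m2] (X l) := by
          intro l hl
          rw [Finset.mem_Icc] at hl
          have hδ' : Measurable[m2] (δ l) := hδm2 l ⟨hl.1, by omega⟩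
          have hY' : Measurable[m2] (Y l) := hYm2 l ⟨hl.1, by omega⟩
          apply Measurable.mul
          · exact Measurable.ite (hY' (measurableSet_singleton η))
              measurable_const measurable_const
          · exact Measurable.sub (Measurable.ite (hδ' (measurableSet_singleton ν))
              measurable_const measurable_const) measurable_const
        have hSm2 : Measurable[m2] (S L) := Finset.measurable_sum _ hXm2
        have hAm2 : Measurable[m2] A := by
          apply Measurable.mul
          · exact Real.measurable_exp.comp (Measurable.mul (@measurable_const ℝ Ω _ m2 lam) hSm2)
          · exact Measurable.ite
              ((hYm2 (L+1) ⟨by omega, le_rfl⟩) (measurableSet_singleton η))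
              (@measurable_const ℝ Ω _ m2 1) (@measurable_const ℝ Ω _ m2 0)
        have hIν1 : Measurable[MeasurableSpace.comap (δ (L+1)) inferInstance] Iν := by
          have hδ1 : Measurable[MeasurableSpace.comap (δ (L+1)) inferInstance] (δ (L+1)) :=
            measurable_iff_comap_le.2 le_rfl
          exact Measurable.ite (hδ1 (measurableSet_singleton ν))
            measurable_const measurable_const
        have h := hindep (L+1) (by omega)
        rw [← hm2] at h
        have h1 := indep_of_indep_of_le_left h (measurable_iff_comap_le.1 hIν1)
        have h2 := indep_of_indep_of_le_right h1 (measurable_iff_comap_le.1 hAm2)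
        exact h2.symm
      -- bounds and integrability
      have hGpos : ∀ ω, 0 < G ω := fun ω => Real.exp_pos _
      have hGb : ∀ ω, |G ω| ≤ Real.exp (|lam| * L) := by
        intro ω
        rw [abs_of_pos (hGpos ω)]
        apply Real.exp_le_exp.2
        calc lam * S L ω ≤ |lam * S L ω| := le_abs_self _
          _ = |lam| * |S L ω| := abs_mul _ _
          _ ≤ |lam| * L := by
              exact mul_le_mul_of_nonneg_left (hSb L ω) (abs_nonneg lam)
      have hIη01 : ∀ ω, 0 ≤ Iη ω ∧ Iη ω ≤ 1 := by
        intro ω; simp only [hIηdef]; split_ifs <;> norm_num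
      have hIν01 : ∀ ω, 0 ≤ Iν ω ∧ Iν ω ≤ 1 := by
        intro ω; simp only [hIνdef]; split_ifs <;> norm_num
      have hGm : Measurable G := Real.measurable_exp.comp (measurable_const.mul (hSm L))
      have hIηm : Measurable Iη := Measurable.ite ((hmeasY (L+1)) (measurableSet_singleton η))
        measurable_const measurable_const
      have hIνm : Measurable Iν := Measurable.ite ((hmeasδ (L+1)) (measurableSet_singleton ν))
        measurable_const measurable_const
      have hAm : Measurable A := hGm.mul hIηm
      have habs_mul : ∀ (f g : Ω → ℝ) (C : ℝ), (∀ ω, |f ω| ≤ C) → (∀ ω, 0 ≤ g ω ∧ g ω ≤ 1) →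
          ∀ ω, |f ω * g ω| ≤ C := by
        intro f g C hf hg ω
        rw [abs_mul]
        calc |f ω| * |g ω| ≤ C * 1 := by
              apply mul_le_mul (hf ω) _ (abs_nonneg _) ((abs_nonneg (f ω)).trans (hf ω))
              rw [abs_of_nonneg (hg ω).1]; exact (hg ω).2
          _ = C := mul_one C
      have hAint : Integrable A μ :=
        integrable_of_bdd μ (Real.exp (|lam| * L)) hAm (habs_mul G Iη _ hGb hIη01)
      have hIνint : Integrable Iν μ :=
        integrable_of_bdd μ 1 hIνm (by intro ω; rw [abs_of_nonneg (hIν01 ω).1]; exact (hIν01 ω).2)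
      have hGint : Integrable G μ := integrable_of_bdd μ (Real.exp (|lam| * L)) hGm hGb
      have hf0int : Integrable (fun ω => G ω * (1 - Iη ω)) μ := by
        apply integrable_of_bdd μ (Real.exp (|lam| * L)) (hGm.mul (measurable_const.sub hIηm))
        exact habs_mul G (fun ω => 1 - Iη ω) _ hGb
          (fun ω => ⟨show (0:ℝ) ≤ 1 - Iη ω by linarith [(hIη01 ω).2],
            show 1 - Iη ω ≤ 1 by linarith [(hIη01 ω).1]⟩)
      have hf1int : Integrable (fun ω => A ω * Iν ω) μ := by
        apply integrable_of_bdd μ (Real.exp (|lam| * L)) (hAm.mul hIνm)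
        exact habs_mul A Iν _ (habs_mul G Iη _ hGb hIη01) hIν01
      have hf2int : Integrable (fun ω => A ω * (1 - Iν ω)) μ := by
        apply integrable_of_bdd μ (Real.exp (|lam| * L)) (hAm.mul (measurable_const.sub hIνm))
        exact habs_mul A (fun ω => 1 - Iν ω) _ (habs_mul G Iη _ hGb hIη01)
          (fun ω => ⟨show (0:ℝ) ≤ 1 - Iν ω by linarith [(hIν01 ω).2],
            show 1 - Iν ω ≤ 1 by linarith [(hIν01 ω).1]⟩)
      -- pointwise decomposition
      have hpt : ∀ ω, Real.exp (lam * S (L+1) ω)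
          = G ω * (1 - Iη ω) + c1 * (A ω * Iν ω) + c2 * (A ω * (1 - Iν ω)) := by
        intro ω
        have hsplit : S (L+1) ω = S L ω + X (L+1) ω := by
          simp only [hSdef]
          exact Finset.sum_Icc_succ_top (by omega) _
        rw [hsplit, mul_add, Real.exp_add]
        simp only [hGdef, hAdef, hIηdef, hIνdef, hXdef, hc1, hc2]
        by_cases hY' : Y (L+1) ω = η <;> by_cases hδ' : δ (L+1) ω = ν <;>
          simp [hY', hδ'] <;> ring
      -- integral of Iν
      have hIνval : ∫ ω, Iν ω ∂μ = p := by
        have hind : Iν = Set.indicator {ω | δ (L+1) ω = ν} (fun _ => (1:ℝ)) := by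
          funext ω
          simp only [hIνdef, Set.indicator_apply, Set.mem_setOf_eq]
        rw [hind, integral_indicator_const (1:ℝ)
            (show MeasurableSet {ω | δ (L+1) ω = ν} from
              (hmeasδ (L+1)) (measurableSet_singleton ν)),
          measureReal_def, hdist (L+1) (by omega)]
        simp [ENNReal.toReal_ofReal hp0]
      -- factorization
      have hfac : ∫ ω, A ω * Iν ω ∂μ = (∫ ω, A ω ∂μ) * p := by
        have := hIF.integral_fun_mul_eq_mul_integral hAint.aestronglyMeasurable hIνint.aestronglyMeasurable
        rw [← hIνval]
        exact this
      have hfac2 : ∫ ω, A ω * (1 - Iν ω) ∂μ = (∫ ω, A ω ∂μ) * (1 - p) := by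
        have : (fun ω => A ω * (1 - Iν ω)) = fun ω => A ω - A ω * Iν ω := by
          funext ω; ring
        rw [this, integral_sub hAint hf1int, hfac]
        ring
      -- combine
      have hApos : 0 ≤ ∫ ω, A ω ∂μ := integral_nonneg fun ω =>
        mul_nonneg (hGpos ω).le (hIη01 ω).1
      have hf0pos : 0 ≤ ∫ ω, G ω * (1 - Iη ω) ∂μ := integral_nonneg fun ω =>
        mul_nonneg (hGpos ω).le (by linarith [(hIη01 ω).2])
      have hexp1 : (1:ℝ) ≤ Real.exp (lam ^ 2 / 2) := by
        rw [← Real.exp_zero]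
        exact Real.exp_le_exp.2 (by positivity)
      have hsumint : ∫ ω, Real.exp (lam * S (L+1) ω) ∂μ
          = (∫ ω, G ω * (1 - Iη ω) ∂μ) + c1 * (∫ ω, A ω * Iν ω ∂μ)
            + c2 * (∫ ω, A ω * (1 - Iν ω) ∂μ) := by
        simp only [hpt]
        have hint01 : Integrable (fun ω => G ω * (1 - Iη ω) + c1 * (A ω * Iν ω)) μ :=
          hf0int.add (hf1int.const_mul c1)
        rw [integral_add hint01 (hf2int.const_mul c2),
          integral_add hf0int (hf1int.const_mul c1),
          integral_const_mul, integral_const_mul]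
      have hGsum : (∫ ω, G ω * (1 - Iη ω) ∂μ) + ∫ ω, A ω ∂μ = ∫ ω, G ω ∂μ := by
        rw [← integral_add hf0int hAint]
        congr 1
        funext ω
        simp only [hAdef]
        ring
      have hstep := hoeffding_step p lam hp0 hp1
      calc ∫ ω, Real.exp (lam * S (L+1) ω) ∂μ
          = (∫ ω, G ω * (1 - Iη ω) ∂μ)
            + (∫ ω, A ω ∂μ) * (p * c1 + (1 - p) * c2) := by
              rw [hsumint, hfac, hfac2]; ring
        _ ≤ (∫ ω, G ω * (1 - Iη ω) ∂μ)
            + (∫ ω, A ω ∂μ) * Real.exp (lam ^ 2 / 2) := by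
              have : p * c1 + (1 - p) * c2 ≤ Real.exp (lam ^ 2 / 2) := by
                simpa [hc1, hc2] using hstep
              nlinarith
        _ ≤ Real.exp (lam ^ 2 / 2) * ((∫ ω, G ω * (1 - Iη ω) ∂μ) + ∫ ω, A ω ∂μ) := by
              nlinarith
        _ = Real.exp (lam ^ 2 / 2) * ∫ ω, G ω ∂μ := by rw [hGsum]
        _ ≤ Real.exp (lam ^ 2 / 2) * Real.exp (L * lam ^ 2 / 2) := by
              have := ih
              nlinarith [Real.exp_pos (lam ^ 2 / 2)]
        _ = Real.exp ((L + 1 : ℕ) * lam ^ 2 / 2) := by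
              rw [← Real.exp_add]
              congr 1
              push_cast
              ring

end Aux

/-- Let `δ l ∼ θ` be `Δ`-valued and let `Y l` be `E`-valued (the other loads'
possibly strategic, history-dependent reports) with, for each `l ≥ 1`, `δ l` independent of the
σ-algebra generated by `δ 1, …, δ (l−1), Y 1, …, Y l`. Then for every `ν ∈ Δ`, `η ∈ E`, `L ≥ 1`
and `t > 0`, the statistic
`h_{ν,η}(L) = (1/L) ∑_{l=1}^L 1{δ(l)=ν ∧ Y(l)=η} − θ(ν) · (1/L) ∑_{l=1}^L 1{Y(l)=η}`
satisfies the Azuma–Hoeffding bound `P(|h_{ν,η}(L)| ≥ t) ≤ 2 exp(−L t² / 2)`. -/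
theorem stmt_4
    {Ω : Type*} [MeasurableSpace Ω] (μ : Measure Ω) [IsProbabilityMeasure μ]
    {Δ : Type*} [Fintype Δ] [Nonempty Δ] [MeasurableSpace Δ] [MeasurableSingletonClass Δ]
    {E : Type*} [Fintype E] [Nonempty E] [MeasurableSpace E] [MeasurableSingletonClass E]
    (θ : Δ → ℝ) (hθ0 : ∀ ν, 0 ≤ θ ν) (hθ1 : ∑ ν : Δ, θ ν = 1)
    (δ : ℕ → Ω → Δ) (Y : ℕ → Ω → E)
    (hmeasδ : ∀ l, Measurable (δ l)) (hmeasY : ∀ l, Measurable (Y l))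
    (hdist : ∀ l, 1 ≤ l → ∀ ν : Δ, μ {ω | δ l ω = ν} = ENNReal.ofReal (θ ν))
    (hindep : ∀ l : ℕ, 1 ≤ l →
      Indep (MeasurableSpace.comap (δ l) inferInstance)
        ((⨆ k ∈ Set.Ico 1 l, MeasurableSpace.comap (δ k) inferInstance) ⊔
          (⨆ k ∈ Set.Icc 1 l, MeasurableSpace.comap (Y k) inferInstance)) μ) :
    ∀ (ν : Δ) (η : E) (L : ℕ), 1 ≤ L → ∀ t : ℝ, 0 < t →
      μ {ω | t ≤
        |((1 / (L : ℝ)) * ∑ l ∈ Finset.Icc 1 L,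
            (if δ l ω = ν ∧ Y l ω = η then (1 : ℝ) else 0))
          - θ ν * ((1 / (L : ℝ)) * ∑ l ∈ Finset.Icc 1 L,
              (if Y l ω = η then (1 : ℝ) else 0))|}
        ≤ ENNReal.ofReal (2 * Real.exp (-(L : ℝ) * t ^ 2 / 2)) := by
  intro ν η L hL t ht
  set p := θ ν with hp
  have hp0 : 0 ≤ p := hθ0 ν
  have hp1 : p ≤ 1 := by
    have h := Finset.single_le_sum (f := θ) (fun i _ => hθ0 i) (Finset.mem_univ ν)
    rw [hθ1] at h
    exact h
  set S : Ω → ℝ := fun ω => ∑ l ∈ Finset.Icc 1 L,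
    ((if Y l ω = η then (1:ℝ) else 0) * ((if δ l ω = ν then (1:ℝ) else 0) - p)) with hSdef
  have hSm : Measurable S := by
    apply Finset.measurable_sum
    intro l _
    apply Measurable.mul
    · exact Measurable.ite ((hmeasY l) (measurableSet_singleton η))
        measurable_const measurable_const
    · exact Measurable.sub (Measurable.ite ((hmeasδ l) (measurableSet_singleton ν))
        measurable_const measurable_const) measurable_const
  have hXb : ∀ (l : ℕ) (ω : Ω),
      |(if Y l ω = η then (1:ℝ) else 0) * ((if δ l ω = ν then (1:ℝ) else 0) - p)| ≤ 1 := by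
    intro l ω
    rw [abs_le]
    constructor <;> · split_ifs <;> simp <;> linarith
  have hSb : ∀ ω, |S ω| ≤ L := by
    intro ω
    calc |S ω| ≤ ∑ l ∈ Finset.Icc 1 L,
        |(if Y l ω = η then (1:ℝ) else 0) * ((if δ l ω = ν then (1:ℝ) else 0) - p)| :=
          Finset.abs_sum_le_sum_abs _ _
      _ ≤ ∑ l ∈ Finset.Icc 1 L, (1:ℝ) := Finset.sum_le_sum (fun l _ => hXb l ω)
      _ = ((Finset.Icc 1 L).card : ℝ) := by simp
      _ ≤ L := by rw [Nat.card_Icc]; simp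
  have hkey : ∀ lam : ℝ, ∫ ω, Real.exp (lam * S ω) ∂μ ≤ Real.exp (L * lam ^ 2 / 2) :=
    fun lam => mgf_key μ p hp0 hp1 δ Y ν η hmeasδ hmeasY (fun l hl => hdist l hl ν) hindep lam L
  have hL0 : (0:ℝ) < L := by
    have : (1:ℝ) ≤ (L:ℝ) := by exact_mod_cast hL
    linarith
  have hexp_int : ∀ lam : ℝ, Integrable (fun ω => Real.exp (lam * S ω)) μ := by
    intro lam
    apply integrable_of_bdd μ (Real.exp (|lam| * L)) (measurable_const.mul hSm).exp
    intro ω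
    rw [abs_of_pos (Real.exp_pos _)]
    apply Real.exp_le_exp.2
    calc lam * S ω ≤ |lam * S ω| := le_abs_self _
      _ = |lam| * |S ω| := abs_mul _ _
      _ ≤ |lam| * L := mul_le_mul_of_nonneg_left (hSb ω) (abs_nonneg lam)
  have hcherS : μ {ω | (L:ℝ) * t ≤ S ω} ≤ ENNReal.ofReal (Real.exp (-(L:ℝ) * t ^ 2 / 2)) := by
    have h := measure_ge_le_exp_mul_mgf (μ := μ) (X := S) ((L:ℝ) * t) ht.le (hexp_int t)
    have hmgf : mgf S μ t ≤ Real.exp ((L:ℝ) * t ^ 2 / 2) := hkey t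
    have hb : (μ {ω | (L:ℝ) * t ≤ S ω}).toReal ≤ Real.exp (-(L:ℝ) * t ^ 2 / 2) := by
      calc (μ {ω | (L:ℝ) * t ≤ S ω}).toReal
          ≤ Real.exp (-t * ((L:ℝ) * t)) * mgf S μ t := h
        _ ≤ Real.exp (-t * ((L:ℝ) * t)) * Real.exp ((L:ℝ) * t ^ 2 / 2) :=
            mul_le_mul_of_nonneg_left hmgf (Real.exp_pos _).le
        _ = Real.exp (-(L:ℝ) * t ^ 2 / 2) := by rw [← Real.exp_add]; congr 1; ring
    calc μ {ω | (L:ℝ) * t ≤ S ω}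
        = ENNReal.ofReal ((μ {ω | (L:ℝ) * t ≤ S ω}).toReal) :=
          (ENNReal.ofReal_toReal (measure_ne_top μ _)).symm
      _ ≤ _ := ENNReal.ofReal_le_ofReal hb
  have hcherNS : μ {ω | (L:ℝ) * t ≤ -S ω} ≤ ENNReal.ofReal (Real.exp (-(L:ℝ) * t ^ 2 / 2)) := by
    have hfun : (fun ω => Real.exp (t * -S ω)) = fun ω => Real.exp (-t * S ω) := by
      funext ω; congr 1; ring
    have hint' : Integrable (fun ω => Real.exp (t * -S ω)) μ := by
      rw [hfun]; exact hexp_int (-t)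
    have h := measure_ge_le_exp_mul_mgf (μ := μ) (X := fun ω => -S ω) ((L:ℝ) * t) ht.le hint'
    have hmgf : mgf (fun ω => -S ω) μ t ≤ Real.exp ((L:ℝ) * t ^ 2 / 2) := by
      have h1 := hkey (-t)
      have h2 : mgf (fun ω => -S ω) μ t = ∫ ω, Real.exp (t * -S ω) ∂μ := rfl
      rw [h2, hfun]
      calc ∫ ω, Real.exp (-t * S ω) ∂μ ≤ Real.exp ((L:ℝ) * (-t) ^ 2 / 2) := h1
        _ = Real.exp ((L:ℝ) * t ^ 2 / 2) := by congr 1; ring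
    have hb : (μ {ω | (L:ℝ) * t ≤ -S ω}).toReal ≤ Real.exp (-(L:ℝ) * t ^ 2 / 2) := by
      calc (μ {ω | (L:ℝ) * t ≤ -S ω}).toReal
          ≤ Real.exp (-t * ((L:ℝ) * t)) * mgf (fun ω => -S ω) μ t := h
        _ ≤ Real.exp (-t * ((L:ℝ) * t)) * Real.exp ((L:ℝ) * t ^ 2 / 2) :=
            mul_le_mul_of_nonneg_left hmgf (Real.exp_pos _).le
        _ = Real.exp (-(L:ℝ) * t ^ 2 / 2) := by rw [← Real.exp_add]; congr 1; ring
    calc μ {ω | (L:ℝ) * t ≤ -S ω}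
        = ENNReal.ofReal ((μ {ω | (L:ℝ) * t ≤ -S ω}).toReal) :=
          (ENNReal.ofReal_toReal (measure_ne_top μ _)).symm
      _ ≤ _ := ENNReal.ofReal_le_ofReal hb
  have hsub : {ω | t ≤
        |((1 / (L : ℝ)) * ∑ l ∈ Finset.Icc 1 L,
            (if δ l ω = ν ∧ Y l ω = η then (1 : ℝ) else 0))
          - p * ((1 / (L : ℝ)) * ∑ l ∈ Finset.Icc 1 L,
              (if Y l ω = η then (1 : ℝ) else 0))|}
      ⊆ {ω | (L:ℝ) * t ≤ S ω} ∪ {ω | (L:ℝ) * t ≤ -S ω} := by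
    intro ω hω
    simp only [Set.mem_setOf_eq] at hω
    have h1 : S ω = (∑ l ∈ Finset.Icc 1 L, (if δ l ω = ν ∧ Y l ω = η then (1:ℝ) else 0))
        - p * ∑ l ∈ Finset.Icc 1 L, (if Y l ω = η then (1:ℝ) else 0) := by
      simp only [hSdef]
      rw [Finset.mul_sum, ← Finset.sum_sub_distrib]
      refine Finset.sum_congr rfl fun l _ => ?_
      by_cases hY' : Y l ω = η <;> by_cases hδ' : δ l ω = ν <;> simp [hY', hδ'] <;> ring
    have hEq : ((1 / (L : ℝ)) * ∑ l ∈ Finset.Icc 1 L,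
            (if δ l ω = ν ∧ Y l ω = η then (1 : ℝ) else 0))
          - p * ((1 / (L : ℝ)) * ∑ l ∈ Finset.Icc 1 L,
              (if Y l ω = η then (1 : ℝ) else 0)) = (1 / (L:ℝ)) * S ω := by
      rw [h1]; ring
    rw [hEq, abs_mul, abs_of_pos (by positivity : (0:ℝ) < 1 / (L:ℝ))] at hω
    have h2 : (L:ℝ) * t ≤ |S ω| := by
      calc (L:ℝ) * t ≤ (L:ℝ) * (1 / (L:ℝ) * |S ω|) :=
            mul_le_mul_of_nonneg_left hω hL0.le
        _ = |S ω| := by field_simp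
    rcases le_abs.mp h2 with h | h
    · exact Or.inl h
    · exact Or.inr h
  calc μ {ω | t ≤
        |((1 / (L : ℝ)) * ∑ l ∈ Finset.Icc 1 L,
            (if δ l ω = ν ∧ Y l ω = η then (1 : ℝ) else 0))
          - p * ((1 / (L : ℝ)) * ∑ l ∈ Finset.Icc 1 L,
              (if Y l ω = η then (1 : ℝ) else 0))|}
      ≤ μ ({ω | (L:ℝ) * t ≤ S ω} ∪ {ω | (L:ℝ) * t ≤ -S ω}) := measure_mono hsub
    _ ≤ μ {ω | (L:ℝ) * t ≤ S ω} + μ {ω | (L:ℝ) * t ≤ -S ω} := measure_union_le _ _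
    _ ≤ ENNReal.ofReal (Real.exp (-(L:ℝ) * t ^ 2 / 2))
        + ENNReal.ofReal (Real.exp (-(L:ℝ) * t ^ 2 / 2)) := add_le_add hcherS hcherNS
    _ = ENNReal.ofReal (2 * Real.exp (-(L : ℝ) * t ^ 2 / 2)) := by
        rw [← ENNReal.ofReal_add (Real.exp_pos _).le (Real.exp_pos _).le]
        congr 1
        ring
end

section
/- If γ > 0 and the threshold sequence satisfies r(l) ≥ √(2·ln(2 l^{1+γ})/l) for every l ≥ 1, then almost surely the event { ∃ (ν,η) ∈ Δ × E, |h_{ν,η}(l)| ≥ r(l) } occurs for only finitely many l, where h_{ν,η}(l) := (1/l)·∑_{k=1}^{l} 1{δ(k)=ν and Y(k)=η} − θ(ν)·(1/l)·∑_{k=1}^{l} 1{Y(k)=η}. (In words: a truthfully reporting load triggers the cross-correlation penalty test on at most finitely many days almost surely, regardless of the other loads' adapted reporting behavior.) -/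
open MeasureTheory ProbabilityTheory Filter
open scoped Classical ENNReal

section AuxLemmas

variable {Ω : Type*} [MeasurableSpace Ω] {μ : Measure Ω} [IsProbabilityMeasure μ]

lemma aux_integrable_of_bdd {f : Ω → ℝ} (hf : Measurable f) (C : ℝ)
    (h : ∀ ω, ‖f ω‖ ≤ C) : Integrable f μ :=
  (integrable_const C).mono' hf.aestronglyMeasurable (Filter.Eventually.of_forall h)

lemma aux_exp_convex {x : ℝ} (t : ℝ) (h1 : -1 ≤ x) (h2 : x ≤ 1) :
    Real.exp (t * x) ≤ (Real.exp t + Real.exp (-t)) / 2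
      + x * ((Real.exp t - Real.exp (-t)) / 2) := by
  have key := convexOn_exp.2 (Set.mem_univ t) (Set.mem_univ (-t))
    (show (0:ℝ) ≤ (1 + x) / 2 by linarith) (show (0:ℝ) ≤ (1 - x) / 2 by linarith)
    (show (1 + x) / 2 + (1 - x) / 2 = 1 by ring)
  simp only [smul_eq_mul] at key
  have heq : (1 + x) / 2 * t + (1 - x) / 2 * (-t) = t * x := by ring
  rw [heq] at key
  refine key.trans_eq ?_
  ring

/-- MGF bound for the conditionally centered bounded increments. -/
lemma aux_mgf {Ω : Type*} [MeasurableSpace Ω] (μ : Measure Ω) [IsProbabilityMeasure μ]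
    {Δ : Type*} [Fintype Δ] [MeasurableSpace Δ] [MeasurableSingletonClass Δ]
    {E : Type*} [Fintype E] [MeasurableSpace E] [MeasurableSingletonClass E]
    (θ : Δ → ℝ) (hθ0 : ∀ ν, 0 ≤ θ ν) (hθ1 : ∑ ν : Δ, θ ν = 1)
    (δ : ℕ → Ω → Δ) (Y : ℕ → Ω → E)
    (hmeasδ : ∀ l, Measurable (δ l)) (hmeasY : ∀ l, Measurable (Y l))
    (hdist : ∀ l, 1 ≤ l → ∀ ν : Δ, μ {ω | δ l ω = ν} = ENNReal.ofReal (θ ν))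
    (hindep : ∀ l : ℕ, 1 ≤ l →
      Indep (MeasurableSpace.comap (δ l) inferInstance)
        ((⨆ k ∈ Set.Ico 1 l, MeasurableSpace.comap (δ k) inferInstance) ⊔
          (⨆ k ∈ Set.Icc 1 l, MeasurableSpace.comap (Y k) inferInstance)) μ)
    (g : Δ → E → ℝ) (hg1 : ∀ d e, |g d e| ≤ 1) (hg0 : ∀ e, ∑ d : Δ, θ d * g d e = 0)
    (t : ℝ) (l : ℕ) :
    ∫ ω, ∏ k ∈ Finset.Icc 1 l, Real.exp (t * g (δ k ω) (Y k ω)) ∂μ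
      ≤ ((Real.exp t + Real.exp (-t)) / 2) ^ l := by
  set c : ℝ := (Real.exp t + Real.exp (-t)) / 2 with hc
  have hc0 : 0 < c := by positivity
  -- basic measurability of each factor
  have hgm : ∀ k : ℕ, Measurable fun ω => g (δ k ω) (Y k ω) := by
    intro k
    exact (measurable_of_countable (fun p : Δ × E => g p.1 p.2)).comp
      ((hmeasδ k).prodMk (hmeasY k))
  have hfmeas : ∀ k : ℕ, Measurable fun ω => Real.exp (t * g (δ k ω) (Y k ω)) :=
    fun k => Real.measurable_exp.comp (measurable_const.mul (hgm k))
  have hfb : ∀ k ω, Real.exp (t * g (δ k ω) (Y k ω)) ≤ Real.exp |t| := by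
    intro k ω
    refine Real.exp_le_exp.mpr ?_
    calc t * g (δ k ω) (Y k ω) ≤ |t * g (δ k ω) (Y k ω)| := le_abs_self _
      _ = |t| * |g (δ k ω) (Y k ω)| := abs_mul _ _
      _ ≤ |t| * 1 := by
          exact mul_le_mul_of_nonneg_left (hg1 _ _) (abs_nonneg t)
      _ = |t| := mul_one _
  induction l with
  | zero => simp
  | succ l ih =>
    set F : Ω → ℝ := fun ω => ∏ k ∈ Finset.Icc 1 l, Real.exp (t * g (δ k ω) (Y k ω)) with hF
    have hF0 : ∀ ω, 0 ≤ F ω := fun ω =>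
      Finset.prod_nonneg fun k _ => (Real.exp_pos _).le
    have hFb : ∀ ω, F ω ≤ Real.exp |t| ^ l := by
      intro ω
      calc F ω ≤ ∏ _k ∈ Finset.Icc 1 l, Real.exp |t| :=
            Finset.prod_le_prod (fun k _ => (Real.exp_pos _).le) (fun k _ => hfb k ω)
        _ = Real.exp |t| ^ l := by rw [Finset.prod_const, Nat.card_Icc]; norm_num
  -- ambient measurability of F
    have hFmeas : Measurable F := Finset.measurable_prod _ fun k _ => hfmeas k
    have hFint : Integrable F μ := by
      refine aux_integrable_of_bdd hFmeas (Real.exp |t| ^ l) fun ω => ?_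
      rw [Real.norm_eq_abs, abs_of_nonneg (hF0 ω)]
      exact hFb ω
    have hsetd : ∀ d : Δ, MeasurableSet {ω | δ (l + 1) ω = d} := by
      intro d
      have heq : {ω | δ (l + 1) ω = d} = δ (l + 1) ⁻¹' {d} := by
        ext ω; simp
      rw [heq]
      exact (hmeasδ (l + 1)) (measurableSet_singleton d)
    set X : Δ → Ω → ℝ := fun d ω => if δ (l + 1) ω = d then (1 : ℝ) else 0 with hX
    set Z : Δ → Ω → ℝ := fun d ω => F ω * Real.exp (t * g d (Y (l + 1) ω)) with hZ
    have hXmeas : ∀ d, Measurable (X d) := fun d =>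
      Measurable.ite (hsetd d) measurable_const measurable_const
    have hXint : ∀ d, Integrable (X d) μ := by
      intro d
      refine aux_integrable_of_bdd (hXmeas d) 1 fun ω => ?_
      simp only [hX, Real.norm_eq_abs]
      split <;> norm_num
    have hZmeas : ∀ d, Measurable (Z d) := fun d =>
      hFmeas.mul (Real.measurable_exp.comp (measurable_const.mul
        ((measurable_of_countable (g d)).comp (hmeasY (l + 1)))))
    have hZb : ∀ d ω, ‖Z d ω‖ ≤ Real.exp |t| ^ l * Real.exp |t| := by
      intro d ω
      rw [Real.norm_eq_abs, hZ, abs_mul, abs_of_nonneg (hF0 ω), abs_of_nonneg (Real.exp_pos _).le]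
      refine mul_le_mul (hFb ω) ?_ (Real.exp_pos _).le (by positivity)
      have : t * g d (Y (l + 1) ω) ≤ |t| := by
        calc t * g d (Y (l + 1) ω) ≤ |t * g d (Y (l + 1) ω)| := le_abs_self _
          _ = |t| * |g d (Y (l + 1) ω)| := abs_mul _ _
          _ ≤ |t| * 1 := mul_le_mul_of_nonneg_left (hg1 _ _) (abs_nonneg t)
          _ = |t| := mul_one _
      exact Real.exp_le_exp.mpr this
    have hZint : ∀ d, Integrable (Z d) μ := fun d =>
      aux_integrable_of_bdd (hZmeas d) _ (hZb d)
    have hXZint : ∀ d, Integrable (fun ω => X d ω * Z d ω) μ := by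
      intro d
      refine aux_integrable_of_bdd ((hXmeas d).mul (hZmeas d)) (Real.exp |t| ^ l * Real.exp |t|)
        fun ω => ?_
      rw [Real.norm_eq_abs, abs_mul]
      have h1 : |X d ω| ≤ 1 := by simp only [hX]; split <;> norm_num
      calc |X d ω| * |Z d ω| ≤ 1 * ‖Z d ω‖ := by
            rw [Real.norm_eq_abs]
            exact mul_le_mul_of_nonneg_right h1 (abs_nonneg _)
        _ = ‖Z d ω‖ := one_mul _
        _ ≤ _ := hZb d ω
    have hindepFun : ∀ d, IndepFun (X d) (Z d) μ := by
      intro d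
      have h := hindep (l + 1) (Nat.le_add_left 1 l)
      set G : MeasurableSpace Ω :=
        (⨆ k ∈ Set.Ico 1 (l + 1), MeasurableSpace.comap (δ k) inferInstance) ⊔
          (⨆ k ∈ Set.Icc 1 (l + 1), MeasurableSpace.comap (Y k) inferInstance) with hG
      have hδG : ∀ k, 1 ≤ k → k ≤ l → @Measurable Ω Δ G _ (δ k) := by
        intro k hk1 hk2
        rw [measurable_iff_comap_le]
        refine le_trans ?_ le_sup_left
        exact le_biSup (fun k => MeasurableSpace.comap (δ k) inferInstance)
          (Set.mem_Ico.mpr ⟨hk1, Nat.lt_succ_of_le hk2⟩)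
      have hYG : ∀ k, 1 ≤ k → k ≤ l + 1 → @Measurable Ω E G _ (Y k) := by
        intro k hk1 hk2
        rw [measurable_iff_comap_le]
        refine le_trans ?_ le_sup_right
        exact le_biSup (fun k => MeasurableSpace.comap (Y k) inferInstance)
          (Set.mem_Icc.mpr ⟨hk1, hk2⟩)
      have hFG : @Measurable Ω ℝ G _ F := by
        rw [hF]
        refine Finset.measurable_prod _ fun k hk => ?_
        rw [Finset.mem_Icc] at hk
        exact Real.measurable_exp.comp (Measurable.mul measurable_const
          ((measurable_of_countable (fun p : Δ × E => g p.1 p.2)).comp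
            (Measurable.prodMk (hδG k hk.1 hk.2) (hYG k hk.1 (le_trans hk.2 (Nat.le_succ l))))))
      have hZG : @Measurable Ω ℝ G _ (Z d) := by
        rw [hZ]
        exact hFG.mul (Real.measurable_exp.comp (Measurable.mul measurable_const
          ((measurable_of_countable (g d)).comp (hYG (l + 1) (Nat.le_add_left 1 l) le_rfl))))
      have h1 : MeasurableSpace.comap (X d) inferInstance ≤
          MeasurableSpace.comap (δ (l + 1)) inferInstance := by
        have hXeq : X d = (fun x : Δ => if x = d then (1 : ℝ) else 0) ∘ (δ (l + 1)) := rfl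
        rw [hXeq, ← MeasurableSpace.comap_comp]
        exact MeasurableSpace.comap_mono
          (measurable_iff_comap_le.mp (measurable_of_countable _))
      have h2 : MeasurableSpace.comap (Z d) inferInstance ≤ G :=
        measurable_iff_comap_le.mp hZG
      exact indep_of_indep_of_le_right (indep_of_indep_of_le_left h h1) h2
    have hXval : ∀ d, ∫ ω, X d ω ∂μ = θ d := by
      intro d
      have heq : (fun ω => X d ω) =
          Set.indicator {ω | δ (l + 1) ω = d} (fun _ => (1 : ℝ)) := by
        funext ω
        simp [hX, Set.indicator_apply, Set.mem_setOf_eq]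
      rw [heq, integral_indicator_const (1 : ℝ) (hsetd d), measureReal_def,
        hdist (l + 1) (Nat.le_add_left 1 l) d, smul_eq_mul, mul_one,
        ENNReal.toReal_ofReal (hθ0 d)]
    have hprodsplit : ∀ ω, ∏ k ∈ Finset.Icc 1 (l + 1), Real.exp (t * g (δ k ω) (Y k ω)) =
        F ω * Real.exp (t * g (δ (l + 1) ω) (Y (l + 1) ω)) := by
      intro ω
      exact Finset.prod_Icc_succ_top (Nat.le_add_left 1 l) _
    calc ∫ ω, ∏ k ∈ Finset.Icc 1 (l + 1), Real.exp (t * g (δ k ω) (Y k ω)) ∂μ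
        = ∫ ω, ∑ d : Δ, X d ω * Z d ω ∂μ := by
          refine integral_congr_ae (Filter.Eventually.of_forall fun ω => ?_)
          show (∏ k ∈ Finset.Icc 1 (l + 1), Real.exp (t * g (δ k ω) (Y k ω))) =
            ∑ d : Δ, X d ω * Z d ω
          rw [hprodsplit ω]
          rw [Finset.sum_eq_single (δ (l + 1) ω) (fun d _ hd => by
              simp only [hX, hZ]
              rw [if_neg (Ne.symm hd), zero_mul])
            (fun h => absurd (Finset.mem_univ _) h)]
          simp [hX, hZ]
      _ = ∑ d : Δ, ∫ ω, X d ω * Z d ω ∂μ := integral_finset_sum _ fun d _ => hXZint d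
      _ = ∑ d : Δ, (∫ ω, X d ω ∂μ) * ∫ ω, Z d ω ∂μ := by
          refine Finset.sum_congr rfl fun d _ => ?_
          exact (hindepFun d).integral_mul_eq_mul_integral (hXint d).aestronglyMeasurable (hZint d).aestronglyMeasurable
      _ = ∑ d : Δ, ∫ ω, θ d * Z d ω ∂μ := by
          refine Finset.sum_congr rfl fun d _ => ?_
          rw [hXval d, integral_const_mul]
      _ = ∫ ω, ∑ d : Δ, θ d * Z d ω ∂μ :=
          (integral_finset_sum _ fun d _ => (hZint d).const_mul (θ d)).symm
      _ ≤ ∫ ω, F ω * c ∂μ := by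
          refine integral_mono (integrable_finset_sum _ fun d _ => (hZint d).const_mul (θ d))
            (hFint.mul_const c) fun ω => ?_
          have hsum : ∑ d : Δ, θ d * Z d ω =
              F ω * ∑ d : Δ, θ d * Real.exp (t * g d (Y (l + 1) ω)) := by
            rw [Finset.mul_sum]
            refine Finset.sum_congr rfl fun d _ => ?_
            simp only [hZ]
            ring
          rw [hsum]
          refine mul_le_mul_of_nonneg_left ?_ (hF0 ω)
          set e := Y (l + 1) ω
          set s : ℝ := (Real.exp t - Real.exp (-t)) / 2 with hs
          calc ∑ d : Δ, θ d * Real.exp (t * g d e)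
              ≤ ∑ d : Δ, θ d * (c + g d e * s) := by
                refine Finset.sum_le_sum fun d _ => ?_
                refine mul_le_mul_of_nonneg_left ?_ (hθ0 d)
                exact aux_exp_convex t (abs_le.mp (hg1 d e)).1 (abs_le.mp (hg1 d e)).2
            _ = (∑ d : Δ, θ d) * c + (∑ d : Δ, θ d * g d e) * s := by
                rw [Finset.sum_mul, Finset.sum_mul, ← Finset.sum_add_distrib]
                exact Finset.sum_congr rfl fun d _ => by ring
            _ = c := by rw [hθ1, hg0 e, one_mul, zero_mul, add_zero]
      _ = c * ∫ ω, F ω ∂μ := by rw [integral_mul_const]; ring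
      _ ≤ c * c ^ l := mul_le_mul_of_nonneg_left ih hc0.le
      _ = c ^ (l + 1) := by ring

end AuxLemmas

/-- In the setting of a truthful load with types `δ l ∼ θ` such that, for each
`l ≥ 1`, `δ l` is independent of the σ-algebra generated by `δ 1, …, δ (l−1), Y 1, …, Y l`
(where `Y l` are the other loads' adapted reports), if `γ > 0` and the thresholds satisfy
`r(l) ≥ √(2 ln(2 l^{1+γ})/l)` for every `l ≥ 1`, then almost surely the event
`{∃ (ν,η), |h_{ν,η}(l)| ≥ r(l)}` occurs for only finitely many `l ≥ 1`, where
`h_{ν,η}(l) = (1/l) ∑_{k=1}^l 1{δ(k)=ν ∧ Y(k)=η} − θ(ν) · (1/l) ∑_{k=1}^l 1{Y(k)=η}`. -/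
theorem stmt_5
    {Ω : Type*} [MeasurableSpace Ω] (μ : Measure Ω) [IsProbabilityMeasure μ]
    {Δ : Type*} [Fintype Δ] [Nonempty Δ] [MeasurableSpace Δ] [MeasurableSingletonClass Δ]
    {E : Type*} [Fintype E] [Nonempty E] [MeasurableSpace E] [MeasurableSingletonClass E]
    (θ : Δ → ℝ) (hθ0 : ∀ ν, 0 ≤ θ ν) (hθ1 : ∑ ν : Δ, θ ν = 1)
    (δ : ℕ → Ω → Δ) (Y : ℕ → Ω → E)
    (hmeasδ : ∀ l, Measurable (δ l)) (hmeasY : ∀ l, Measurable (Y l))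
    (hdist : ∀ l, 1 ≤ l → ∀ ν : Δ, μ {ω | δ l ω = ν} = ENNReal.ofReal (θ ν))
    (hindep : ∀ l : ℕ, 1 ≤ l →
      Indep (MeasurableSpace.comap (δ l) inferInstance)
        ((⨆ k ∈ Set.Ico 1 l, MeasurableSpace.comap (δ k) inferInstance) ⊔
          (⨆ k ∈ Set.Icc 1 l, MeasurableSpace.comap (Y k) inferInstance)) μ)
    (γ : ℝ) (hγ : 0 < γ)
    (r : ℕ → ℝ)
    (hr : ∀ l : ℕ, 1 ≤ l →
      Real.sqrt (2 * Real.log (2 * (l : ℝ) ^ (1 + γ)) / (l : ℝ)) ≤ r l) :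
    ∀ᵐ ω ∂μ, {l : ℕ | 1 ≤ l ∧ ∃ (ν : Δ) (η : E), r l ≤
      |((1 / (l : ℝ)) * ∑ k ∈ Finset.Icc 1 l,
          (if δ k ω = ν ∧ Y k ω = η then (1 : ℝ) else 0))
        - θ ν * ((1 / (l : ℝ)) * ∑ k ∈ Finset.Icc 1 l,
            (if Y k ω = η then (1 : ℝ) else 0))|}.Finite := by
  classical
  have hθle1 : ∀ ν, θ ν ≤ 1 := by
    intro ν
    rw [← hθ1]
    exact Finset.single_le_sum (fun i _ => hθ0 i) (Finset.mem_univ ν)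
  -- the centered increment function
  set g : Δ → E → Δ → E → ℝ := fun ν η d e =>
    (if d = ν ∧ e = η then (1 : ℝ) else 0) - θ ν * (if e = η then (1 : ℝ) else 0) with hgdef
  have hg1 : ∀ ν η d e, |g ν η d e| ≤ 1 := by
    intro ν η d e
    have h1 : (0:ℝ) ≤ (if d = ν ∧ e = η then (1:ℝ) else 0) ∧
        (if d = ν ∧ e = η then (1:ℝ) else 0) ≤ 1 := by split <;> norm_num
    have h2 : (0:ℝ) ≤ (if e = η then (1:ℝ) else 0) ∧ (if e = η then (1:ℝ) else 0) ≤ 1 := by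
      split <;> norm_num
    have hm0 : 0 ≤ θ ν * (if e = η then (1:ℝ) else 0) := mul_nonneg (hθ0 ν) h2.1
    have hm1 : θ ν * (if e = η then (1:ℝ) else 0) ≤ 1 := by
      nlinarith [mul_le_mul (hθle1 ν) h2.2 h2.1 (zero_le_one' ℝ)]
    rw [abs_le]
    simp only [hgdef]
    constructor
    · linarith [h1.1, h1.2]
    · linarith [h1.1, h1.2]
  have hg0 : ∀ ν η e, ∑ d : Δ, θ d * g ν η d e = 0 := by
    intro ν η e
    by_cases he : e = η
    · simp only [hgdef, he, and_true, if_true, mul_sub, mul_one]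
      rw [Finset.sum_sub_distrib]
      have ha : ∑ d : Δ, θ d * (if d = ν then (1:ℝ) else 0) = θ ν := by
        simp [mul_ite]
      have hb : ∑ d : Δ, θ d * θ ν = θ ν := by
        rw [← Finset.sum_mul, hθ1, one_mul]
      rw [ha, hb, sub_self]
    · simp [hgdef, he]
  -- the partial sums
  set S : Δ → E → ℕ → Ω → ℝ := fun ν η l ω =>
    ∑ k ∈ Finset.Icc 1 l, g ν η (δ k ω) (Y k ω) with hSdef
  -- tail bound for each (ν, η) and l ≥ 1
  have htail : ∀ (ν : Δ) (η : E) (l : ℕ), 1 ≤ l →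
      μ {ω | (l : ℝ) * r l ≤ |S ν η l ω|} ≤ ENNReal.ofReal (((l : ℝ) ^ (1 + γ))⁻¹) := by
    intro ν η l hl
    have hlpos : (0:ℝ) < l := by exact_mod_cast hl
    have hbase : (1:ℝ) ≤ (l:ℝ) ^ (1 + γ) := by
      calc (1:ℝ) = (1:ℝ) ^ (1 + γ) := (Real.one_rpow _).symm
        _ ≤ (l:ℝ) ^ (1 + γ) := by
            refine Real.rpow_le_rpow zero_le_one ?_ (by linarith)
            exact_mod_cast hl
    have hlogpos : 0 ≤ Real.log (2 * (l:ℝ) ^ (1 + γ)) := Real.log_nonneg (by linarith)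
    set t : ℝ := r l with htdef
    have ht0 : 0 ≤ t := le_trans (Real.sqrt_nonneg _) (hr l hl)
    have ht2 : 2 * Real.log (2 * (l:ℝ) ^ (1 + γ)) / l ≤ t ^ 2 := by
      have hx0 : 0 ≤ 2 * Real.log (2 * (l:ℝ) ^ (1 + γ)) / l := by positivity
      calc 2 * Real.log (2 * (l:ℝ) ^ (1 + γ)) / l
          = Real.sqrt (2 * Real.log (2 * (l:ℝ) ^ (1 + γ)) / l) ^ 2 :=
            (Real.sq_sqrt hx0).symm
        _ ≤ t ^ 2 := pow_le_pow_left₀ (Real.sqrt_nonneg _) (hr l hl) 2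
    have hlog2 : Real.log (2 * (l:ℝ) ^ (1 + γ)) ≤ (l:ℝ) * t ^ 2 / 2 := by
      rw [div_le_iff₀ hlpos] at ht2
      nlinarith
    -- one-sided Chernoff bound
    have hmain : ∀ gg : Δ → E → ℝ, (∀ d e, |gg d e| ≤ 1) → (∀ e, ∑ d : Δ, θ d * gg d e = 0) →
        (μ {ω | (l : ℝ) * t ≤ ∑ k ∈ Finset.Icc 1 l, gg (δ k ω) (Y k ω)}).toReal ≤
          Real.exp (-((l:ℝ) * t ^ 2) / 2) := by
      intro gg hgg1 hgg0
      set T : Ω → ℝ := fun ω => ∑ k ∈ Finset.Icc 1 l, gg (δ k ω) (Y k ω) with hT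
      set f : Ω → ℝ := fun ω => Real.exp (t * T ω) with hf
      have hTmeas : Measurable T :=
        Finset.measurable_sum _ fun k _ =>
          (measurable_of_countable (fun p : Δ × E => gg p.1 p.2)).comp
            ((hmeasδ k).prodMk (hmeasY k))
      have hTb : ∀ ω, |T ω| ≤ l := by
        intro ω
        calc |T ω| ≤ ∑ k ∈ Finset.Icc 1 l, |gg (δ k ω) (Y k ω)| :=
              Finset.abs_sum_le_sum_abs _ _
          _ ≤ ∑ _k ∈ Finset.Icc 1 l, (1:ℝ) :=
              Finset.sum_le_sum fun k _ => hgg1 _ _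
          _ = l := by rw [Finset.sum_const, Nat.card_Icc]; simp
      have hfmeas : Measurable f := Real.measurable_exp.comp (measurable_const.mul hTmeas)
      have hfint : Integrable f μ := by
        refine aux_integrable_of_bdd hfmeas (Real.exp (|t| * l)) fun ω => ?_
        rw [Real.norm_eq_abs, abs_of_nonneg (Real.exp_pos _).le]
        refine Real.exp_le_exp.mpr ?_
        calc t * T ω ≤ |t * T ω| := le_abs_self _
          _ = |t| * |T ω| := abs_mul _ _
          _ ≤ |t| * l := mul_le_mul_of_nonneg_left (hTb ω) (abs_nonneg t)
      have hmgf : ∫ ω, f ω ∂μ ≤ ((Real.exp t + Real.exp (-t)) / 2) ^ l := by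
        have heq : ∀ ω, f ω = ∏ k ∈ Finset.Icc 1 l, Real.exp (t * gg (δ k ω) (Y k ω)) := by
          intro ω
          rw [hf]
          simp only [hT]
          rw [Finset.mul_sum, Real.exp_sum]
        calc ∫ ω, f ω ∂μ = ∫ ω, ∏ k ∈ Finset.Icc 1 l,
              Real.exp (t * gg (δ k ω) (Y k ω)) ∂μ :=
            integral_congr_ae (Filter.Eventually.of_forall heq)
          _ ≤ _ := aux_mgf μ θ hθ0 hθ1 δ Y hmeasδ hmeasY hdist hindep gg hgg1 hgg0 t l
      have hmark := mul_meas_ge_le_integral_of_nonneg (μ := μ) (f := f)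
        (Filter.Eventually.of_forall fun ω => (Real.exp_pos _).le) hfint
        (Real.exp (t * ((l:ℝ) * t)))
      have hsub : μ {ω | (l : ℝ) * t ≤ T ω} ≤ μ {x | Real.exp (t * ((l:ℝ) * t)) ≤ f x} := by
        refine measure_mono fun ω h => ?_
        exact Real.exp_le_exp.mpr (mul_le_mul_of_nonneg_left h ht0)
      have hcosh : ((Real.exp t + Real.exp (-t)) / 2) ^ l ≤ Real.exp ((l:ℝ) * (t ^ 2 / 2)) := by
        calc ((Real.exp t + Real.exp (-t)) / 2) ^ l = Real.cosh t ^ l := by rw [Real.cosh_eq]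
          _ ≤ Real.exp (t ^ 2 / 2) ^ l :=
              pow_le_pow_left₀ (Real.cosh_pos t).le (Real.cosh_le_exp_half_sq t) l
          _ = Real.exp ((l:ℝ) * (t ^ 2 / 2)) := by rw [← Real.exp_nat_mul]
      have hε : (0:ℝ) < Real.exp (t * ((l:ℝ) * t)) := Real.exp_pos _
      have hchain : (μ {ω | (l : ℝ) * t ≤ T ω}).toReal ≤
          Real.exp (-(t * ((l:ℝ) * t))) * Real.exp ((l:ℝ) * (t ^ 2 / 2)) := by
        have h1 : (μ {ω | (l : ℝ) * t ≤ T ω}).toReal ≤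
            (μ {x | Real.exp (t * ((l:ℝ) * t)) ≤ f x}).toReal :=
          ENNReal.toReal_mono (measure_ne_top μ _) hsub
        have h2 : (μ {x | Real.exp (t * ((l:ℝ) * t)) ≤ f x}).toReal ≤
            (∫ ω, f ω ∂μ) / Real.exp (t * ((l:ℝ) * t)) := by
          rw [le_div_iff₀ hε]
          calc (μ {x | Real.exp (t * ((l:ℝ) * t)) ≤ f x}).toReal * Real.exp (t * ((l:ℝ) * t))
              = Real.exp (t * ((l:ℝ) * t)) * (μ {x | Real.exp (t * ((l:ℝ) * t)) ≤ f x}).toReal :=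
                mul_comm _ _
            _ ≤ ∫ ω, f ω ∂μ := hmark
        calc (μ {ω | (l : ℝ) * t ≤ T ω}).toReal
            ≤ (∫ ω, f ω ∂μ) / Real.exp (t * ((l:ℝ) * t)) := le_trans h1 h2
          _ ≤ Real.exp ((l:ℝ) * (t ^ 2 / 2)) / Real.exp (t * ((l:ℝ) * t)) := by
              gcongr
              exact le_trans hmgf hcosh
          _ = Real.exp (-(t * ((l:ℝ) * t))) * Real.exp ((l:ℝ) * (t ^ 2 / 2)) := by
              rw [div_eq_mul_inv, ← Real.exp_neg, mul_comm]
      refine le_trans hchain ?_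
      rw [← Real.exp_add]
      refine Real.exp_le_exp.mpr (le_of_eq ?_)
      ring
    have h1 := hmain (g ν η) (hg1 ν η) (hg0 ν η)
    have h2 := hmain (fun d e => -g ν η d e)
      (by intro d e; rw [abs_neg]; exact hg1 ν η d e)
      (by intro e; simp only [mul_neg]; rw [Finset.sum_neg_distrib, hg0 ν η e, neg_zero])
    have hnegsum : ∀ ω, ∑ k ∈ Finset.Icc 1 l, -g ν η (δ k ω) (Y k ω) = -(S ν η l ω) := by
      intro ω
      rw [hSdef]
      exact Finset.sum_neg_distrib (f := fun k => g ν η (δ k ω) (Y k ω))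
    have hsplit : {ω | (l : ℝ) * t ≤ |S ν η l ω|} ⊆
        {ω | (l : ℝ) * t ≤ S ν η l ω} ∪ {ω | (l : ℝ) * t ≤ -(S ν η l ω)} := by
      intro ω h
      rw [Set.mem_setOf_eq] at h
      rcases le_abs.mp h with h' | h'
      · exact Or.inl h'
      · exact Or.inr h'
    have hmeasbound : (μ {ω | (l : ℝ) * t ≤ |S ν η l ω|}).toReal ≤
        2 * Real.exp (-((l:ℝ) * t ^ 2) / 2) := by
      have hA : μ {ω | (l : ℝ) * t ≤ |S ν η l ω|} ≤
          μ {ω | (l : ℝ) * t ≤ S ν η l ω} + μ {ω | (l : ℝ) * t ≤ -(S ν η l ω)} :=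
        le_trans (measure_mono hsplit) (measure_union_le _ _)
      have h2' : (μ {ω | (l : ℝ) * t ≤ -(S ν η l ω)}).toReal ≤
          Real.exp (-((l:ℝ) * t ^ 2) / 2) := by
        have : {ω | (l : ℝ) * t ≤ ∑ k ∈ Finset.Icc 1 l, -g ν η (δ k ω) (Y k ω)} =
            {ω | (l : ℝ) * t ≤ -(S ν η l ω)} := by
          ext ω
          rw [Set.mem_setOf_eq, Set.mem_setOf_eq, hnegsum ω]
        rwa [this] at h2
      calc (μ {ω | (l : ℝ) * t ≤ |S ν η l ω|}).toReal
          ≤ (μ {ω | (l : ℝ) * t ≤ S ν η l ω} + μ {ω | (l : ℝ) * t ≤ -(S ν η l ω)}).toReal :=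
            ENNReal.toReal_mono (by finiteness) hA
        _ ≤ (μ {ω | (l : ℝ) * t ≤ S ν η l ω}).toReal +
              (μ {ω | (l : ℝ) * t ≤ -(S ν η l ω)}).toReal := by
            rw [ENNReal.toReal_add (measure_ne_top μ _) (measure_ne_top μ _)]
        _ ≤ 2 * Real.exp (-((l:ℝ) * t ^ 2) / 2) := by linarith
    have hfinal : (μ {ω | (l : ℝ) * t ≤ |S ν η l ω|}).toReal ≤ ((l : ℝ) ^ (1 + γ))⁻¹ := by
      refine le_trans hmeasbound ?_
      have hexp : Real.exp (-((l:ℝ) * t ^ 2) / 2) ≤ (2 * (l:ℝ) ^ (1 + γ))⁻¹ := by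
        rw [← Real.exp_log (show (0:ℝ) < 2 * (l:ℝ) ^ (1 + γ) by positivity), ← Real.exp_neg]
        refine Real.exp_le_exp.mpr ?_
        rw [neg_div]
        linarith
      calc 2 * Real.exp (-((l:ℝ) * t ^ 2) / 2) ≤ 2 * (2 * (l:ℝ) ^ (1 + γ))⁻¹ := by linarith
        _ = ((l : ℝ) ^ (1 + γ))⁻¹ := by
            rw [mul_inv]
            ring
    rw [← ENNReal.ofReal_toReal (measure_ne_top μ _)]
    exact ENNReal.ofReal_le_ofReal hfinal
  -- the bad events
  set sev : ℕ → Set Ω := fun l =>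
    {ω | 1 ≤ l ∧ ∃ (ν : Δ) (η : E), (l : ℝ) * r l ≤ |S ν η l ω|} with hsev
  have hslbound : ∀ l, μ (sev l) ≤
      ((Fintype.card Δ : ℝ≥0∞) * (Fintype.card E : ℝ≥0∞)) *
        ENNReal.ofReal (((l : ℝ) ^ (1 + γ))⁻¹) := by
    intro l
    by_cases hl : 1 ≤ l
    · have hsub : sev l ⊆ ⋃ ν : Δ, ⋃ η : E, {ω | (l : ℝ) * r l ≤ |S ν η l ω|} := by
        rintro ω ⟨-, ν, η, h⟩
        exact Set.mem_iUnion.mpr ⟨ν, Set.mem_iUnion.mpr ⟨η, h⟩⟩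
      calc μ (sev l) ≤ μ (⋃ ν : Δ, ⋃ η : E, {ω | (l : ℝ) * r l ≤ |S ν η l ω|}) :=
            measure_mono hsub
        _ ≤ ∑ ν : Δ, μ (⋃ η : E, {ω | (l : ℝ) * r l ≤ |S ν η l ω|}) :=
            measure_iUnion_fintype_le μ _
        _ ≤ ∑ ν : Δ, ∑ η : E, μ {ω | (l : ℝ) * r l ≤ |S ν η l ω|} :=
            Finset.sum_le_sum fun ν _ => measure_iUnion_fintype_le μ _
        _ ≤ ∑ _ν : Δ, ∑ _η : E, ENNReal.ofReal (((l : ℝ) ^ (1 + γ))⁻¹) :=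
            Finset.sum_le_sum fun ν _ => Finset.sum_le_sum fun η _ => htail ν η l hl
        _ = ((Fintype.card Δ : ℝ≥0∞) * (Fintype.card E : ℝ≥0∞)) *
              ENNReal.ofReal (((l : ℝ) ^ (1 + γ))⁻¹) := by
            rw [Finset.sum_const, Finset.sum_const]
            simp [Finset.card_univ, mul_assoc, nsmul_eq_mul]
    · have : sev l = ∅ := by
        ext ω
        simp [hsev, hl]
      rw [this, measure_empty]
      exact zero_le ..
  have hsummable : Summable (fun l : ℕ => ((l : ℝ) ^ (1 + γ))⁻¹) := by
    have := Real.summable_one_div_nat_rpow.mpr (show 1 < 1 + γ by linarith)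
    simpa [one_div] using this
  have htsum : (∑' l, μ (sev l)) ≠ ⊤ := by
    refine ne_top_of_le_ne_top ?_ (ENNReal.tsum_le_tsum hslbound)
    rw [ENNReal.tsum_mul_left]
    refine ENNReal.mul_ne_top ?_ ?_
    · exact ENNReal.mul_ne_top (ENNReal.natCast_ne_top _) (ENNReal.natCast_ne_top _)
    · rw [← ENNReal.ofReal_tsum_of_nonneg (fun n => by positivity) hsummable]
      exact ENNReal.ofReal_ne_top
  have hBC := MeasureTheory.ae_eventually_notMem htsum
  filter_upwards [hBC] with ω hω
  obtain ⟨N, hN⟩ := eventually_atTop.mp hω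
  refine Set.Finite.subset (Set.finite_Iio N) ?_
  intro l hl
  by_contra hlN
  have hNl : N ≤ l := le_of_not_gt hlN
  obtain ⟨hl1, ν, η, hle⟩ := hl
  refine hN l hNl ?_
  refine ⟨hl1, ν, η, ?_⟩
  have hlpos : (0:ℝ) < l := by exact_mod_cast hl1
  have hexpr : ((1 / (l : ℝ)) * ∑ k ∈ Finset.Icc 1 l,
      (if δ k ω = ν ∧ Y k ω = η then (1 : ℝ) else 0))
      - θ ν * ((1 / (l : ℝ)) * ∑ k ∈ Finset.Icc 1 l,
        (if Y k ω = η then (1 : ℝ) else 0)) = (1 / (l : ℝ)) * S ν η l ω := by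
    rw [hSdef]
    simp only [hgdef]
    rw [Finset.sum_sub_distrib]
    rw [← Finset.mul_sum]
    ring
  rw [hexpr, abs_mul, abs_of_pos (by positivity : (0:ℝ) < 1 / (l:ℝ))] at hle
  show (l : ℝ) * r l ≤ |S ν η l ω|
  have h := mul_le_mul_of_nonneg_left hle (le_of_lt hlpos)
  rw [← mul_assoc, mul_one_div_cancel (ne_of_gt hlpos), one_mul] at h
  linarith
end

section
/- For every ν ∈ Δ and η ∈ E, the statistic h_{ν,η}(L) := (1/L)·∑_{l=1}^{L} 1{δ(l)=ν and Y(l)=η} − θ(ν)·(1/L)·∑_{l=1}^{L} 1{Y(l)=η} converges to 0 almost surely as L → ∞. -/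
open MeasureTheory ProbabilityTheory Filter
open scoped Classical

lemma aux_sqrt_tendsto : Tendsto (fun n : ℕ => Nat.sqrt n) atTop atTop := by
  apply tendsto_atTop_atTop.2
  intro b
  refine ⟨b * b, fun n hn => ?_⟩
  calc b = Nat.sqrt (b * b) := (Nat.sqrt_eq b).symm
    _ ≤ Nat.sqrt n := Nat.sqrt_le_sqrt hn

lemma aux_kron (u : ℕ → ℝ) (hu : ∀ l, |u l| ≤ 1)
    (h : Tendsto (fun k : ℕ => (∑ l ∈ Finset.Icc 1 (k ^ 2), u l) / ((k : ℝ) ^ 2))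
      atTop (nhds 0)) :
    Tendsto (fun n : ℕ => (∑ l ∈ Finset.Icc 1 n, u l) / (n : ℝ)) atTop (nhds 0) := by
  set S : ℕ → ℝ := fun n => ∑ l ∈ Finset.Icc 1 n, u l with hS
  set T : ℕ → ℝ := fun k => S (k ^ 2) / ((k : ℝ) ^ 2) with hT
  have hdiff : ∀ m n : ℕ, m ≤ n → |S n - S m| ≤ (n : ℝ) - m := by
    intro m n hmn
    have hsplit : S m + ∑ l ∈ Finset.Ioc m n, u l = S n := by
      simp only [hS]
      rw [show ∀ j, Finset.Icc 1 j = Finset.Ioc 0 j from fun j => by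
        rw [← Finset.Icc_add_one_left_eq_Ioc]; rfl]
      exact Finset.sum_Ioc_consecutive _ (Nat.zero_le m) hmn
    have : S n - S m = ∑ l ∈ Finset.Ioc m n, u l := by linarith
    rw [this]
    calc |∑ l ∈ Finset.Ioc m n, u l| ≤ ∑ l ∈ Finset.Ioc m n, |u l| :=
          Finset.abs_sum_le_sum_abs _ _
      _ ≤ ∑ l ∈ Finset.Ioc m n, (1 : ℝ) := Finset.sum_le_sum fun i _ => hu i
      _ = ((n - m : ℕ) : ℝ) := by simp [Nat.card_Ioc]
      _ = (n : ℝ) - m := by push_cast [Nat.cast_sub hmn]; ring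
  have hbound : ∀ n : ℕ, 1 ≤ n →
      |S n / n| ≤ |T (Nat.sqrt n)| + 2 / (Nat.sqrt n : ℝ) := by
    intro n hn
    set k := Nat.sqrt n with hk
    have hk1 : 1 ≤ k := by
      have := Nat.sqrt_pos.2 (by omega : 0 < n)
      omega
    have hk2n : k ^ 2 ≤ n := by nlinarith [Nat.sqrt_le' n]
    have hnk : n ≤ k ^ 2 + 2 * k := by nlinarith [Nat.lt_succ_sqrt' n]
    have hkR : (1 : ℝ) ≤ (k : ℝ) := by exact_mod_cast hk1
    have hk2R : (0 : ℝ) < (k : ℝ) ^ 2 := by positivity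
    have hnR : (0 : ℝ) < (n : ℝ) := by exact_mod_cast hn
    have hk2nR : ((k : ℝ) ^ 2) ≤ (n : ℝ) := by exact_mod_cast hk2n
    have h1 : |S n| ≤ |S (k ^ 2)| + ((n : ℝ) - (k : ℝ) ^ 2) := by
      have hd := hdiff (k ^ 2) n hk2n
      have htri : |S n| ≤ |S (k ^ 2)| + |S n - S (k ^ 2)| := by
        calc |S n| = |S (k ^ 2) + (S n - S (k ^ 2))| := by ring_nf
          _ ≤ |S (k ^ 2)| + |S n - S (k ^ 2)| := abs_add_le _ _
      have hcast : ((k ^ 2 : ℕ) : ℝ) = (k : ℝ) ^ 2 := by push_cast; ring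
      rw [hcast] at hd
      linarith
    have h2 : |S n / n| ≤ (|S (k ^ 2)| + ((n : ℝ) - (k : ℝ) ^ 2)) / n := by
      rw [abs_div, abs_of_pos hnR]
      gcongr
    have h3 : |S (k ^ 2)| / n ≤ |T k| := by
      have : |T k| = |S (k ^ 2)| / (k : ℝ) ^ 2 := by
        rw [hT]; rw [abs_div, abs_of_pos hk2R]
      rw [this]
      exact div_le_div_of_nonneg_left (abs_nonneg _) hk2R hk2nR
    have h4 : ((n : ℝ) - (k : ℝ) ^ 2) / n ≤ 2 / (k : ℝ) := by
      have hnum : (n : ℝ) - (k : ℝ) ^ 2 ≤ 2 * k := by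
        have : (n : ℝ) ≤ (k : ℝ) ^ 2 + 2 * k := by exact_mod_cast hnk
        linarith
      calc ((n : ℝ) - (k : ℝ) ^ 2) / n ≤ 2 * k / (k : ℝ) ^ 2 := by
            apply div_le_div₀ (by positivity) hnum hk2R hk2nR
        _ = 2 / (k : ℝ) := by field_simp
    calc |S n / n| ≤ (|S (k ^ 2)| + ((n : ℝ) - (k : ℝ) ^ 2)) / n := h2
      _ = |S (k ^ 2)| / n + ((n : ℝ) - (k : ℝ) ^ 2) / n := by ring
      _ ≤ |T k| + 2 / (k : ℝ) := add_le_add h3 h4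
  have hgoal0 : Tendsto (fun n : ℕ => |T (Nat.sqrt n)| + 2 / (Nat.sqrt n : ℝ))
      atTop (nhds 0) := by
    have h1 : Tendsto (fun k : ℕ => |T k|) atTop (nhds 0) := by
      have := h.abs
      simpa [hT] using this
    have h2 : Tendsto (fun k : ℕ => 2 / (k : ℝ)) atTop (nhds 0) :=
      tendsto_const_div_atTop_nhds_zero_nat 2
    have := (h1.comp aux_sqrt_tendsto).add (h2.comp aux_sqrt_tendsto)
    simpa using this
  apply squeeze_zero_norm' _ hgoal0
  filter_upwards [eventually_ge_atTop 1] with n hn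
  rw [Real.norm_eq_abs]
  exact hbound n hn

lemma aux_ae {Ω : Type*} [MeasurableSpace Ω] (μ : Measure Ω) (T : ℕ → Ω → ℝ)
    (hmeas : ∀ k, Measurable (T k))
    (hbd : ∀ k, ∫⁻ ω, ENNReal.ofReal ((T k ω) ^ 2) ∂μ ≤ ENNReal.ofReal (1 / ((k : ℝ) ^ 2))) :
    ∀ᵐ ω ∂μ, Tendsto (fun k => T k ω) atTop (nhds 0) := by
  set F : ℕ → Ω → ENNReal := fun k ω => ENNReal.ofReal ((T k ω) ^ 2) with hF
  have hFmeas : ∀ k, Measurable (F k) := fun k =>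
    ENNReal.measurable_ofReal.comp ((hmeas k).pow_const 2)
  have hsummable : Summable (fun k : ℕ => 1 / ((k : ℝ) ^ 2)) := by
    simpa using Real.summable_one_div_nat_pow.2 (by norm_num : 1 < 2)
  have htsum_ne : (∑' k : ℕ, ENNReal.ofReal (1 / ((k : ℝ) ^ 2))) ≠ ⊤ := by
    rw [← ENNReal.ofReal_tsum_of_nonneg (fun k => by positivity) hsummable]
    exact ENNReal.ofReal_ne_top
  have hlint : ∫⁻ ω, (∑' k, F k ω) ∂μ ≠ ⊤ := by
    rw [lintegral_tsum fun k => (hFmeas k).aemeasurable]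
    exact ne_top_of_le_ne_top htsum_ne (ENNReal.tsum_le_tsum hbd)
  have hae : ∀ᵐ ω ∂μ, (∑' k, F k ω) < ⊤ :=
    ae_lt_top (Measurable.ennreal_tsum hFmeas) hlint
  filter_upwards [hae] with ω hω
  have h0 : Tendsto (fun k => F k ω) atTop (nhds 0) :=
    ENNReal.tendsto_atTop_zero_of_tsum_ne_top hω.ne
  have hsq : Tendsto (fun k => (T k ω) ^ 2) atTop (nhds 0) := by
    have := (ENNReal.tendsto_toReal (by simp : (0 : ENNReal) ≠ ⊤)).comp h0
    have heq : (ENNReal.toReal ∘ fun k => F k ω) = fun k => T k ω ^ 2 :=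
      funext fun k => ENNReal.toReal_ofReal (sq_nonneg _)
    rw [heq] at this
    simpa using this
  have habs : Tendsto (fun k => |T k ω|) atTop (nhds 0) := by
    have := (Real.continuous_sqrt.tendsto 0).comp hsq
    have heq : (Real.sqrt ∘ fun k => T k ω ^ 2) = fun k => |T k ω| :=
      funext fun k => Real.sqrt_sq_eq_abs _
    rw [heq] at this
    simpa using this
  exact squeeze_zero_norm (fun k => le_of_eq (Real.norm_eq_abs _)) habs

lemma aux_indepFun {Ω β γ : Type*} {m0 : MeasurableSpace Ω} {μ : Measure Ω}
    {m₁ m₂ : MeasurableSpace Ω} [MeasurableSpace β] [MeasurableSpace γ]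
    {f : Ω → β} {g : Ω → γ} (h : ProbabilityTheory.Indep m₁ m₂ μ)
    (hf : Measurable[m₁] f) (hg : Measurable[m₂] g) :
    ProbabilityTheory.IndepFun f g μ := by
  rw [IndepFun_iff_Indep]
  exact indep_of_indep_of_le_left (indep_of_indep_of_le_right h hg.comap_le) hf.comap_le

/-- With `δ l ∼ θ` and, for each `l ≥ 1`, `δ l` independent of the σ-algebra
generated by `δ 1, …, δ (l−1), Y 1, …, Y l`, for every `ν ∈ Δ` and `η ∈ E` the statistic
`h_{ν,η}(L) = (1/L) ∑_{l=1}^L 1{δ(l)=ν ∧ Y(l)=η} − θ(ν) · (1/L) ∑_{l=1}^L 1{Y(l)=η}`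
converges to `0` almost surely as `L → ∞`. -/
theorem stmt_6
    {Ω : Type*} [MeasurableSpace Ω] (μ : Measure Ω) [IsProbabilityMeasure μ]
    {Δ : Type*} [Fintype Δ] [Nonempty Δ] [MeasurableSpace Δ] [MeasurableSingletonClass Δ]
    {E : Type*} [Fintype E] [Nonempty E] [MeasurableSpace E] [MeasurableSingletonClass E]
    (θ : Δ → ℝ) (hθ0 : ∀ ν, 0 ≤ θ ν) (hθ1 : ∑ ν : Δ, θ ν = 1)
    (δ : ℕ → Ω → Δ) (Y : ℕ → Ω → E)
    (hmeasδ : ∀ l, Measurable (δ l)) (hmeasY : ∀ l, Measurable (Y l))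
    (hdist : ∀ l, 1 ≤ l → ∀ ν : Δ, μ {ω | δ l ω = ν} = ENNReal.ofReal (θ ν))
    (hindep : ∀ l : ℕ, 1 ≤ l →
      Indep (MeasurableSpace.comap (δ l) inferInstance)
        ((⨆ k ∈ Set.Ico 1 l, MeasurableSpace.comap (δ k) inferInstance) ⊔
          (⨆ k ∈ Set.Icc 1 l, MeasurableSpace.comap (Y k) inferInstance)) μ) :
    ∀ (ν : Δ) (η : E), ∀ᵐ ω ∂μ, Tendsto
      (fun L : ℕ =>
        ((1 / (L : ℝ)) * ∑ l ∈ Finset.Icc 1 L,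
            (if δ l ω = ν ∧ Y l ω = η then (1 : ℝ) else 0))
          - θ ν * ((1 / (L : ℝ)) * ∑ l ∈ Finset.Icc 1 L,
              (if Y l ω = η then (1 : ℝ) else 0)))
      atTop (nhds 0) := by
  intro ν η
  have hθν1 : θ ν ≤ 1 := by
    rw [← hθ1]
    exact Finset.single_le_sum (fun i _ => hθ0 i) (Finset.mem_univ ν)
  set X : ℕ → Ω → ℝ := fun l ω =>
    ((if δ l ω = ν then (1 : ℝ) else 0) - θ ν) * (if Y l ω = η then (1 : ℝ) else 0) with hX
  have hXmeas : ∀ l, Measurable (X l) := by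
    intro l
    exact (((measurable_of_countable (fun d : Δ => if d = ν then (1 : ℝ) else 0)).comp
      (hmeasδ l)).sub measurable_const).mul
      ((measurable_of_countable (fun e : E => if e = η then (1 : ℝ) else 0)).comp (hmeasY l))
  have hXbd : ∀ l ω, |X l ω| ≤ 1 := by
    intro l ω
    rw [hX]
    simp only
    rw [abs_mul]
    have h1 : |(if δ l ω = ν then (1 : ℝ) else 0) - θ ν| ≤ 1 := by
      rw [abs_le]; constructor <;> split_ifs <;> linarith [hθ0 ν]
    have h2 : |(if Y l ω = η then (1 : ℝ) else 0)| ≤ 1 := by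
      split_ifs <;> simp
    calc |(if δ l ω = ν then (1 : ℝ) else 0) - θ ν| * |(if Y l ω = η then (1 : ℝ) else 0)|
        ≤ 1 * 1 := mul_le_mul h1 h2 (abs_nonneg _) zero_le_one
      _ = 1 := one_mul 1
  have hprodbd : ∀ l m (ω : Ω), |X l ω * X m ω| ≤ 1 := by
    intro l m ω
    rw [abs_mul]
    calc |X l ω| * |X m ω| ≤ 1 * 1 :=
          mul_le_mul (hXbd l ω) (hXbd m ω) (abs_nonneg _) zero_le_one
      _ = 1 := one_mul 1
  have hprodint : ∀ l m, Integrable (fun ω => X l ω * X m ω) μ := by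
    intro l m
    exact Integrable.mono' (integrable_const 1)
      ((hXmeas l).mul (hXmeas m)).aestronglyMeasurable
      (ae_of_all _ fun ω => by rw [Real.norm_eq_abs]; exact hprodbd l m ω)
  -- orthogonality
  have hzero : ∀ l m : ℕ, 1 ≤ l → l < m → ∫ ω, X l ω * X m ω ∂μ = 0 := by
    intro l m hl hlm
    have hm1 : 1 ≤ m := le_trans hl hlm.le
    set f : Ω → ℝ := fun ω => if δ m ω = ν then (1 : ℝ) else 0 with hf
    set g : Ω → ℝ := fun ω => X l ω * (if Y m ω = η then (1 : ℝ) else 0) with hg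
    have hδlG : Measurable[(⨆ k ∈ Set.Ico 1 m, MeasurableSpace.comap (δ k) inferInstance) ⊔
        (⨆ k ∈ Set.Icc 1 m, MeasurableSpace.comap (Y k) inferInstance)] (δ l) := by
      apply Measurable.of_comap_le
      have hmem : l ∈ Set.Ico 1 m := Set.mem_Ico.2 ⟨hl, hlm⟩
      exact le_trans (le_biSup (fun k => MeasurableSpace.comap (δ k) inferInstance) hmem)
        le_sup_left
    have hYlG : Measurable[(⨆ k ∈ Set.Ico 1 m, MeasurableSpace.comap (δ k) inferInstance) ⊔
        (⨆ k ∈ Set.Icc 1 m, MeasurableSpace.comap (Y k) inferInstance)] (Y l) := by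
      apply Measurable.of_comap_le
      have hmem : l ∈ Set.Icc 1 m := Set.mem_Icc.2 ⟨hl, hlm.le⟩
      exact le_trans (le_biSup (fun k => MeasurableSpace.comap (Y k) inferInstance) hmem)
        le_sup_right
    have hYmG : Measurable[(⨆ k ∈ Set.Ico 1 m, MeasurableSpace.comap (δ k) inferInstance) ⊔
        (⨆ k ∈ Set.Icc 1 m, MeasurableSpace.comap (Y k) inferInstance)] (Y m) := by
      apply Measurable.of_comap_le
      have hmem : m ∈ Set.Icc 1 m := Set.mem_Icc.2 ⟨hm1, le_rfl⟩
      exact le_trans (le_biSup (fun k => MeasurableSpace.comap (Y k) inferInstance) hmem)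
        le_sup_right
    have hfm : Measurable[MeasurableSpace.comap (δ m) inferInstance] f :=
      (measurable_of_countable (fun d : Δ => if d = ν then (1 : ℝ) else 0)).comp
        (Measurable.of_comap_le le_rfl)
    have hgm : Measurable[(⨆ k ∈ Set.Ico 1 m, MeasurableSpace.comap (δ k) inferInstance) ⊔
        (⨆ k ∈ Set.Icc 1 m, MeasurableSpace.comap (Y k) inferInstance)] g := by
      apply Measurable.mul
      · exact (((measurable_of_countable (fun d : Δ => if d = ν then (1 : ℝ) else 0)).comp
          hδlG).sub measurable_const).mul
          ((measurable_of_countable (fun e : E => if e = η then (1 : ℝ) else 0)).comp hYlG)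
      · exact (measurable_of_countable (fun e : E => if e = η then (1 : ℝ) else 0)).comp hYmG
    have hIF : IndepFun f g μ := aux_indepFun (hindep m hm1) hfm hgm
    -- ambient measurability / integrability
    have hfmeas : Measurable f :=
      (measurable_of_countable (fun d : Δ => if d = ν then (1 : ℝ) else 0)).comp (hmeasδ m)
    have hgmeas : Measurable g :=
      (hXmeas l).mul
        ((measurable_of_countable (fun e : E => if e = η then (1 : ℝ) else 0)).comp (hmeasY m))
    have hgbd : ∀ ω, |g ω| ≤ 1 := by
      intro ω
      rw [hg]
      simp only
      rw [abs_mul]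
      have h2 : |(if Y m ω = η then (1 : ℝ) else 0)| ≤ 1 := by split_ifs <;> simp
      calc |X l ω| * |(if Y m ω = η then (1 : ℝ) else 0)| ≤ 1 * 1 :=
            mul_le_mul (hXbd l ω) h2 (abs_nonneg _) zero_le_one
        _ = 1 := one_mul 1
    have hgint : Integrable g μ :=
      Integrable.mono' (integrable_const 1) hgmeas.aestronglyMeasurable
        (ae_of_all _ fun ω => by rw [Real.norm_eq_abs]; exact hgbd ω)
    have hintf : ∫ ω, f ω ∂μ = θ ν := by
      have hind : f = Set.indicator (δ m ⁻¹' {ν}) (fun _ => (1 : ℝ)) := by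
        funext ω
        rw [hf]
        simp [Set.indicator_apply]
      rw [hind, integral_indicator_const (1 : ℝ) ((hmeasδ m) (measurableSet_singleton ν))]
      have : δ m ⁻¹' {ν} = {ω | δ m ω = ν} := by ext ω; simp
      rw [this, measureReal_def, hdist m hm1 ν, ENNReal.toReal_ofReal (hθ0 ν)]
      simp
    have hfg : ∫ ω, f ω * g ω ∂μ = θ ν * ∫ ω, g ω ∂μ := by
      have h := hIF.integral_mul_eq_mul_integral hfmeas.aestronglyMeasurable hgmeas.aestronglyMeasurable
      have h2 : (f * g) = fun ω => f ω * g ω := rfl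
      rw [h2, hintf] at h
      exact h
    have hpt : ∀ ω, X l ω * X m ω = f ω * g ω - θ ν * g ω := by
      intro ω
      simp only [hX, hf, hg]
      ring
    have hfgint : Integrable (fun ω => f ω * g ω) μ := by
      apply Integrable.mono' (integrable_const 1)
        (hfmeas.mul hgmeas).aestronglyMeasurable
      apply ae_of_all
      intro ω
      rw [Real.norm_eq_abs, Pi.mul_apply, abs_mul]
      have h1 : |f ω| ≤ 1 := by rw [hf]; simp only; split_ifs <;> simp
      calc |f ω| * |g ω| ≤ 1 * 1 := mul_le_mul h1 (hgbd ω) (abs_nonneg _) zero_le_one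
        _ = 1 := one_mul 1
    calc ∫ ω, X l ω * X m ω ∂μ = ∫ ω, (f ω * g ω - θ ν * g ω) ∂μ := by
          apply integral_congr_ae; exact ae_of_all _ hpt
      _ = ∫ ω, f ω * g ω ∂μ - ∫ ω, θ ν * g ω ∂μ :=
          integral_sub hfgint (hgint.const_mul (θ ν))
      _ = θ ν * ∫ ω, g ω ∂μ - θ ν * ∫ ω, g ω ∂μ := by rw [hfg, integral_const_mul]
      _ = 0 := sub_self _
  -- diagonal bound
  have hsq : ∀ l, ∫ ω, X l ω * X l ω ∂μ ≤ 1 := by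
    intro l
    calc ∫ ω, X l ω * X l ω ∂μ ≤ ∫ _, (1 : ℝ) ∂μ := by
          apply integral_mono (hprodint l l) (integrable_const 1)
          intro ω
          show X l ω * X l ω ≤ (1 : ℝ)
          nlinarith [hXbd l ω, abs_nonneg (X l ω), abs_mul_abs_self (X l ω)]
      _ = 1 := by simp
  -- second moment of partial sums
  have hSsq : ∀ n : ℕ, ∫ ω, (∑ l ∈ Finset.Icc 1 n, X l ω) ^ 2 ∂μ ≤ (n : ℝ) := by
    intro n
    have hexp : ∀ ω, (∑ l ∈ Finset.Icc 1 n, X l ω) ^ 2 =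
        ∑ l ∈ Finset.Icc 1 n, ∑ m ∈ Finset.Icc 1 n, X l ω * X m ω := by
      intro ω
      rw [sq, Finset.sum_mul_sum]
    have hint : ∫ ω, (∑ l ∈ Finset.Icc 1 n, X l ω) ^ 2 ∂μ =
        ∑ l ∈ Finset.Icc 1 n, ∑ m ∈ Finset.Icc 1 n, ∫ ω, X l ω * X m ω ∂μ := by
      rw [integral_congr_ae (ae_of_all _ hexp)]
      rw [integral_finset_sum _ fun l _ => integrable_finset_sum _ fun m _ => hprodint l m]
      exact Finset.sum_congr rfl fun l _ => integral_finset_sum _ fun m _ => hprodint l m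
    rw [hint]
    have hterm : ∀ l ∈ Finset.Icc 1 n, ∀ m ∈ Finset.Icc 1 n,
        ∫ ω, X l ω * X m ω ∂μ ≤ if l = m then 1 else 0 := by
      intro l hl m hm
      rcases lt_trichotomy l m with h | h | h
      · rw [if_neg h.ne, hzero l m (Finset.mem_Icc.1 hl).1 h]
      · subst h; rw [if_pos rfl]; exact hsq l
      · rw [if_neg (ne_of_gt h)]
        have : (fun ω => X l ω * X m ω) = fun ω => X m ω * X l ω :=
          funext fun ω => mul_comm _ _
        rw [this, hzero m l (Finset.mem_Icc.1 hm).1 h]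
    calc (∑ l ∈ Finset.Icc 1 n, ∑ m ∈ Finset.Icc 1 n, ∫ ω, X l ω * X m ω ∂μ)
        ≤ ∑ l ∈ Finset.Icc 1 n, ∑ m ∈ Finset.Icc 1 n, (if l = m then (1 : ℝ) else 0) :=
          Finset.sum_le_sum fun l hl => Finset.sum_le_sum fun m hm => hterm l hl m hm
      _ = ∑ l ∈ Finset.Icc 1 n, (1 : ℝ) := by
          apply Finset.sum_congr rfl
          intro l hl
          rw [Finset.sum_ite_eq (Finset.Icc 1 n) l (fun _ => (1 : ℝ)), if_pos hl]
      _ = (n : ℝ) := by simp [Nat.card_Icc]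
  -- the subsequence statistic
  set T : ℕ → Ω → ℝ := fun k ω => (∑ l ∈ Finset.Icc 1 (k ^ 2), X l ω) / ((k : ℝ) ^ 2) with hT
  have hTmeas : ∀ k, Measurable (T k) := fun k =>
    (Finset.measurable_sum _ fun l _ => hXmeas l).div measurable_const
  have hSbd : ∀ n : ℕ, ∀ ω, |∑ l ∈ Finset.Icc 1 n, X l ω| ≤ (n : ℝ) := by
    intro n ω
    calc |∑ l ∈ Finset.Icc 1 n, X l ω| ≤ ∑ l ∈ Finset.Icc 1 n, |X l ω| :=
          Finset.abs_sum_le_sum_abs _ _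
      _ ≤ ∑ l ∈ Finset.Icc 1 n, (1 : ℝ) := Finset.sum_le_sum fun l _ => hXbd l ω
      _ = (n : ℝ) := by simp [Nat.card_Icc]
  have hTbd : ∀ k, ∫⁻ ω, ENNReal.ofReal ((T k ω) ^ 2) ∂μ ≤ ENNReal.ofReal (1 / ((k : ℝ) ^ 2)) := by
    intro k
    rcases Nat.eq_zero_or_pos k with hk | hk
    · subst hk
      simp [hT]
    · have hkR : (0 : ℝ) < (k : ℝ) ^ 2 := by
        have : (0 : ℝ) < (k : ℝ) := by exact_mod_cast hk
        positivity
      have hcast : ((k ^ 2 : ℕ) : ℝ) = (k : ℝ) ^ 2 := by push_cast; ring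
      have hTabs : ∀ ω, |T k ω| ≤ 1 := by
        intro ω
        rw [hT]
        simp only
        rw [abs_div, abs_of_pos hkR]
        rw [div_le_one hkR]
        calc |∑ l ∈ Finset.Icc 1 (k ^ 2), X l ω| ≤ ((k ^ 2 : ℕ) : ℝ) := hSbd (k ^ 2) ω
          _ = (k : ℝ) ^ 2 := hcast
      have hTint : Integrable (fun ω => (T k ω) ^ 2) μ := by
        apply Integrable.mono' (integrable_const 1) ((hTmeas k).pow_const 2).aestronglyMeasurable
        apply ae_of_all
        intro ω
        rw [Real.norm_eq_abs, abs_pow]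
        calc |T k ω| ^ 2 ≤ 1 ^ 2 := by
              apply pow_le_pow_left₀ (abs_nonneg _) (hTabs ω)
          _ = 1 := one_pow 2
      have h1 : ∫ ω, (T k ω) ^ 2 ∂μ ≤ 1 / ((k : ℝ) ^ 2) := by
        have hptT : ∀ ω, (T k ω) ^ 2 =
            (∑ l ∈ Finset.Icc 1 (k ^ 2), X l ω) ^ 2 / (((k : ℝ) ^ 2) ^ 2) := by
          intro ω
          rw [hT]
          simp only
          rw [div_pow]
        rw [integral_congr_ae (ae_of_all _ hptT), integral_div]
        have h2 := hSsq (k ^ 2)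
        rw [hcast] at h2
        calc (∫ ω, (∑ l ∈ Finset.Icc 1 (k ^ 2), X l ω) ^ 2 ∂μ) / ((k : ℝ) ^ 2) ^ 2
            ≤ ((k : ℝ) ^ 2) / ((k : ℝ) ^ 2) ^ 2 := by gcongr
          _ = 1 / ((k : ℝ) ^ 2) := by field_simp
      rw [← ofReal_integral_eq_lintegral_ofReal hTint (ae_of_all _ fun ω => sq_nonneg _)]
      exact ENNReal.ofReal_le_ofReal h1
  have haeT := aux_ae μ T hTmeas hTbd
  filter_upwards [haeT] with ω hω
  have hkron := aux_kron (fun l => X l ω) (fun l => hXbd l ω) (by simpa [hT] using hω)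
  have hfun : ∀ L : ℕ,
      ((1 / (L : ℝ)) * ∑ l ∈ Finset.Icc 1 L,
          (if δ l ω = ν ∧ Y l ω = η then (1 : ℝ) else 0))
        - θ ν * ((1 / (L : ℝ)) * ∑ l ∈ Finset.Icc 1 L,
            (if Y l ω = η then (1 : ℝ) else 0))
      = (∑ l ∈ Finset.Icc 1 L, X l ω) / (L : ℝ) := by
    intro L
    have hsum_eq : ∑ l ∈ Finset.Icc 1 L, X l ω =
        (∑ l ∈ Finset.Icc 1 L, if δ l ω = ν ∧ Y l ω = η then (1 : ℝ) else 0)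
          - θ ν * ∑ l ∈ Finset.Icc 1 L, (if Y l ω = η then (1 : ℝ) else 0) := by
      rw [Finset.mul_sum, ← Finset.sum_sub_distrib]
      apply Finset.sum_congr rfl
      intro l _
      by_cases h1 : δ l ω = ν <;> by_cases h2 : Y l ω = η <;> simp [hX, h1, h2]
    rw [hsum_eq]
    ring
  exact hkron.congr fun L => (hfun L).symm
end

section
/- If γ > 0, the threshold sequence satisfies r(l) ≥ √(ln(2 l^{1+γ})/(2l)) for every l ≥ 1, and J_p : ℕ → ℝ is any sequence of penalties, then almost surely (1/L)·∑_{l=1}^{L} J_p(l)·1_{E(l)} → 0 as L → ∞, where E(l) := { ∃ ν ∈ Δ, |f_ν(l)| ≥ r(l) } and f_ν(l) := (1/l)·∑_{k=1}^{l} 1{δ(k)=ν} − θ(ν). (In words: a truthfully reporting load's long-run average penalty vanishes almost surely.) -/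
open MeasureTheory ProbabilityTheory Filter
open scoped Classical

section Aux

lemma bern_q_pos {p : ℝ} (hp0 : 0 ≤ p) (hp1 : p ≤ 1) (t : ℝ) :
    0 < 1 - p + p * Real.exp t := by
  rcases hp0.eq_or_lt with h | h
  · simp [← h]
  · have := mul_pos h (Real.exp_pos t)
    linarith

/-- Hoeffding's lemma for Bernoulli: the mgf of a centered Bernoulli(p) variable is
at most `exp (t^2/8)`. -/
lemma bern_hoeffding {p : ℝ} (hp0 : 0 ≤ p) (hp1 : p ≤ 1) (t : ℝ) :
    Real.exp (-(p * t)) * (1 - p + p * Real.exp t) ≤ Real.exp (t ^ 2 / 8) := by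
  set h : ℝ → ℝ := fun t => t ^ 2 / 8 + p * t - Real.log (1 - p + p * Real.exp t) with hh
  set h' : ℝ → ℝ := fun t => t / 4 + p - p * Real.exp t / (1 - p + p * Real.exp t) with hh'
  have hq := fun t => bern_q_pos hp0 hp1 t
  have hqd : ∀ t : ℝ, HasDerivAt (fun t => 1 - p + p * Real.exp t) (p * Real.exp t) t := by
    intro t
    exact ((Real.hasDerivAt_exp t).const_mul p).const_add (1 - p)
  have hd1 : ∀ t : ℝ, HasDerivAt h (h' t) t := by
    intro t
    have h1 : HasDerivAt (fun t : ℝ => t ^ 2 / 8 + p * t)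
        (t / 4 + p) t := by
      have := ((hasDerivAt_pow 2 t).div_const 8).add ((hasDerivAt_id t).const_mul p)
      exact this.congr_deriv (by norm_num; ring)
    have h2 := (hqd t).log (hq t).ne'
    have := h1.sub h2
    exact this
  have hd2 : ∀ t : ℝ, HasDerivAt h'
      (1 / 4 - p * Real.exp t * (1 - p) / (1 - p + p * Real.exp t) ^ 2) t := by
    intro t
    have h1 : HasDerivAt (fun t : ℝ => t / 4 + p) (1 / 4) t := by
      simpa using ((hasDerivAt_id t).div_const 4).add_const p
    have h2 : HasDerivAt (fun t => p * Real.exp t / (1 - p + p * Real.exp t))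
        ((p * Real.exp t * (1 - p + p * Real.exp t) - p * Real.exp t * (p * Real.exp t)) /
          (1 - p + p * Real.exp t) ^ 2) t :=
      ((Real.hasDerivAt_exp t).const_mul p).div (hqd t) (hq t).ne'
    have := h1.sub h2
    refine this.congr_deriv ?_
    have hqt := (hq t).ne'
    field_simp
    ring
  have h''_nonneg : ∀ t : ℝ,
      0 ≤ 1 / 4 - p * Real.exp t * (1 - p) / (1 - p + p * Real.exp t) ^ 2 := by
    intro t
    rw [sub_nonneg, div_le_iff₀ (pow_pos (hq t) 2)]
    nlinarith [sq_nonneg (1 - p - p * Real.exp t), Real.exp_pos t]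
  have hmono : Monotone h' := by
    refine monotone_of_deriv_nonneg (fun t => (hd2 t).differentiableAt) (fun t => ?_)
    rw [(hd2 t).deriv]; exact h''_nonneg t
  have h'0 : h' 0 = 0 := by
    simp [hh']
  have hnn : ∀ t : ℝ, 0 ≤ h t := by
    have h0 : h 0 = 0 := by simp [hh]
    intro t
    rcases le_total 0 t with ht | ht
    · have : MonotoneOn h (Set.Ici 0) := by
        refine monotoneOn_of_deriv_nonneg (convex_Ici 0)
          (fun x _ => ((hd1 x).differentiableAt).continuousAt.continuousWithinAt)
          (fun x _ => ((hd1 x).differentiableAt).differentiableWithinAt) (fun x hx => ?_)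
        rw [(hd1 x).deriv, ← h'0]
        exact hmono (le_of_lt (by simpa using hx))
      have := this (Set.self_mem_Ici) (Set.mem_Ici.2 ht) ht
      rwa [h0] at this
    · have : AntitoneOn h (Set.Iic 0) := by
        refine antitoneOn_of_deriv_nonpos (convex_Iic 0)
          (fun x _ => ((hd1 x).differentiableAt).continuousAt.continuousWithinAt)
          (fun x _ => ((hd1 x).differentiableAt).differentiableWithinAt) (fun x hx => ?_)
        rw [(hd1 x).deriv, ← h'0]
        exact hmono (le_of_lt (by simpa using hx))
      have := this (Set.mem_Iic.2 ht) (Set.self_mem_Iic) ht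
      rwa [h0] at this
  have hlog : Real.log (1 - p + p * Real.exp t) ≤ t ^ 2 / 8 + p * t := by
    have := hnn t
    simp only [hh] at this
    linarith
  have hle : (1 - p + p * Real.exp t) ≤ Real.exp (t ^ 2 / 8 + p * t) := by
    rw [← Real.exp_log (hq t)]
    exact Real.exp_le_exp.2 hlog
  calc Real.exp (-(p * t)) * (1 - p + p * Real.exp t)
      ≤ Real.exp (-(p * t)) * Real.exp (t ^ 2 / 8 + p * t) :=
        mul_le_mul_of_nonneg_left hle (Real.exp_pos _).le
    _ = Real.exp (t ^ 2 / 8) := by rw [← Real.exp_add]; ring_nf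

/-- One-sided Chernoff bound for a sum of independent variables whose mgfs satisfy
the sub-Gaussian bound `exp (u^2/8)`. -/
lemma chernoff_one_sided {Ω : Type*} [MeasurableSpace Ω] (μ : Measure Ω)
    [IsProbabilityMeasure μ]
    (Z : ℕ → Ω → ℝ) (hZm : ∀ k, Measurable (Z k)) (hZb : ∀ k ω, Z k ω ≤ 1)
    (hindep : iIndepFun Z μ)
    (l : ℕ) (r : ℝ) (hr : 0 ≤ r)
    (hmgf : ∀ k ∈ Finset.Icc 1 l, ∀ u : ℝ, mgf (Z k) μ u ≤ Real.exp (u ^ 2 / 8)) :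
    (μ {ω | (l : ℝ) * r ≤ ∑ k ∈ Finset.Icc 1 l, Z k ω}).toReal
      ≤ Real.exp (-(2 * l * r ^ 2)) := by
  set t : ℝ := 4 * r with ht_def
  have ht : 0 ≤ t := by positivity
  set Y : Ω → ℝ := fun ω => ∑ k ∈ Finset.Icc 1 l, Z k ω with hY
  have hYm : Measurable Y := Finset.measurable_sum _ (fun k _ => hZm k)
  have hYle : ∀ ω, Y ω ≤ l := by
    intro ω
    calc Y ω ≤ ∑ k ∈ Finset.Icc 1 l, (1 : ℝ) :=
          Finset.sum_le_sum (fun k _ => hZb k ω)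
      _ = l := by simp [Nat.card_Icc]
  have hint : Integrable (fun ω => Real.exp (t * Y ω)) μ := by
    refine Integrable.mono' (integrable_const (Real.exp (t * l)))
      ((hYm.const_mul t).exp.aestronglyMeasurable) (ae_of_all _ fun ω => ?_)
    rw [Real.norm_eq_abs, abs_of_pos (Real.exp_pos _)]
    exact Real.exp_le_exp.2 (mul_le_mul_of_nonneg_left (hYle ω) ht)
  have hch := measure_ge_le_exp_mul_mgf (μ := μ) (X := Y) ((l : ℝ) * r) ht hint
  have hmgfY : mgf Y μ t ≤ Real.exp ((l : ℝ) * (t ^ 2 / 8)) := by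
    have heq : Y = ∑ k ∈ Finset.Icc 1 l, Z k := by
      funext ω; simp [hY, Finset.sum_apply]
    rw [heq, hindep.mgf_sum hZm (Finset.Icc 1 l)]
    calc ∏ k ∈ Finset.Icc 1 l, mgf (Z k) μ t
        ≤ ∏ k ∈ Finset.Icc 1 l, Real.exp (t ^ 2 / 8) :=
          Finset.prod_le_prod (fun k _ => mgf_nonneg) (fun k hk => hmgf k hk t)
      _ = Real.exp (t ^ 2 / 8) ^ l := by simp [Nat.card_Icc]
      _ = Real.exp ((l : ℝ) * (t ^ 2 / 8)) := by rw [← Real.exp_nat_mul]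
  calc (μ {ω | (l : ℝ) * r ≤ Y ω}).toReal
      ≤ Real.exp (-t * ((l : ℝ) * r)) * mgf Y μ t := hch
    _ ≤ Real.exp (-t * ((l : ℝ) * r)) * Real.exp ((l : ℝ) * (t ^ 2 / 8)) :=
        mul_le_mul_of_nonneg_left hmgfY (Real.exp_pos _).le
    _ = Real.exp (-(2 * l * r ^ 2)) := by
        rw [← Real.exp_add]; congr 1; rw [ht_def]; ring

/-- Integral of `exp (u · 1{X = ν})` for `X` distributed with `P(X = ν) = p`. -/
lemma integral_exp_indicator {Ω : Type*} [MeasurableSpace Ω] (μ : Measure Ω)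
    [IsProbabilityMeasure μ] {Δ : Type*} [MeasurableSpace Δ] [MeasurableSingletonClass Δ]
    (X : Ω → Δ) (hX : Measurable X) (ν : Δ) {p : ℝ} (hp0 : 0 ≤ p)
    (hp : μ {ω | X ω = ν} = ENNReal.ofReal p) (u : ℝ) :
    ∫ ω, Real.exp (u * (if X ω = ν then (1 : ℝ) else 0)) ∂μ
      = 1 - p + p * Real.exp u := by
  have hA : MeasurableSet (X ⁻¹' {ν}) := hX (measurableSet_singleton ν)
  have hpt : ∀ ω, Real.exp (u * (if X ω = ν then (1 : ℝ) else 0))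
      = Set.indicator (X ⁻¹' {ν}) (fun _ => Real.exp u - 1) ω + 1 := by
    intro ω
    by_cases h : X ω = ν <;> simp [Set.indicator_apply, Set.mem_preimage, h]
  rw [integral_congr_ae (ae_of_all _ hpt),
    integral_add ((integrable_const _).indicator hA) (integrable_const 1),
    integral_indicator_const _ hA, integral_const]
  have hset : X ⁻¹' {ν} = {ω | X ω = ν} := rfl
  rw [hset, measureReal_def, hp, ENNReal.toReal_ofReal hp0]
  simp [smul_eq_mul]
  ring

end Aux

/-- For a truthful load with i.i.d. types `δ l ∼ θ`, if `γ > 0`, the thresholds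
satisfy `r(l) ≥ √(ln(2 l^{1+γ})/(2l))` for every `l ≥ 1`, and `J_p : ℕ → ℝ` is any penalty
sequence, then almost surely `(1/L) ∑_{l=1}^L J_p(l) · 1_{E(l)} → 0` as `L → ∞`, where
`E(l) = {∃ ν, |f_ν(l)| ≥ r(l)}` and `f_ν(l) = (1/l) ∑_{k=1}^l 1{δ(k)=ν} − θ(ν)`. -/
theorem stmt_7
    {Ω : Type*} [MeasurableSpace Ω] (μ : Measure Ω) [IsProbabilityMeasure μ]
    {Δ : Type*} [Fintype Δ] [Nonempty Δ] [MeasurableSpace Δ] [MeasurableSingletonClass Δ]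
    (θ : Δ → ℝ) (hθ0 : ∀ ν, 0 ≤ θ ν) (hθ1 : ∑ ν : Δ, θ ν = 1)
    (δ : ℕ → Ω → Δ)
    (hmeasδ : ∀ l, Measurable (δ l))
    (hdist : ∀ l, 1 ≤ l → ∀ ν : Δ, μ {ω | δ l ω = ν} = ENNReal.ofReal (θ ν))
    (hindep : iIndepFun δ μ)
    (γ : ℝ) (hγ : 0 < γ)
    (r : ℕ → ℝ)
    (hr : ∀ l : ℕ, 1 ≤ l →
      Real.sqrt (Real.log (2 * (l : ℝ) ^ (1 + γ)) / (2 * (l : ℝ))) ≤ r l)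
    (Jp : ℕ → ℝ) :
    ∀ᵐ ω ∂μ, Tendsto
      (fun L : ℕ => (1 / (L : ℝ)) * ∑ l ∈ Finset.Icc 1 L,
        (if ∃ ν : Δ, r l ≤
            |((1 / (l : ℝ)) * ∑ k ∈ Finset.Icc 1 l,
                (if δ k ω = ν then (1 : ℝ) else 0)) - θ ν|
          then Jp l else 0))
      atTop (nhds 0) := by
  have hθle1 : ∀ ν : Δ, θ ν ≤ 1 := fun ν =>
    hθ1 ▸ Finset.single_le_sum (fun i _ => hθ0 i) (Finset.mem_univ ν)
  -- Per-(l, ν) tail bound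
  have key : ∀ l : ℕ, 1 ≤ l → ∀ ν : Δ,
      μ {ω | r l ≤ |((1 / (l : ℝ)) * ∑ k ∈ Finset.Icc 1 l,
          (if δ k ω = ν then (1 : ℝ) else 0)) - θ ν|}
        ≤ ENNReal.ofReal ((l : ℝ) ^ (-(1 + γ))) := by
    intro l hl ν
    set p := θ ν with hpdef
    have hp0 := hθ0 ν
    have hp1 := hθle1 ν
    have hl0 : (0 : ℝ) < l := by exact_mod_cast hl
    have hr0 : 0 ≤ r l := le_trans (Real.sqrt_nonneg _) (hr l hl)
    set gp : Δ → ℝ := fun x => (if x = ν then (1 : ℝ) else 0) - p with hgp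
    set gn : Δ → ℝ := fun x => p - (if x = ν then (1 : ℝ) else 0) with hgn
    set Zp : ℕ → Ω → ℝ := fun k => gp ∘ δ k with hZp
    set Zn : ℕ → Ω → ℝ := fun k => gn ∘ δ k with hZn
    have hZpm : ∀ k, Measurable (Zp k) := fun k =>
      (measurable_of_countable gp).comp (hmeasδ k)
    have hZnm : ∀ k, Measurable (Zn k) := fun k =>
      (measurable_of_countable gn).comp (hmeasδ k)
    have hZpb : ∀ k ω, Zp k ω ≤ 1 := by
      intro k ω
      simp only [hZp, hgp, Function.comp_apply]
      split <;> simp <;> linarith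
    have hZnb : ∀ k ω, Zn k ω ≤ 1 := by
      intro k ω
      simp only [hZn, hgn, Function.comp_apply]
      split <;> simp <;> linarith
    have hindep_p : iIndepFun Zp μ :=
      hindep.comp _ (fun _ => measurable_of_countable gp)
    have hindep_n : iIndepFun Zn μ :=
      hindep.comp _ (fun _ => measurable_of_countable gn)
    have hmgfp : ∀ k ∈ Finset.Icc 1 l, ∀ u : ℝ, mgf (Zp k) μ u ≤ Real.exp (u ^ 2 / 8) := by
      intro k hk u
      have hk1 : 1 ≤ k := (Finset.mem_Icc.mp hk).1
      have hpt : ∀ ω, Real.exp (u * Zp k ω)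
          = Real.exp (-(p * u)) * Real.exp (u * (if δ k ω = ν then (1 : ℝ) else 0)) := by
        intro ω
        rw [← Real.exp_add]
        congr 1
        simp only [hZp, hgp, Function.comp_apply]
        ring
      rw [mgf]
      calc ∫ ω, Real.exp (u * Zp k ω) ∂μ
          = ∫ ω, Real.exp (-(p * u)) *
              Real.exp (u * (if δ k ω = ν then (1 : ℝ) else 0)) ∂μ :=
            integral_congr_ae (ae_of_all _ hpt)
        _ = Real.exp (-(p * u)) * (1 - p + p * Real.exp u) := by
            rw [integral_const_mul, integral_exp_indicator μ (δ k) (hmeasδ k) ν hp0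
              (hdist k hk1 ν) u]
        _ ≤ Real.exp (u ^ 2 / 8) := bern_hoeffding hp0 hp1 u
    have hmgfn : ∀ k ∈ Finset.Icc 1 l, ∀ u : ℝ, mgf (Zn k) μ u ≤ Real.exp (u ^ 2 / 8) := by
      intro k hk u
      have hk1 : 1 ≤ k := (Finset.mem_Icc.mp hk).1
      have hpt : ∀ ω, Real.exp (u * Zn k ω)
          = Real.exp (-(p * (-u))) *
              Real.exp ((-u) * (if δ k ω = ν then (1 : ℝ) else 0)) := by
        intro ω
        rw [← Real.exp_add]
        congr 1
        simp only [hZn, hgn, Function.comp_apply]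
        ring
      rw [mgf]
      calc ∫ ω, Real.exp (u * Zn k ω) ∂μ
          = ∫ ω, Real.exp (-(p * (-u))) *
              Real.exp ((-u) * (if δ k ω = ν then (1 : ℝ) else 0)) ∂μ :=
            integral_congr_ae (ae_of_all _ hpt)
        _ = Real.exp (-(p * (-u))) * (1 - p + p * Real.exp (-u)) := by
            rw [integral_const_mul, integral_exp_indicator μ (δ k) (hmeasδ k) ν hp0
              (hdist k hk1 ν) (-u)]
        _ ≤ Real.exp ((-u) ^ 2 / 8) := bern_hoeffding hp0 hp1 (-u)
        _ = Real.exp (u ^ 2 / 8) := by rw [neg_pow]; ring_nf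
    have hchp := chernoff_one_sided μ Zp hZpm hZpb hindep_p l (r l) hr0 hmgfp
    have hchn := chernoff_one_sided μ Zn hZnm hZnb hindep_n l (r l) hr0 hmgfn
    have hchp' : μ {ω | (l : ℝ) * r l ≤ ∑ k ∈ Finset.Icc 1 l, Zp k ω}
        ≤ ENNReal.ofReal (Real.exp (-(2 * l * (r l) ^ 2))) :=
      (ENNReal.le_ofReal_iff_toReal_le (measure_ne_top μ _) (Real.exp_pos _).le).2 hchp
    have hchn' : μ {ω | (l : ℝ) * r l ≤ ∑ k ∈ Finset.Icc 1 l, Zn k ω}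
        ≤ ENNReal.ofReal (Real.exp (-(2 * l * (r l) ^ 2))) :=
      (ENNReal.le_ofReal_iff_toReal_le (measure_ne_top μ _) (Real.exp_pos _).le).2 hchn
    -- inclusion in the union of the two one-sided events
    have hsub : {ω | r l ≤ |((1 / (l : ℝ)) * ∑ k ∈ Finset.Icc 1 l,
          (if δ k ω = ν then (1 : ℝ) else 0)) - θ ν|}
        ⊆ {ω | (l : ℝ) * r l ≤ ∑ k ∈ Finset.Icc 1 l, Zp k ω}
          ∪ {ω | (l : ℝ) * r l ≤ ∑ k ∈ Finset.Icc 1 l, Zn k ω} := by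
      intro ω hω
      simp only [Set.mem_setOf_eq] at hω
      set S : ℝ := ∑ k ∈ Finset.Icc 1 l, (if δ k ω = ν then (1 : ℝ) else 0) with hS
      have hsum_p : ∑ k ∈ Finset.Icc 1 l, Zp k ω = S - l * p := by
        simp only [hZp, hgp, Function.comp_apply, Finset.sum_sub_distrib,
          Finset.sum_const, Nat.card_Icc, hS, nsmul_eq_mul]
        push_cast
        ring
      have hsum_n : ∑ k ∈ Finset.Icc 1 l, Zn k ω = l * p - S := by
        simp only [hZn, hgn, Function.comp_apply, Finset.sum_sub_distrib,
          Finset.sum_const, Nat.card_Icc, hS, nsmul_eq_mul]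
        push_cast
        ring
      have hSinv : (l : ℝ) * ((1 / l) * S) = S := by field_simp
      rcases le_abs.mp hω with h | h
      · left
        simp only [Set.mem_setOf_eq, hsum_p]
        nlinarith [mul_le_mul_of_nonneg_left h (le_of_lt hl0)]
      · right
        simp only [Set.mem_setOf_eq, hsum_n]
        nlinarith [mul_le_mul_of_nonneg_left h (le_of_lt hl0)]
    -- the real-number estimate
    have hreal : 2 * Real.exp (-(2 * l * (r l) ^ 2)) ≤ (l : ℝ) ^ (-(1 + γ)) := by
      have hl1 : (1 : ℝ) ≤ l := by exact_mod_cast hl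
      have hpow1 : (1 : ℝ) ≤ (l : ℝ) ^ (1 + γ) := Real.one_le_rpow hl1 (by linarith)
      have hcpos : (0 : ℝ) < 2 * (l : ℝ) ^ (1 + γ) := by linarith
      have hc0 : 0 ≤ Real.log (2 * (l : ℝ) ^ (1 + γ)) :=
        Real.log_nonneg (by linarith)
      have hdiv0 : 0 ≤ Real.log (2 * (l : ℝ) ^ (1 + γ)) / (2 * (l : ℝ)) := by positivity
      have hsq : Real.log (2 * (l : ℝ) ^ (1 + γ)) / (2 * (l : ℝ)) ≤ (r l) ^ 2 := by
        have h1 := hr l hl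
        nlinarith [Real.sq_sqrt hdiv0, Real.sqrt_nonneg
          (Real.log (2 * (l : ℝ) ^ (1 + γ)) / (2 * (l : ℝ)))]
      have hexp : Real.exp (-(2 * l * (r l) ^ 2))
          ≤ (2 * (l : ℝ) ^ (1 + γ))⁻¹ := by
        rw [← Real.exp_log hcpos, ← Real.exp_neg]
        apply Real.exp_le_exp.2
        rw [neg_le_neg_iff]
        calc Real.log (2 * (l : ℝ) ^ (1 + γ))
            = 2 * l * (Real.log (2 * (l : ℝ) ^ (1 + γ)) / (2 * l)) := by
              field_simp
          _ ≤ 2 * l * (r l) ^ 2 := by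
              apply mul_le_mul_of_nonneg_left hsq (by positivity)
      calc 2 * Real.exp (-(2 * l * (r l) ^ 2))
          ≤ 2 * (2 * (l : ℝ) ^ (1 + γ))⁻¹ := by linarith
        _ = ((l : ℝ) ^ (1 + γ))⁻¹ := by
            rw [mul_inv]
            ring
        _ = (l : ℝ) ^ (-(1 + γ)) := (Real.rpow_neg (by positivity) _).symm
    calc μ {ω | r l ≤ |((1 / (l : ℝ)) * ∑ k ∈ Finset.Icc 1 l,
          (if δ k ω = ν then (1 : ℝ) else 0)) - θ ν|}
        ≤ μ ({ω | (l : ℝ) * r l ≤ ∑ k ∈ Finset.Icc 1 l, Zp k ω}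
            ∪ {ω | (l : ℝ) * r l ≤ ∑ k ∈ Finset.Icc 1 l, Zn k ω}) := measure_mono hsub
      _ ≤ μ {ω | (l : ℝ) * r l ≤ ∑ k ∈ Finset.Icc 1 l, Zp k ω}
            + μ {ω | (l : ℝ) * r l ≤ ∑ k ∈ Finset.Icc 1 l, Zn k ω} := measure_union_le _ _
      _ ≤ ENNReal.ofReal (Real.exp (-(2 * l * (r l) ^ 2)))
            + ENNReal.ofReal (Real.exp (-(2 * l * (r l) ^ 2))) := add_le_add hchp' hchn'
      _ = ENNReal.ofReal (2 * Real.exp (-(2 * l * (r l) ^ 2))) := by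
          rw [← ENNReal.ofReal_add (Real.exp_pos _).le (Real.exp_pos _).le]
          ring_nf
      _ ≤ ENNReal.ofReal ((l : ℝ) ^ (-(1 + γ))) := ENNReal.ofReal_le_ofReal hreal
  -- Borel–Cantelli
  set s : ℕ → Set Ω := fun l =>
    if l = 0 then (∅ : Set Ω)
    else {ω | ∃ ν : Δ, r l ≤ |((1 / (l : ℝ)) * ∑ k ∈ Finset.Icc 1 l,
        (if δ k ω = ν then (1 : ℝ) else 0)) - θ ν|} with hs_def
  set g : ℕ → ℝ := fun l => (Fintype.card Δ : ℝ) * (l : ℝ) ^ (-(1 + γ)) with hg_def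
  have hg0 : ∀ l, 0 ≤ g l := fun l => by
    apply mul_nonneg (Nat.cast_nonneg _) (Real.rpow_nonneg (Nat.cast_nonneg _) _)
  have hgsum : Summable g :=
    (Real.summable_nat_rpow.2 (by linarith)).mul_left _
  have hbound : ∀ l, μ (s l) ≤ ENNReal.ofReal (g l) := by
    intro l
    rcases Nat.eq_zero_or_pos l with h0 | hl
    · simp [hs_def, h0]
    · have hl1 : 1 ≤ l := hl
      simp only [hs_def, if_neg (Nat.pos_iff_ne_zero.mp hl)]
      have hunion : {ω | ∃ ν : Δ, r l ≤ |((1 / (l : ℝ)) * ∑ k ∈ Finset.Icc 1 l,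
          (if δ k ω = ν then (1 : ℝ) else 0)) - θ ν|}
          = ⋃ ν : Δ, {ω | r l ≤ |((1 / (l : ℝ)) * ∑ k ∈ Finset.Icc 1 l,
            (if δ k ω = ν then (1 : ℝ) else 0)) - θ ν|} := by
        ext ω; simp
      rw [hunion]
      calc μ (⋃ ν : Δ, _) ≤ ∑' ν : Δ, μ {ω | r l ≤ |((1 / (l : ℝ)) *
            ∑ k ∈ Finset.Icc 1 l, (if δ k ω = ν then (1 : ℝ) else 0)) - θ ν|} :=
            measure_iUnion_le _
        _ = ∑ ν : Δ, μ {ω | r l ≤ |((1 / (l : ℝ)) *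
            ∑ k ∈ Finset.Icc 1 l, (if δ k ω = ν then (1 : ℝ) else 0)) - θ ν|} :=
            tsum_fintype _
        _ ≤ ∑ ν : Δ, ENNReal.ofReal ((l : ℝ) ^ (-(1 + γ))) :=
            Finset.sum_le_sum (fun ν _ => key l hl1 ν)
        _ = (Fintype.card Δ) * ENNReal.ofReal ((l : ℝ) ^ (-(1 + γ))) := by
            rw [Finset.sum_const, nsmul_eq_mul]
            simp
        _ = ENNReal.ofReal (g l) := by
            rw [hg_def, ENNReal.ofReal_mul (Nat.cast_nonneg _)]
            simp
  have htsum : ∑' l, μ (s l) ≠ ⊤ := by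
    refine ne_of_lt (lt_of_le_of_lt (ENNReal.tsum_le_tsum hbound) ?_)
    rw [← ENNReal.ofReal_tsum_of_nonneg hg0 hgsum]
    exact ENNReal.ofReal_lt_top
  have hBC := MeasureTheory.ae_eventually_notMem htsum
  filter_upwards [hBC] with ω hω
  rw [eventually_atTop] at hω
  obtain ⟨N, hN⟩ := hω
  set M := N + 1 with hM
  set C : ℝ := ∑ l ∈ Finset.Icc 1 M,
    (if ∃ ν : Δ, r l ≤ |((1 / (l : ℝ)) * ∑ k ∈ Finset.Icc 1 l,
        (if δ k ω = ν then (1 : ℝ) else 0)) - θ ν| then Jp l else 0) with hC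
  have heq : ∀ L, M ≤ L → ∑ l ∈ Finset.Icc 1 L,
      (if ∃ ν : Δ, r l ≤ |((1 / (l : ℝ)) * ∑ k ∈ Finset.Icc 1 l,
          (if δ k ω = ν then (1 : ℝ) else 0)) - θ ν| then Jp l else 0) = C := by
    intro L hL
    rw [hC]
    refine (Finset.sum_subset (Finset.Icc_subset_Icc_right hL) ?_).symm
    intro l hl1 hl2
    have hlge : M < l := by
      simp only [Finset.mem_Icc] at hl1 hl2
      omega
    have hnot := hN l (by omega)
    rw [hs_def] at hnot
    simp only [if_neg (by omega : ¬ l = 0), Set.mem_setOf_eq] at hnot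
    exact if_neg hnot
  have hten : Tendsto (fun L : ℕ => (1 / (L : ℝ)) * C) atTop (nhds 0) := by
    have := tendsto_one_div_atTop_nhds_zero_nat.mul_const C
    simpa using this
  refine hten.congr' ?_
  rw [EventuallyEq, eventually_atTop]
  exact ⟨M, fun L hL => by rw [heq L hL]⟩
end

section
/- Suppose θ̂(ν₀) ≠ θ(ν₀) for some ν₀ ∈ Δ, the thresholds satisfy r(l) → 0, the penalties satisfy J_p(l) ≥ 0 and J_p(l)/l → ∞, and (u(l))_{l≥1} is any sequence of random variables with |u(l)| ≤ M for some constant M. Then almost surely liminf_{L→∞} (1/L)·∑_{l=1}^{L} ( u(l) − J_p(l)·1_{E(l)} ) = −∞, where E(l) := { ∃ ν ∈ Δ, |(1/l)·∑_{k=1}^{l} 1{δ̂(k)=ν} − θ̂(ν)| ≥ r(l) }. (In words: under the proposed penalty scheme, any load that misreports its type distribution in the day-ahead market while submitting i.i.d. real-time reports accrues long-run average utility −∞, almost surely, no matter how large its bounded per-day non-penalty utilities are.) -/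
open MeasureTheory ProbabilityTheory Filter
open scoped Classical

/-- Suppose a load's real-time reports `δhat l` are i.i.d. with distribution `θ`
while its day-ahead reported distribution `θhat` differs from `θ` at some `ν₀`, the thresholds
satisfy `r(l) → 0`, the penalties satisfy `J_p(l) ≥ 0` and `J_p(l)/l → ∞`, and `u(l)` is any
sequence of per-day (non-penalty) utilities uniformly bounded by `M`. Then almost surely
`liminf_{L→∞} (1/L) ∑_{l=1}^L (u(l) − J_p(l) · 1_{E(l)}) = −∞` (stated in `EReal`), where
`E(l) = {∃ ν, |(1/l) ∑_{k=1}^l 1{δhat(k)=ν} − θhat(ν)| ≥ r(l)}`. -/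
theorem stmt_10
    {Ω : Type*} [MeasurableSpace Ω] (μ : Measure Ω) [IsProbabilityMeasure μ]
    {Δ : Type*} [Fintype Δ] [Nonempty Δ] [MeasurableSpace Δ] [MeasurableSingletonClass Δ]
    (θ θhat : Δ → ℝ)
    (hθ0 : ∀ ν, 0 ≤ θ ν) (hθ1 : ∑ ν : Δ, θ ν = 1)
    (hθhat0 : ∀ ν, 0 ≤ θhat ν) (hθhat1 : ∑ ν : Δ, θhat ν = 1)
    (δhat : ℕ → Ω → Δ)
    (hmeas : ∀ l, Measurable (δhat l))
    (hdist : ∀ l, 1 ≤ l → ∀ ν : Δ, μ {ω | δhat l ω = ν} = ENNReal.ofReal (θ ν))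
    (hindep : iIndepFun δhat μ)
    (ν₀ : Δ) (hne : θhat ν₀ ≠ θ ν₀)
    (r : ℕ → ℝ) (hr : Tendsto r atTop (nhds 0))
    (Jp : ℕ → ℝ) (hJ0 : ∀ l, 0 ≤ Jp l)
    (hJ : Tendsto (fun l : ℕ => Jp l / (l : ℝ)) atTop atTop)
    (u : ℕ → Ω → ℝ) (M : ℝ) (hu : ∀ l ω, |u l ω| ≤ M) :
    ∀ᵐ ω ∂μ, Filter.liminf
      (fun L : ℕ =>
        (((1 / (L : ℝ)) * ∑ l ∈ Finset.Icc 1 L,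
          (u l ω -
            (if ∃ ν : Δ, r l ≤
                |((1 / (l : ℝ)) * ∑ k ∈ Finset.Icc 1 l,
                    (if δhat k ω = ν then (1 : ℝ) else 0)) - θhat ν|
              then Jp l else 0)) : ℝ) : EReal))
      atTop = ⊥ := by
  classical
  set f : Δ → ℝ := fun ν => if ν = ν₀ then 1 else 0 with hf
  have hfm : Measurable f := measurable_of_countable f
  -- identical distribution of the shifted sequence
  have hid : ∀ i : ℕ, IdentDistrib (δhat (i + 1)) (δhat 1) μ μ := by
    intro i
    refine ⟨(hmeas _).aemeasurable, (hmeas _).aemeasurable, ?_⟩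
    apply MeasureTheory.Measure.ext_of_singleton
    intro ν
    rw [Measure.map_apply (hmeas _) (measurableSet_singleton ν),
        Measure.map_apply (hmeas _) (measurableSet_singleton ν)]
    have h1 := hdist (i + 1) (by omega) ν
    have h2 := hdist 1 le_rfl ν
    have e1 : δhat (i + 1) ⁻¹' {ν} = {ω | δhat (i + 1) ω = ν} := rfl
    have e2 : δhat 1 ⁻¹' {ν} = {ω | δhat 1 ω = ν} := rfl
    rw [e1, e2, h1, h2]
  set Y : ℕ → Ω → ℝ := fun i ω => f (δhat (i + 1) ω) with hY
  have hYindep : Pairwise (Function.onFun (IndepFun · · μ) Y) := by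
    intro i j hij
    exact (hindep.indepFun (by omega : i + 1 ≠ j + 1)).comp hfm hfm
  have hYident : ∀ i, IdentDistrib (Y i) (Y 0) μ μ := fun i => (hid i).comp hfm
  have hYint : Integrable (Y 0) μ := by
    refine (integrable_const (1 : ℝ)).mono'
      ((hfm.comp (hmeas 1)).aestronglyMeasurable) ?_
    filter_upwards with ω
    simp only [hY, hf, Real.norm_eq_abs]
    split <;> norm_num
  have hexp : μ[Y 0] = θ ν₀ := by
    have hset : MeasurableSet {ω | δhat 1 ω = ν₀} :=
      (hmeas 1) (measurableSet_singleton ν₀)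
    have : Y 0 = Set.indicator {ω | δhat 1 ω = ν₀} (fun _ => (1 : ℝ)) := by
      ext ω
      simp [hY, hf, Set.indicator_apply]
    rw [this, integral_indicator_const (1 : ℝ) hset, measureReal_def, hdist 1 le_rfl ν₀,
      ENNReal.toReal_ofReal (hθ0 ν₀), smul_eq_mul, mul_one]
  have hlln := strong_law_ae_real Y hYint hYindep hYident
  rw [hexp] at hlln
  filter_upwards [hlln] with ω hω
  -- the empirical frequency of ν₀
  have hsum : ∀ l : ℕ,
      (∑ k ∈ Finset.Icc 1 l, (if δhat k ω = ν₀ then (1 : ℝ) else 0))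
        = ∑ i ∈ Finset.range l, Y i ω := by
    intro l
    rw [← Finset.Ico_add_one_right_eq_Icc, Finset.sum_Ico_eq_sum_range]
    have hll : l + 1 - 1 = l := Nat.succ_sub_one l
    rw [hll]
    exact Finset.sum_congr rfl fun i _ => by simp [hY, hf, Nat.add_comm 1 i]
  have hA : Tendsto (fun l : ℕ =>
      (1 / (l : ℝ)) * ∑ k ∈ Finset.Icc 1 l, (if δhat k ω = ν₀ then (1 : ℝ) else 0))
      atTop (nhds (θ ν₀)) := by
    refine hω.congr fun l => ?_
    rw [hsum l, one_div, inv_mul_eq_div]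
  -- the penalty event eventually holds
  set ε : ℝ := |θhat ν₀ - θ ν₀| with hε
  have hεpos : 0 < ε := abs_pos.2 (sub_ne_zero.2 hne)
  have hAev : ∀ᶠ l : ℕ in atTop,
      |((1 / (l : ℝ)) * ∑ k ∈ Finset.Icc 1 l,
        (if δhat k ω = ν₀ then (1 : ℝ) else 0)) - θ ν₀| < ε / 2 := by
    obtain ⟨N, hN⟩ := Metric.tendsto_atTop.1 hA (ε / 2) (by linarith)
    filter_upwards [eventually_ge_atTop N] with l hl
    simpa [Real.dist_eq] using hN l hl
  have hrev : ∀ᶠ l : ℕ in atTop, r l < ε / 2 := by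
    have := hr.eventually (eventually_abs_sub_lt 0 (by linarith : (0:ℝ) < ε / 2))
    filter_upwards [this] with l hl
    have : |r l| < ε / 2 := by simpa using hl
    exact lt_of_le_of_lt (le_abs_self _) this
  have hEev : ∀ᶠ l : ℕ in atTop,
      (∃ ν : Δ, r l ≤ |((1 / (l : ℝ)) * ∑ k ∈ Finset.Icc 1 l,
          (if δhat k ω = ν then (1 : ℝ) else 0)) - θhat ν|) := by
    filter_upwards [hAev, hrev] with l h1 h2
    refine ⟨ν₀, le_of_lt (lt_of_lt_of_le h2 ?_)⟩
    set A := (1 / (l : ℝ)) * ∑ k ∈ Finset.Icc 1 l,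
        (if δhat k ω = ν₀ then (1 : ℝ) else 0)
    have : ε ≤ |A - θhat ν₀| + |A - θ ν₀| := by
      calc ε = |(A - θ ν₀) - (A - θhat ν₀)| := by rw [hε]; ring_nf
        _ ≤ |A - θ ν₀| + |A - θhat ν₀| := abs_sub _ _
        _ = |A - θhat ν₀| + |A - θ ν₀| := add_comm _ _
    linarith [h1]
  obtain ⟨N, hN⟩ := eventually_atTop.1 hEev
  -- the penalized averages tend to -∞
  set p : ℕ → ℝ := fun l =>
    if ∃ ν : Δ, r l ≤ |((1 / (l : ℝ)) * ∑ k ∈ Finset.Icc 1 l,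
        (if δhat k ω = ν then (1 : ℝ) else 0)) - θhat ν| then Jp l else 0 with hp
  have hp0 : ∀ l, 0 ≤ p l := by
    intro l; rw [hp]; dsimp only; split
    · exact hJ0 l
    · exact le_rfl
  have hpN : ∀ l, N ≤ l → p l = Jp l := by
    intro l hl; rw [hp]; dsimp only; rw [if_pos (hN l hl)]
  set g : ℕ → ℝ := fun L => (1 / (L : ℝ)) * ∑ l ∈ Finset.Icc 1 L, (u l ω - p l) with hg
  have hkey : ∀ L : ℕ, max N 1 ≤ L → g L ≤ M - Jp L / L := by
    intro L hL
    have hL1 : 1 ≤ L := le_trans (le_max_right _ _) hL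
    have hLN : N ≤ L := le_trans (le_max_left _ _) hL
    have hLpos : (0 : ℝ) < L := by exact_mod_cast hL1
    have hsum_u : ∑ l ∈ Finset.Icc 1 L, u l ω ≤ L * M := by
      calc ∑ l ∈ Finset.Icc 1 L, u l ω ≤ ∑ l ∈ Finset.Icc 1 L, M :=
            Finset.sum_le_sum fun l _ => le_trans (le_abs_self _) (hu l ω)
        _ = (L : ℝ) * M := by
            rw [Finset.sum_const, Nat.card_Icc]
            simp [nsmul_eq_mul]
    have hsum_p : Jp L ≤ ∑ l ∈ Finset.Icc 1 L, p l := by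
      have hmem : L ∈ Finset.Icc 1 L := Finset.mem_Icc.2 ⟨hL1, le_rfl⟩
      have := Finset.single_le_sum (fun l _ => hp0 l) hmem
      rwa [hpN L hLN] at this
    have hsum_tot : ∑ l ∈ Finset.Icc 1 L, (u l ω - p l) ≤ L * M - Jp L := by
      rw [Finset.sum_sub_distrib]
      linarith
    rw [hg]
    calc (1 / (L : ℝ)) * ∑ l ∈ Finset.Icc 1 L, (u l ω - p l)
        ≤ (1 / (L : ℝ)) * ((L : ℝ) * M - Jp L) := by
          apply mul_le_mul_of_nonneg_left hsum_tot
          positivity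
      _ = M - Jp L / L := by field_simp
  have hgbot : Tendsto g atTop atBot := by
    have hlim : Tendsto (fun L : ℕ => M - Jp L / L) atTop atBot := by
      have := (tendsto_neg_atTop_atBot.comp hJ)
      simpa [sub_eq_add_neg] using tendsto_atBot_add_const_left atTop M this
    refine tendsto_atBot_mono' atTop ?_ hlim
    filter_upwards [eventually_ge_atTop (max N 1)] with L hL
    exact hkey L hL
  have htend : Tendsto (fun L : ℕ => ((g L : ℝ) : EReal)) atTop (nhds ⊥) := by
    rw [EReal.tendsto_nhds_bot_iff_real]
    intro x
    filter_upwards [hgbot.eventually (eventually_lt_atBot x)] with L hL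
    exact_mod_cast hL
  exact htend.liminf_eq
end

section
/- Fix a load i, a constant W*₋ᵢ ∈ ℝ with W*₋ᵢ ≥ W* (the optimal expected social cost when load i is absent), γ > 0, thresholds r(l) ≥ √(2·ln(2 l^{1+γ})/l), and an arbitrary penalty sequence J_p : ℕ → ℝ. Define the penalty event E_i(l) := { ∃ ν ∈ Δ, |f_{i,ν}(l)| ≥ r(l) } ∪ { ∃ (ν,η) ∈ Δ × Δ^{n−1}, |h_{i,ν,η}(l)| ≥ r(l) }, where f_{i,ν}(l) := (1/l)·∑_{k=1}^{l} 1{δ_i(k)=ν} − θ_i(ν) and h_{i,ν,η}(l) := (1/l)·∑_{k=1}^{l} 1{δ_i(k)=ν and δ_{−i}(k)=η} − θ_i(ν)·(1/l)·∑_{k=1}^{l} 1{δ_{−i}(k)=η}. Define the first-stage payment p¹ := W*₋ᵢ − W* + E[ c_i(π*_i(z, δ), δ_i) ], the second-stage settlement p²(l) := c_i(π*_i(z(l), δ(l)), δ_i(l)) − E[ c_i(π*_i(z, δ), δ_i) ] − J_p(l)·1_{E_i(l)}, and the per-day utility u(l) := p¹ + p²(l) − c_i(π*_i(z(l), δ(l)),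 δ_i(l)). Then almost surely lim_{L→∞} (1/L)·∑_{l=1}^{L} u(l) = W*₋ᵢ − W* ≥ 0. (This is part 2 of the paper's Theorem: under truthful reporting by all loads, each load's long-term average utility is nonnegative almost surely — ex post individual rationality.) -/
open MeasureTheory ProbabilityTheory Filter
open scoped Classical

lemma my_mgf_le {Ω : Type*} [MeasurableSpace Ω] {μ : Measure Ω} [IsProbabilityMeasure μ]
    {X : Ω → ℝ} (hX : Measurable X) (hb : ∀ ω, |X ω| ≤ 1)
    (h0 : ∫ ω, X ω ∂μ = 0) (t : ℝ) :
    mgf X μ t ≤ Real.exp (t ^ 2 / 2) := by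
  have hXint : Integrable X μ :=
    Integrable.mono' (integrable_const 1) hX.aestronglyMeasurable (ae_of_all _ hb)
  have hint : Integrable (fun ω => Real.exp (t * X ω)) μ := by
    refine Integrable.mono' (integrable_const (Real.exp |t|))
      ((hX.const_mul t).exp.aestronglyMeasurable) (ae_of_all _ fun ω => ?_)
    rw [Real.norm_eq_abs, Real.abs_exp]
    refine Real.exp_le_exp.2 ((le_abs_self _).trans ?_)
    rw [abs_mul]
    calc |t| * |X ω| ≤ |t| * 1 := mul_le_mul_of_nonneg_left (hb ω) (abs_nonneg t)
      _ = |t| := mul_one _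
  have hpt : ∀ ω, Real.exp (t * X ω) ≤ Real.cosh t + X ω * Real.sinh t := by
    intro ω
    have hx1 : X ω ≤ 1 := (abs_le.1 (hb ω)).2
    have hx2 : -1 ≤ X ω := (abs_le.1 (hb ω)).1
    have ha : (0:ℝ) ≤ (1 - X ω) / 2 := by linarith
    have hb' : (0:ℝ) ≤ (1 + X ω) / 2 := by linarith
    have hab : (1 - X ω) / 2 + (1 + X ω) / 2 = (1:ℝ) := by ring
    have h := convexOn_exp.2 (Set.mem_univ (-t)) (Set.mem_univ t) ha hb' hab
    simp only [smul_eq_mul] at h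
    have harg : (1 - X ω) / 2 * (-t) + (1 + X ω) / 2 * t = t * X ω := by ring
    rw [harg] at h
    calc Real.exp (t * X ω)
        ≤ (1 - X ω) / 2 * Real.exp (-t) + (1 + X ω) / 2 * Real.exp t := h
      _ = Real.cosh t + X ω * Real.sinh t := by rw [Real.cosh_eq, Real.sinh_eq]; ring
  calc mgf X μ t = ∫ ω, Real.exp (t * X ω) ∂μ := rfl
    _ ≤ ∫ ω, (Real.cosh t + X ω * Real.sinh t) ∂μ :=
        integral_mono hint ((integrable_const _).add (hXint.mul_const _)) hpt
    _ = Real.cosh t + (∫ ω, X ω ∂μ) * Real.sinh t := by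
        rw [integral_add (integrable_const _) (hXint.mul_const _), integral_const,
          integral_mul_const]
        simp
    _ = Real.cosh t := by rw [h0]; ring
    _ ≤ Real.exp (t ^ 2 / 2) := Real.cosh_le_exp_half_sq t

lemma my_chernoff {Ω : Type*} [MeasurableSpace Ω] {μ : Measure Ω} [IsProbabilityMeasure μ]
    {Y : ℕ → Ω → ℝ} (hind : iIndepFun Y μ)
    (hYmeas : ∀ k, Measurable (Y k)) (hb : ∀ k ω, |Y k ω| ≤ 1)
    {l : ℕ} (hl : 1 ≤ l) (h0 : ∀ k ∈ Finset.Icc 1 l, ∫ ω, Y k ω ∂μ = 0)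
    {t : ℝ} (ht : 0 ≤ t) :
    μ {ω | t ≤ |(1 / (l : ℝ)) * ∑ k ∈ Finset.Icc 1 l, Y k ω|}
      ≤ ENNReal.ofReal (2 * Real.exp (-(l : ℝ) * t ^ 2 / 2)) := by
  have hlpos : (0 : ℝ) < l := by exact_mod_cast hl
  set s := Finset.Icc 1 l with hs
  have hcard : s.card = l := by simp [hs]
  have hSmeas : Measurable (fun ω => ∑ k ∈ s, Y k ω) :=
    Finset.measurable_sum s fun k _ => hYmeas k
  have hSb : ∀ ω, |∑ k ∈ s, Y k ω| ≤ (l : ℝ) := fun ω => by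
    calc |∑ k ∈ s, Y k ω| ≤ ∑ k ∈ s, |Y k ω| := Finset.abs_sum_le_sum_abs _ _
      _ ≤ ∑ _k ∈ s, 1 := Finset.sum_le_sum fun k _ => hb k ω
      _ = l := by simp [hcard]
  have hint : ∀ u : ℝ, Integrable (fun ω => Real.exp (u * ∑ k ∈ s, Y k ω)) μ := by
    intro u
    refine Integrable.mono' (integrable_const (Real.exp (|u| * l)))
      ((hSmeas.const_mul u).exp.aestronglyMeasurable) (ae_of_all _ fun ω => ?_)
    rw [Real.norm_eq_abs, Real.abs_exp]
    refine Real.exp_le_exp.2 ((le_abs_self _).trans ?_)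
    rw [abs_mul]
    exact mul_le_mul_of_nonneg_left (hSb ω) (abs_nonneg u)
  have hsum_apply : ∀ ω, (∑ k ∈ s, Y k) ω = ∑ k ∈ s, Y k ω := fun ω => by
    simp [Finset.sum_apply]
  have hint' : ∀ u : ℝ, Integrable (fun ω => Real.exp (u * (∑ k ∈ s, Y k) ω)) μ := by
    intro u
    refine (hint u).congr (ae_of_all _ fun ω => ?_)
    simp only [hsum_apply]
  have hmgf : ∀ u : ℝ, mgf (∑ k ∈ s, Y k) μ u ≤ Real.exp ((l : ℝ) * u ^ 2 / 2) := by
    intro u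
    rw [hind.mgf_sum hYmeas s]
    calc ∏ k ∈ s, mgf (Y k) μ u ≤ ∏ _k ∈ s, Real.exp (u ^ 2 / 2) :=
        Finset.prod_le_prod (fun k _ => mgf_nonneg)
          (fun k hk => my_mgf_le (hYmeas k) (hb k) (h0 k hk) u)
      _ = Real.exp (u ^ 2 / 2) ^ l := by rw [Finset.prod_const, hcard]
      _ = Real.exp ((l : ℝ) * (u ^ 2 / 2)) := (Real.exp_nat_mul _ l).symm
      _ = Real.exp ((l : ℝ) * u ^ 2 / 2) := by rw [mul_div_assoc]
  have hup : (μ {ω | (l : ℝ) * t ≤ (∑ k ∈ s, Y k) ω}).toReal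
      ≤ Real.exp (-(l : ℝ) * t ^ 2 / 2) := by
    calc (μ {ω | (l : ℝ) * t ≤ (∑ k ∈ s, Y k) ω}).toReal
        ≤ Real.exp (-t * ((l : ℝ) * t)) * mgf (∑ k ∈ s, Y k) μ t :=
          measure_ge_le_exp_mul_mgf _ ht (hint' t)
      _ ≤ Real.exp (-t * ((l : ℝ) * t)) * Real.exp ((l : ℝ) * t ^ 2 / 2) :=
          mul_le_mul_of_nonneg_left (hmgf t) (Real.exp_pos _).le
      _ = Real.exp (-(l : ℝ) * t ^ 2 / 2) := by
          rw [← Real.exp_add]; exact congrArg Real.exp (by ring)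
  have hlo : (μ {ω | (∑ k ∈ s, Y k) ω ≤ -((l : ℝ) * t)}).toReal
      ≤ Real.exp (-(l : ℝ) * t ^ 2 / 2) := by
    calc (μ {ω | (∑ k ∈ s, Y k) ω ≤ -((l : ℝ) * t)}).toReal
        ≤ Real.exp (-(-t) * -((l : ℝ) * t)) * mgf (∑ k ∈ s, Y k) μ (-t) :=
          measure_le_le_exp_mul_mgf _ (neg_nonpos.mpr ht) (hint' (-t))
      _ ≤ Real.exp (-(-t) * -((l : ℝ) * t)) * Real.exp ((l : ℝ) * (-t) ^ 2 / 2) :=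
          mul_le_mul_of_nonneg_left (hmgf (-t)) (Real.exp_pos _).le
      _ = Real.exp (-(l : ℝ) * t ^ 2 / 2) := by
          rw [← Real.exp_add]; exact congrArg Real.exp (by ring)
  have hsub : {ω | t ≤ |(1 / (l : ℝ)) * ∑ k ∈ s, Y k ω|}
      ⊆ {ω | (l : ℝ) * t ≤ (∑ k ∈ s, Y k) ω} ∪ {ω | (∑ k ∈ s, Y k) ω ≤ -((l : ℝ) * t)} := by
    intro ω hω
    simp only [Set.mem_setOf_eq] at hω
    have h1 : (l : ℝ) * t ≤ |∑ k ∈ s, Y k ω| := by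
      rw [abs_mul, abs_of_pos (one_div_pos.mpr hlpos)] at hω
      have := mul_le_mul_of_nonneg_left hω hlpos.le
      calc (l : ℝ) * t ≤ (l : ℝ) * (1 / (l : ℝ) * |∑ k ∈ s, Y k ω|) := this
        _ = |∑ k ∈ s, Y k ω| := by field_simp
    rcases le_abs.mp h1 with h | h
    · exact Or.inl (by simpa [hsum_apply] using h)
    · exact Or.inr (by simp only [Set.mem_setOf_eq, hsum_apply]; linarith)
  have hA : μ {ω | (l : ℝ) * t ≤ (∑ k ∈ s, Y k) ω}
      ≤ ENNReal.ofReal (Real.exp (-(l : ℝ) * t ^ 2 / 2)) := by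
    rw [← ENNReal.ofReal_toReal (measure_ne_top μ _)]
    exact ENNReal.ofReal_le_ofReal hup
  have hB : μ {ω | (∑ k ∈ s, Y k) ω ≤ -((l : ℝ) * t)}
      ≤ ENNReal.ofReal (Real.exp (-(l : ℝ) * t ^ 2 / 2)) := by
    rw [← ENNReal.ofReal_toReal (measure_ne_top μ _)]
    exact ENNReal.ofReal_le_ofReal hlo
  calc μ {ω | t ≤ |(1 / (l : ℝ)) * ∑ k ∈ s, Y k ω|}
      ≤ μ ({ω | (l : ℝ) * t ≤ (∑ k ∈ s, Y k) ω} ∪ {ω | (∑ k ∈ s, Y k) ω ≤ -((l : ℝ) * t)}) :=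
        measure_mono hsub
    _ ≤ μ {ω | (l : ℝ) * t ≤ (∑ k ∈ s, Y k) ω} + μ {ω | (∑ k ∈ s, Y k) ω ≤ -((l : ℝ) * t)} :=
        measure_union_le _ _
    _ ≤ ENNReal.ofReal (Real.exp (-(l : ℝ) * t ^ 2 / 2))
        + ENNReal.ofReal (Real.exp (-(l : ℝ) * t ^ 2 / 2)) := add_le_add hA hB
    _ = ENNReal.ofReal (2 * Real.exp (-(l : ℝ) * t ^ 2 / 2)) := by
        rw [← ENNReal.ofReal_add (Real.exp_pos _).le (Real.exp_pos _).le]; ring_nf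


/-- part 2 of the paper's Theorem, ex post individual rationality: with all loads
reporting truthfully, fix load `i`, a constant `W*₋ᵢ ≥ W*` (the optimal expected social cost
with load `i` absent), `γ > 0`, thresholds `r(l) ≥ √(2 ln(2 l^{1+γ})/l)` and an arbitrary
penalty sequence `J_p`. With the penalty event
`E_i(l) = {∃ ν, |f_{i,ν}(l)| ≥ r(l)} ∪ {∃ (ν,η), |h_{i,ν,η}(l)| ≥ r(l)}`,
the first-stage payment `p¹ = W*₋ᵢ − W* + E[c_i(π*_i(z,δ), δ_i)]`, the second-stage settlement
`p²(l) = c_i(π*_i(z(l),δ(l)), δ_i(l)) − E[c_i(π*_i(z,δ), δ_i)] − J_p(l)·1_{E_i(l)}`, and the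
per-day utility `u(l) = p¹ + p²(l) − c_i(π*_i(z(l),δ(l)), δ_i(l))`, almost surely
`(1/L) ∑_{l=1}^L u(l) → W*₋ᵢ − W* ≥ 0`. -/
theorem stmt_12
    {Ω : Type*} [MeasurableSpace Ω] (μ : Measure Ω) [IsProbabilityMeasure μ]
    {Z : Type*} [Fintype Z] [Nonempty Z] [MeasurableSpace Z] [MeasurableSingletonClass Z]
    {Δ : Type*} [Fintype Δ] [Nonempty Δ] [MeasurableSpace Δ] [MeasurableSingletonClass Δ]
    (n : ℕ) (i : Fin n)
    (θz : Z → ℝ) (hθz0 : ∀ a, 0 ≤ θz a) (hθz1 : ∑ a : Z, θz a = 1)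
    (θ : Fin n → Δ → ℝ) (hθ0 : ∀ j ν, 0 ≤ θ j ν) (hθ1 : ∀ j, ∑ ν : Δ, θ j ν = 1)
    (zval : Z → ℝ) (d : Δ → ℝ) (cg cr : ℝ → ℝ) (c : Fin n → ℝ → Δ → ℝ)
    (z : ℕ → Ω → Z) (δ : ℕ → Ω → Fin n → Δ)
    (hmeas : ∀ l, Measurable (fun ω => (z l ω, δ l ω)))
    (hdist : ∀ l, 1 ≤ l → ∀ (a : Z) (v : Fin n → Δ),
      μ {ω | z l ω = a ∧ δ l ω = v} = ENNReal.ofReal (θz a * ∏ j, θ j (v j)))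
    (hindep : iIndepFun (fun l ω => (z l ω, δ l ω)) μ)
    (W : ℝ → (Z → (Fin n → Δ) → Fin n → ℝ) → ℝ)
    (hW : ∀ g π, W g π = ∑ a : Z, ∑ v : Fin n → Δ,
      (θz a * ∏ j, θ j (v j)) *
        (cg g + cr (zval a - g + ∑ j, (d (v j) - π a v j)) + ∑ j, c j (π a v j) (v j)))
    (gstar : ℝ) (πstar : Z → (Fin n → Δ) → Fin n → ℝ)
    (hopt : ∀ g π, W gstar πstar ≤ W g π)
    (Wstar : ℝ) (hWstar : Wstar = W gstar πstar)
    (Wmi : ℝ) (hWmi : Wstar ≤ Wmi)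
    (γ : ℝ) (hγ : 0 < γ)
    (r : ℕ → ℝ)
    (hr : ∀ l : ℕ, 1 ≤ l →
      Real.sqrt (2 * Real.log (2 * (l : ℝ) ^ (1 + γ)) / (l : ℝ)) ≤ r l)
    (Jp : ℕ → ℝ)
    -- the penalty event `E_i(l)`
    (Ei : ℕ → Ω → Prop)
    (hEi : ∀ l ω, Ei l ω ↔
      ((∃ ν : Δ, r l ≤
          |((1 / (l : ℝ)) * ∑ k ∈ Finset.Icc 1 l,
              (if δ k ω i = ν then (1 : ℝ) else 0)) - θ i ν|) ∨
        (∃ (ν : Δ) (η : {j : Fin n // j ≠ i} → Δ), r l ≤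
          |((1 / (l : ℝ)) * ∑ k ∈ Finset.Icc 1 l,
              (if δ k ω i = ν ∧ (fun j : {j : Fin n // j ≠ i} => δ k ω j.1) = η
                then (1 : ℝ) else 0))
            - θ i ν * ((1 / (l : ℝ)) * ∑ k ∈ Finset.Icc 1 l,
                (if (fun j : {j : Fin n // j ≠ i} => δ k ω j.1) = η then (1 : ℝ) else 0))|)))
    -- the expected curtailment cost `E[c_i(π*_i(z,δ), δ_i)]`
    (Eci : ℝ)
    (hEci : Eci = ∑ a : Z, ∑ v : Fin n → Δ,
      (θz a * ∏ j, θ j (v j)) * c i (πstar a v i) (v i))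
    -- the per-day utility `u(l) = p¹ + p²(l) − c_i(π*_i(z(l),δ(l)), δ_i(l))`
    (u : ℕ → Ω → ℝ)
    (hu : ∀ l ω, u l ω =
      (Wmi - Wstar + Eci)
      + (c i (πstar (z l ω) (δ l ω) i) (δ l ω i) - Eci
          - Jp l * (if Ei l ω then (1 : ℝ) else 0))
      - c i (πstar (z l ω) (δ l ω) i) (δ l ω i)) :
    (∀ᵐ ω ∂μ, Tendsto
        (fun L : ℕ => (1 / (L : ℝ)) * ∑ l ∈ Finset.Icc 1 L, u l ω)
        atTop (nhds (Wmi - Wstar)))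
      ∧ 0 ≤ Wmi - Wstar := by
  classical
  have hge : 0 ≤ Wmi - Wstar := sub_nonneg.mpr hWmi
  refine ⟨?_, hge⟩
  -- θ i is a pmf, so bounded by 1
  have hθub : ∀ ν : Δ, θ i ν ≤ 1 := by
    intro ν
    calc θ i ν ≤ ∑ x : Δ, θ i x :=
          Finset.single_le_sum (fun x _ => hθ0 i x) (Finset.mem_univ ν)
      _ = 1 := hθ1 i
  have hprodnn : ∀ v : Fin n → Δ, 0 ≤ ∏ j, θ j (v j) :=
    fun v => Finset.prod_nonneg fun j _ => hθ0 j _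
  -- expectation of a function of (z l, δ l)
  have hExpF : ∀ l, 1 ≤ l → ∀ F : Z → (Fin n → Δ) → ℝ,
      ∫ ω, F (z l ω) (δ l ω) ∂μ
        = ∑ a : Z, ∑ v : Fin n → Δ, (θz a * ∏ j, θ j (v j)) * F a v := by
    intro l hl F
    have hset : ∀ (a : Z) (v : Fin n → Δ), MeasurableSet {ω | z l ω = a ∧ δ l ω = v} := by
      intro a v
      have h1 : {ω | z l ω = a ∧ δ l ω = v} = (fun ω => (z l ω, δ l ω)) ⁻¹' {(a, v)} := by
        ext ω; simp [Prod.ext_iff]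
      rw [h1]; exact hmeas l (measurableSet_singleton _)
    have hfun : ∀ ω, F (z l ω) (δ l ω) = ∑ a : Z, ∑ v : Fin n → Δ,
        Set.indicator {ω' | z l ω' = a ∧ δ l ω' = v} (fun _ => F a v) ω := by
      intro ω
      simp only [Set.indicator_apply, Set.mem_setOf_eq]
      rw [Finset.sum_eq_single (z l ω)]
      · rw [Finset.sum_eq_single (δ l ω)]
        · simp
        · intro b _ hb
          rw [if_neg]; exact fun h => hb h.2.symm
        · intro h; exact absurd (Finset.mem_univ _) h
      · intro a _ ha
        refine Finset.sum_eq_zero fun v _ => ?_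
        rw [if_neg]; exact fun h => ha h.1.symm
      · intro h; exact absurd (Finset.mem_univ _) h
    rw [integral_congr_ae (ae_of_all _ hfun),
      integral_finset_sum _ (fun a _ =>
        integrable_finset_sum _ (fun v _ => (integrable_const (F a v)).indicator (hset a v)))]
    refine Finset.sum_congr rfl fun a _ => ?_
    rw [integral_finset_sum _ (fun v _ => (integrable_const (F a v)).indicator (hset a v))]
    refine Finset.sum_congr rfl fun v _ => ?_
    rw [integral_indicator_const _ (hset a v), measureReal_def, hdist l hl a v,
      ENNReal.toReal_ofReal (mul_nonneg (hθz0 a) (hprodnn v)), smul_eq_mul]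
  -- expectation of a function of δ l alone
  have hExpδ : ∀ l, 1 ≤ l → ∀ G : (Fin n → Δ) → ℝ,
      ∫ ω, G (δ l ω) ∂μ = ∑ v : Fin n → Δ, (∏ j, θ j (v j)) * G v := by
    intro l hl G
    rw [hExpF l hl (fun _ v => G v)]
    simp_rw [mul_assoc, ← Finset.mul_sum]
    rw [← Finset.sum_mul, hθz1, one_mul]
  -- splitting a product over Fin n at i
  have hsplit : ∀ f : Fin n → ℝ, ∏ j, f j = f i * ∏ j : {j : Fin n // j ≠ i}, f j.1 := by
    intro f
    rw [← Finset.mul_prod_erase Finset.univ f (Finset.mem_univ i)]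
    congr 1
    exact Finset.prod_subtype (Finset.univ.erase i) (fun j => by simp) f
  -- rewriting a sum over Fin n → Δ as a double sum
  have hsum : ∀ G : (Fin n → Δ) → ℝ,
      ∑ v : Fin n → Δ, (∏ j, θ j (v j)) * G v
        = ∑ x : Δ, ∑ w : {j : Fin n // j ≠ i} → Δ,
            (θ i x * ∏ j : {j : Fin n // j ≠ i}, θ j.1 (w j))
              * G ((Equiv.piSplitAt i fun _ => Δ).symm (x, w)) := by
    intro G
    calc ∑ v : Fin n → Δ, (∏ j, θ j (v j)) * G v
        = ∑ p : Δ × ({j : Fin n // j ≠ i} → Δ),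
            (θ i p.1 * ∏ j : {j : Fin n // j ≠ i}, θ j.1 (p.2 j))
              * G ((Equiv.piSplitAt i fun _ => Δ).symm p) := by
          refine Fintype.sum_equiv (Equiv.piSplitAt i fun _ => Δ) _ _ fun v => ?_
          rw [Equiv.symm_apply_apply]
          congr 1
          exact hsplit fun j => θ j (v j)
      _ = ∑ x : Δ, ∑ w : {j : Fin n // j ≠ i} → Δ,
            (θ i x * ∏ j : {j : Fin n // j ≠ i}, θ j.1 (w j))
              * G ((Equiv.piSplitAt i fun _ => Δ).symm (x, w)) := Fintype.sum_prod_type _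
  have hWsum : ∑ w : {j : Fin n // j ≠ i} → Δ, ∏ j : {j : Fin n // j ≠ i}, θ j.1 (w j) = 1 := by
    calc ∑ w : {j : Fin n // j ≠ i} → Δ, ∏ j : {j : Fin n // j ≠ i}, θ j.1 (w j)
        = ∑ w ∈ Fintype.piFinset (fun _ : {j : Fin n // j ≠ i} => Finset.univ),
            ∏ j : {j : Fin n // j ≠ i}, θ j.1 (w j) := by rw [Fintype.piFinset_univ]
      _ = ∏ j : {j : Fin n // j ≠ i}, ∑ x : Δ, θ j.1 x := (Finset.prod_univ_sum _ _).symm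
      _ = 1 := by simp [hθ1]
  have hcomp1 : ∀ (x : Δ) (w : {j : Fin n // j ≠ i} → Δ),
      ((Equiv.piSplitAt i fun _ => Δ).symm (x, w)) i = x := by
    intro x w
    exact congrArg Prod.fst ((Equiv.piSplitAt i fun _ => Δ).apply_symm_apply (x, w))
  have hcomp2 : ∀ (x : Δ) (w : {j : Fin n // j ≠ i} → Δ),
      (fun j : {j : Fin n // j ≠ i} => ((Equiv.piSplitAt i fun _ => Δ).symm (x, w)) j.1) = w := by
    intro x w
    exact congrArg Prod.snd ((Equiv.piSplitAt i fun _ => Δ).apply_symm_apply (x, w))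
  have hcore : ∀ ν : Δ, ∑ x : Δ, θ i x * ((if x = ν then (1:ℝ) else 0) - θ i ν) = 0 := by
    intro ν
    have h1 : ∑ x : Δ, θ i x * (if x = ν then (1:ℝ) else 0) = θ i ν := by
      simp [mul_ite, Finset.sum_ite_eq']
    simp_rw [mul_sub]
    rw [Finset.sum_sub_distrib, h1, ← Finset.sum_mul, hθ1, one_mul, sub_self]
  -- mean zero for the f-statistic summands
  have hfmean : ∀ (ν : Δ) (k : ℕ), 1 ≤ k →
      ∫ ω, ((if δ k ω i = ν then (1:ℝ) else 0) - θ i ν) ∂μ = 0 := by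
    intro ν k hk
    refine (hExpδ k hk (fun v => (if v i = ν then (1:ℝ) else 0) - θ i ν)).trans ?_
    rw [hsum]
    simp only [hcomp1]
    have haux : ∀ (x : Δ) (c : ℝ),
        ∑ w : {j : Fin n // j ≠ i} → Δ,
          (θ i x * ∏ j : {j : Fin n // j ≠ i}, θ j.1 (w j)) * c = θ i x * c := by
      intro x c
      rw [← Finset.sum_mul, ← Finset.mul_sum, hWsum, mul_one]
    simp_rw [haux]
    exact hcore ν
  -- mean zero for the h-statistic summands
  have hhmean : ∀ (ν : Δ) (η : {j : Fin n // j ≠ i} → Δ) (k : ℕ), 1 ≤ k →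
      ∫ ω, ((if δ k ω i = ν ∧ (fun j : {j : Fin n // j ≠ i} => δ k ω j.1) = η
              then (1:ℝ) else 0)
        - θ i ν * (if (fun j : {j : Fin n // j ≠ i} => δ k ω j.1) = η then (1:ℝ) else 0)) ∂μ
        = 0 := by
    intro ν η k hk
    refine (hExpδ k hk (fun v =>
      (if v i = ν ∧ (fun j : {j : Fin n // j ≠ i} => v j.1) = η then (1:ℝ) else 0)
        - θ i ν * (if (fun j : {j : Fin n // j ≠ i} => v j.1) = η then (1:ℝ) else 0))).trans ?_
    rw [hsum]
    simp only [hcomp1, hcomp2]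
    have key : ∀ x : Δ,
        ∑ w : {j : Fin n // j ≠ i} → Δ,
          (θ i x * ∏ j : {j : Fin n // j ≠ i}, θ j.1 (w j))
            * ((if x = ν ∧ w = η then (1:ℝ) else 0)
                - θ i ν * (if w = η then (1:ℝ) else 0))
          = (∏ j : {j : Fin n // j ≠ i}, θ j.1 (η j))
              * (θ i x * ((if x = ν then (1:ℝ) else 0) - θ i ν)) := by
      intro x
      rw [Finset.sum_eq_single η]
      · by_cases hx : x = ν <;> simp [hx] <;> try ring
      · intro b _ hb
        simp [hb]
      · intro h; exact absurd (Finset.mem_univ _) h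
    simp_rw [key]
    rw [← Finset.mul_sum, hcore ν, mul_zero]
  -- boundedness
  have hYfb : ∀ (ν : Δ) (k : ℕ) (ω : Ω),
      |(if δ k ω i = ν then (1:ℝ) else 0) - θ i ν| ≤ 1 := by
    intro ν k ω
    have h0 := hθ0 i ν; have h1 := hθub ν
    rw [abs_le]; constructor <;> split_ifs <;> linarith
  have hYhb : ∀ (ν : Δ) (η : {j : Fin n // j ≠ i} → Δ) (k : ℕ) (ω : Ω),
      |(if δ k ω i = ν ∧ (fun j : {j : Fin n // j ≠ i} => δ k ω j.1) = η then (1:ℝ) else 0)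
        - θ i ν * (if (fun j : {j : Fin n // j ≠ i} => δ k ω j.1) = η then (1:ℝ) else 0)| ≤ 1 := by
    intro ν η k ω
    have h0 := hθ0 i ν; have h1 := hθub ν
    rw [abs_le]
    by_cases hj : δ k ω i = ν ∧ (fun j : {j : Fin n // j ≠ i} => δ k ω j.1) = η
    · rw [if_pos hj, if_pos hj.2]; constructor <;> linarith
    · rw [if_neg hj]
      by_cases hm : (fun j : {j : Fin n // j ≠ i} => δ k ω j.1) = η
      · rw [if_pos hm]; constructor <;> linarith
      · rw [if_neg hm]; norm_num
  -- measurability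
  have hYfmeas : ∀ (ν : Δ) (k : ℕ),
      Measurable (fun ω => (if δ k ω i = ν then (1:ℝ) else 0) - θ i ν) := by
    intro ν k
    exact (Measurable.of_discrete
      (f := fun p : Z × (Fin n → Δ) => (if p.2 i = ν then (1:ℝ) else 0) - θ i ν)).comp (hmeas k)
  have hYhmeas : ∀ (ν : Δ) (η : {j : Fin n // j ≠ i} → Δ) (k : ℕ),
      Measurable (fun ω =>
        (if δ k ω i = ν ∧ (fun j : {j : Fin n // j ≠ i} => δ k ω j.1) = η then (1:ℝ) else 0)
          - θ i ν * (if (fun j : {j : Fin n // j ≠ i} => δ k ω j.1) = η then (1:ℝ) else 0)) := by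
    intro ν η k
    exact (Measurable.of_discrete
      (f := fun p : Z × (Fin n → Δ) =>
        (if p.2 i = ν ∧ (fun j : {j : Fin n // j ≠ i} => p.2 j.1) = η then (1:ℝ) else 0)
          - θ i ν * (if (fun j : {j : Fin n // j ≠ i} => p.2 j.1) = η then (1:ℝ) else 0))).comp
      (hmeas k)
  -- independence
  have hYfind : ∀ ν : Δ, iIndepFun
      (fun k ω => (if δ k ω i = ν then (1:ℝ) else 0) - θ i ν) μ := by
    intro ν
    exact hindep.comp
      (fun _ (p : Z × (Fin n → Δ)) => (if p.2 i = ν then (1:ℝ) else 0) - θ i ν)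
      (fun _ => Measurable.of_discrete)
  have hYhind : ∀ (ν : Δ) (η : {j : Fin n // j ≠ i} → Δ), iIndepFun
      (fun k ω =>
        (if δ k ω i = ν ∧ (fun j : {j : Fin n // j ≠ i} => δ k ω j.1) = η then (1:ℝ) else 0)
          - θ i ν * (if (fun j : {j : Fin n // j ≠ i} => δ k ω j.1) = η then (1:ℝ) else 0)) μ := by
    intro ν η
    exact hindep.comp
      (fun _ (p : Z × (Fin n → Δ)) =>
        (if p.2 i = ν ∧ (fun j : {j : Fin n // j ≠ i} => p.2 j.1) = η then (1:ℝ) else 0)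
          - θ i ν * (if (fun j : {j : Fin n // j ≠ i} => p.2 j.1) = η then (1:ℝ) else 0))
      (fun _ => Measurable.of_discrete)
  -- Chernoff bound for any admissible empirical process
  have hbound : ∀ l : ℕ, 1 ≤ l → ∀ Y : ℕ → Ω → ℝ,
      iIndepFun Y μ → (∀ k, Measurable (Y k)) →
      (∀ k ω, |Y k ω| ≤ 1) → (∀ k, 1 ≤ k → ∫ ω, Y k ω ∂μ = 0) →
      μ {ω | r l ≤ |(1 / (l : ℝ)) * ∑ k ∈ Finset.Icc 1 l, Y k ω|}
        ≤ ENNReal.ofReal (((l : ℝ) ^ (1 + γ))⁻¹) := by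
    intro l hl Y hind hm hb h0
    have hlpos : (0:ℝ) < l := by exact_mod_cast hl
    have hl1 : (1:ℝ) ≤ (l:ℝ) ^ (1 + γ) := by
      calc (1:ℝ) = (1:ℝ) ^ (1 + γ) := (Real.one_rpow _).symm
        _ ≤ (l:ℝ) ^ (1 + γ) :=
          Real.rpow_le_rpow zero_le_one (by exact_mod_cast hl) (by linarith)
    have hlog : 0 ≤ Real.log (2 * (l:ℝ) ^ (1 + γ)) := Real.log_nonneg (by linarith)
    have hrl : 0 ≤ r l := (Real.sqrt_nonneg _).trans (hr l hl)
    have hch := my_chernoff hind hm hb hl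
      (fun k hk => h0 k (Finset.mem_Icc.mp hk).1) hrl
    refine hch.trans (ENNReal.ofReal_le_ofReal ?_)
    have hsq : 2 * Real.log (2 * (l:ℝ) ^ (1 + γ)) / l ≤ r l ^ 2 := by
      have h2 := hr l hl
      calc 2 * Real.log (2 * (l:ℝ) ^ (1 + γ)) / l
          = Real.sqrt (2 * Real.log (2 * (l:ℝ) ^ (1 + γ)) / l) ^ 2 :=
            (Real.sq_sqrt (by positivity)).symm
        _ ≤ r l ^ 2 := by gcongr
    have hexp : -(l:ℝ) * r l ^ 2 / 2 ≤ -Real.log (2 * (l:ℝ) ^ (1 + γ)) := by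
      have h3 := mul_le_mul_of_nonneg_left hsq hlpos.le
      have h4 : (l:ℝ) * (2 * Real.log (2 * (l:ℝ) ^ (1 + γ)) / l)
          = 2 * Real.log (2 * (l:ℝ) ^ (1 + γ)) := by field_simp
      rw [h4] at h3
      linarith
    calc 2 * Real.exp (-(l:ℝ) * r l ^ 2 / 2)
        ≤ 2 * Real.exp (-Real.log (2 * (l:ℝ) ^ (1 + γ))) := by
          have := Real.exp_le_exp.2 hexp; linarith
      _ = 2 * (2 * (l:ℝ) ^ (1 + γ))⁻¹ := by
          rw [Real.exp_neg, Real.exp_log (by positivity)]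
      _ = ((l:ℝ) ^ (1 + γ))⁻¹ := by
          rw [mul_inv]
          have : (l:ℝ) ^ (1 + γ) ≠ 0 := by positivity
          field_simp
  -- event inclusion
  have hEsub : ∀ l : ℕ, 1 ≤ l → {ω | Ei l ω} ⊆
      (⋃ ν : Δ, {ω | r l ≤ |(1 / (l : ℝ)) * ∑ k ∈ Finset.Icc 1 l,
          ((if δ k ω i = ν then (1:ℝ) else 0) - θ i ν)|})
      ∪ ⋃ ν : Δ, ⋃ η : {j : Fin n // j ≠ i} → Δ,
          {ω | r l ≤ |(1 / (l : ℝ)) * ∑ k ∈ Finset.Icc 1 l,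
            ((if δ k ω i = ν ∧ (fun j : {j : Fin n // j ≠ i} => δ k ω j.1) = η
                then (1:ℝ) else 0)
              - θ i ν * (if (fun j : {j : Fin n // j ≠ i} => δ k ω j.1) = η
                  then (1:ℝ) else 0))|} := by
    intro l hl ω hω
    have hlpos : (0:ℝ) < l := by exact_mod_cast hl
    rcases (hEi l ω).1 hω with ⟨ν, hν⟩ | ⟨ν, η, hνη⟩
    · left
      refine Set.mem_iUnion.2 ⟨ν, ?_⟩
      simp only [Set.mem_setOf_eq]
      have heq : (1 / (l : ℝ)) * ∑ k ∈ Finset.Icc 1 l,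
            ((if δ k ω i = ν then (1:ℝ) else 0) - θ i ν)
          = ((1 / (l : ℝ)) * ∑ k ∈ Finset.Icc 1 l,
              (if δ k ω i = ν then (1:ℝ) else 0)) - θ i ν := by
        rw [Finset.sum_sub_distrib, Finset.sum_const, Nat.card_Icc, mul_sub]
        congr 1
        simp only [add_tsub_cancel_right, nsmul_eq_mul]
        field_simp
      rw [heq]; exact hν
    · right
      refine Set.mem_iUnion.2 ⟨ν, Set.mem_iUnion.2 ⟨η, ?_⟩⟩
      simp only [Set.mem_setOf_eq]
      have heq : (1 / (l : ℝ)) * ∑ k ∈ Finset.Icc 1 l,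
            ((if δ k ω i = ν ∧ (fun j : {j : Fin n // j ≠ i} => δ k ω j.1) = η
                then (1:ℝ) else 0)
              - θ i ν * (if (fun j : {j : Fin n // j ≠ i} => δ k ω j.1) = η
                  then (1:ℝ) else 0))
          = ((1 / (l : ℝ)) * ∑ k ∈ Finset.Icc 1 l,
              (if δ k ω i = ν ∧ (fun j : {j : Fin n // j ≠ i} => δ k ω j.1) = η
                then (1:ℝ) else 0))
            - θ i ν * ((1 / (l : ℝ)) * ∑ k ∈ Finset.Icc 1 l,
                (if (fun j : {j : Fin n // j ≠ i} => δ k ω j.1) = η then (1:ℝ) else 0)) := by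
        rw [Finset.sum_sub_distrib, ← Finset.mul_sum]
        ring
      rw [heq]; exact hνη
  -- union bound
  have hK : ∀ l : ℕ, 1 ≤ l → μ {ω | Ei l ω}
      ≤ ((Fintype.card Δ + Fintype.card Δ * Fintype.card ({j : Fin n // j ≠ i} → Δ) : ℕ) : ENNReal)
        * ENNReal.ofReal (((l : ℝ) ^ (1 + γ))⁻¹) := by
    intro l hl
    refine (measure_mono (hEsub l hl)).trans ?_
    refine (measure_union_le _ _).trans ?_
    have hA : μ (⋃ ν : Δ, {ω | r l ≤ |(1 / (l : ℝ)) * ∑ k ∈ Finset.Icc 1 l,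
          ((if δ k ω i = ν then (1:ℝ) else 0) - θ i ν)|})
        ≤ (Fintype.card Δ : ENNReal) * ENNReal.ofReal (((l : ℝ) ^ (1 + γ))⁻¹) := by
      refine (measure_iUnion_le _).trans ?_
      rw [tsum_fintype]
      calc ∑ ν : Δ, μ {ω | r l ≤ |(1 / (l : ℝ)) * ∑ k ∈ Finset.Icc 1 l,
              ((if δ k ω i = ν then (1:ℝ) else 0) - θ i ν)|}
          ≤ ∑ _ν : Δ, ENNReal.ofReal (((l : ℝ) ^ (1 + γ))⁻¹) :=
            Finset.sum_le_sum fun ν _ => hbound l hl _ (hYfind ν) (hYfmeas ν)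
              (hYfb ν) (fun k hk => hfmean ν k hk)
        _ = (Fintype.card Δ : ENNReal) * ENNReal.ofReal (((l : ℝ) ^ (1 + γ))⁻¹) := by
            rw [Finset.sum_const, Finset.card_univ, nsmul_eq_mul]
    have hB : μ (⋃ ν : Δ, ⋃ η : {j : Fin n // j ≠ i} → Δ,
          {ω | r l ≤ |(1 / (l : ℝ)) * ∑ k ∈ Finset.Icc 1 l,
            ((if δ k ω i = ν ∧ (fun j : {j : Fin n // j ≠ i} => δ k ω j.1) = η
                then (1:ℝ) else 0)
              - θ i ν * (if (fun j : {j : Fin n // j ≠ i} => δ k ω j.1) = η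
                  then (1:ℝ) else 0))|})
        ≤ ((Fintype.card Δ * Fintype.card ({j : Fin n // j ≠ i} → Δ) : ℕ) : ENNReal)
          * ENNReal.ofReal (((l : ℝ) ^ (1 + γ))⁻¹) := by
      refine (measure_iUnion_le _).trans ?_
      rw [tsum_fintype]
      have hinner : ∀ ν : Δ, μ (⋃ η : {j : Fin n // j ≠ i} → Δ,
            {ω | r l ≤ |(1 / (l : ℝ)) * ∑ k ∈ Finset.Icc 1 l,
              ((if δ k ω i = ν ∧ (fun j : {j : Fin n // j ≠ i} => δ k ω j.1) = η
                  then (1:ℝ) else 0)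
                - θ i ν * (if (fun j : {j : Fin n // j ≠ i} => δ k ω j.1) = η
                    then (1:ℝ) else 0))|})
          ≤ (Fintype.card ({j : Fin n // j ≠ i} → Δ) : ENNReal)
            * ENNReal.ofReal (((l : ℝ) ^ (1 + γ))⁻¹) := by
        intro ν
        refine (measure_iUnion_le _).trans ?_
        rw [tsum_fintype]
        calc ∑ η : {j : Fin n // j ≠ i} → Δ, μ {ω | r l ≤ |(1 / (l : ℝ)) * ∑ k ∈ Finset.Icc 1 l,
                ((if δ k ω i = ν ∧ (fun j : {j : Fin n // j ≠ i} => δ k ω j.1) = η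
                    then (1:ℝ) else 0)
                  - θ i ν * (if (fun j : {j : Fin n // j ≠ i} => δ k ω j.1) = η
                      then (1:ℝ) else 0))|}
            ≤ ∑ _η : {j : Fin n // j ≠ i} → Δ, ENNReal.ofReal (((l : ℝ) ^ (1 + γ))⁻¹) :=
              Finset.sum_le_sum fun η _ => hbound l hl _ (hYhind ν η) (hYhmeas ν η)
                (hYhb ν η) (fun k hk => hhmean ν η k hk)
          _ = (Fintype.card ({j : Fin n // j ≠ i} → Δ) : ENNReal)
              * ENNReal.ofReal (((l : ℝ) ^ (1 + γ))⁻¹) := by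
              rw [Finset.sum_const, Finset.card_univ, nsmul_eq_mul]
      calc ∑ ν : Δ, μ (⋃ η : {j : Fin n // j ≠ i} → Δ, _)
          ≤ ∑ _ν : Δ, (Fintype.card ({j : Fin n // j ≠ i} → Δ) : ENNReal)
              * ENNReal.ofReal (((l : ℝ) ^ (1 + γ))⁻¹) :=
            Finset.sum_le_sum fun ν _ => hinner ν
        _ = ((Fintype.card Δ * Fintype.card ({j : Fin n // j ≠ i} → Δ) : ℕ) : ENNReal)
            * ENNReal.ofReal (((l : ℝ) ^ (1 + γ))⁻¹) := by
            rw [Finset.sum_const, Finset.card_univ, nsmul_eq_mul]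
            push_cast
            ring
    refine (add_le_add hA hB).trans_eq ?_
    push_cast
    ring
  -- Borel–Cantelli
  set S : ℕ → Set Ω := fun l => if l = 0 then ∅ else {ω | Ei l ω} with hS
  have hSm : ∀ l, μ (S l)
      ≤ ((Fintype.card Δ + Fintype.card Δ * Fintype.card ({j : Fin n // j ≠ i} → Δ) : ℕ) : ENNReal)
        * ENNReal.ofReal (((l : ℝ) ^ (1 + γ))⁻¹) := by
    intro l
    by_cases h0 : l = 0
    · simp [hS, h0]
    · have : S l = {ω | Ei l ω} := by simp [hS, h0]
      rw [this]
      exact hK l (Nat.one_le_iff_ne_zero.2 h0)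
  have hsummable : Summable (fun l : ℕ => ((l : ℝ) ^ (1 + γ))⁻¹) :=
    Real.summable_nat_rpow_inv.2 (by linarith)
  have htsum : (∑' l, μ (S l)) ≠ ⊤ := by
    have h1 : (∑' l, μ (S l))
        ≤ ∑' l : ℕ, ((Fintype.card Δ + Fintype.card Δ * Fintype.card ({j : Fin n // j ≠ i} → Δ)
            : ℕ) : ENNReal) * ENNReal.ofReal (((l : ℝ) ^ (1 + γ))⁻¹) :=
      ENNReal.tsum_le_tsum hSm
    have h2 : ∑' l : ℕ, ((Fintype.card Δ + Fintype.card Δ * Fintype.card ({j : Fin n // j ≠ i} → Δ)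
          : ℕ) : ENNReal) * ENNReal.ofReal (((l : ℝ) ^ (1 + γ))⁻¹)
        = ((Fintype.card Δ + Fintype.card Δ * Fintype.card ({j : Fin n // j ≠ i} → Δ)
            : ℕ) : ENNReal) * ∑' l : ℕ, ENNReal.ofReal (((l : ℝ) ^ (1 + γ))⁻¹) :=
      ENNReal.tsum_mul_left
    have h3 : ∑' l : ℕ, ENNReal.ofReal (((l : ℝ) ^ (1 + γ))⁻¹)
        = ENNReal.ofReal (∑' l : ℕ, ((l : ℝ) ^ (1 + γ))⁻¹) :=
      (ENNReal.ofReal_tsum_of_nonneg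
        (fun l => inv_nonneg.2 (Real.rpow_nonneg (Nat.cast_nonneg l) _)) hsummable).symm
    refine ne_top_of_le_ne_top ?_ h1
    rw [h2, h3]
    exact ENNReal.mul_ne_top (ENNReal.natCast_ne_top _) ENNReal.ofReal_ne_top
  have hBC := MeasureTheory.ae_eventually_notMem htsum
  -- conclusion
  filter_upwards [hBC] with ω hω
  obtain ⟨N, hN⟩ := eventually_atTop.mp hω
  set M := max N 1 with hM
  set C := ∑ l ∈ Finset.Icc 1 M, Jp l * (if Ei l ω then (1:ℝ) else 0) with hC
  have hnot : ∀ l, M < l → ¬ Ei l ω := by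
    intro l hMl
    have h1 : N ≤ l := le_trans (le_max_left _ _) hMl.le
    have h2 := hN l h1
    have hl0 : l ≠ 0 := by omega
    simpa [hS, hl0] using h2
  have hval : ∀ L, M ≤ L →
      (1 / (L : ℝ)) * ∑ l ∈ Finset.Icc 1 L, u l ω = (Wmi - Wstar) - C * (1 / (L : ℝ)) := by
    intro L hL
    have hL1 : 1 ≤ L := le_trans (le_max_right _ _) hL
    have hLpos : (0:ℝ) < L := by exact_mod_cast hL1
    have hu' : ∀ l, u l ω = (Wmi - Wstar) - Jp l * (if Ei l ω then (1:ℝ) else 0) := by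
      intro l; rw [hu]; ring
    have hCsum : ∑ l ∈ Finset.Icc 1 L, Jp l * (if Ei l ω then (1:ℝ) else 0) = C := by
      rw [hC]
      refine (Finset.sum_subset (Finset.Icc_subset_Icc_right hL) ?_).symm
      intro x hx hnx
      have hx1 : 1 ≤ x := (Finset.mem_Icc.mp hx).1
      have hMx : M < x := by
        rcases Finset.mem_Icc.mp hx with ⟨_, _⟩
        by_contra hcon
        exact hnx (Finset.mem_Icc.mpr ⟨hx1, by omega⟩)
      simp [hnot x hMx]
    have hsum2 : ∑ l ∈ Finset.Icc 1 L, u l ω = (L : ℝ) * (Wmi - Wstar) - C := by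
      calc ∑ l ∈ Finset.Icc 1 L, u l ω
          = ∑ l ∈ Finset.Icc 1 L,
              ((Wmi - Wstar) - Jp l * (if Ei l ω then (1:ℝ) else 0)) :=
            Finset.sum_congr rfl fun l _ => hu' l
        _ = (Finset.Icc 1 L).card • (Wmi - Wstar)
            - ∑ l ∈ Finset.Icc 1 L, Jp l * (if Ei l ω then (1:ℝ) else 0) := by
            rw [Finset.sum_sub_distrib, Finset.sum_const]
        _ = (L : ℝ) * (Wmi - Wstar) - C := by
            rw [hCsum, Nat.card_Icc]
            simp [nsmul_eq_mul]
    rw [hsum2]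
    field_simp
  have htend : Tendsto (fun L : ℕ => (Wmi - Wstar) - C * (1 / (L : ℝ)))
      atTop (nhds (Wmi - Wstar)) := by
    have h1 := tendsto_one_div_atTop_nhds_zero_nat (𝕜 := ℝ)
    have h2 := h1.const_mul C
    have h3 := (tendsto_const_nhds (x := Wmi - Wstar) (f := atTop (α := ℕ))).sub h2
    simpa using h3
  exact Tendsto.congr' (eventually_atTop.2 ⟨M, fun L hL => (hval L hL).symm⟩) htend
end
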